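/- arXiv:1012.2488 — 13 statements merged into one kernel-verified Lean document; each statement's English description precedes it below -/
import Mathlib

section
/- For a semigroup X the following conditions are equivalent: (1) X is linear, i.e. x·y ∈ {x,y} for all x,y ∈ X; (2) the semigroup υ(X) of upfamilies is a band; (3) the semigroup φ(X) of filters is a band; (4) the semigroup λ(X) of maximal linked upfamilies is a band. -/
open Set

/-- An upfamily on `X`: a collection of nonempty subsets of `X` closed under taking supersets. -/
def IsUpfamily {X : Type*} (𝒜 : Set (Set X)) : Prop :=
  (∀ A ∈ 𝒜, A.Nonempty) ∧ ∀ A ∈ 𝒜, ∀ B : Set X, A ⊆ B → B ∈ 𝒜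

/-- The product of two upfamilies on a semigroup `(X, *)`:
`𝒜 ∗ ℬ = {C ⊆ X : ∃ A ∈ 𝒜, ∃ (B_x)_{x ∈ A} in ℬ, ⋃_{x ∈ A} x·B_x ⊆ C}`. -/
def upMul {X : Type*} [Mul X] (𝒜 ℬ : Set (Set X)) : Set (Set X) :=
  {C | ∃ A ∈ 𝒜, ∃ Bf : X → Set X, (∀ x ∈ A, Bf x ∈ ℬ) ∧
    (⋃ x ∈ A, (fun b => x * b) '' Bf x) ⊆ C}

/-- A filter on `X`: an upfamily closed under binary intersections. -/
def IsFilterUp {X : Type*} (𝒜 : Set (Set X)) : Prop :=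
  IsUpfamily 𝒜 ∧ ∀ A ∈ 𝒜, ∀ B ∈ 𝒜, A ∩ B ∈ 𝒜

/-- A linked upfamily: any two of its members intersect. -/
def IsLinkedUp {X : Type*} (𝒜 : Set (Set X)) : Prop :=
  IsUpfamily 𝒜 ∧ ∀ A ∈ 𝒜, ∀ B ∈ 𝒜, (A ∩ B).Nonempty

/-- A maximal linked upfamily: it equals every linked upfamily containing it. -/
def IsMaxLinkedUp {X : Type*} (𝒜 : Set (Set X)) : Prop :=
  IsLinkedUp 𝒜 ∧ ∀ ℬ : Set (Set X), IsLinkedUp ℬ → 𝒜 ⊆ ℬ → 𝒜 = ℬ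

/-- The principal ultrafilter at a point is maximal linked. -/
lemma ultra_maxLinked {X : Type*} (x : X) :
    IsMaxLinkedUp {C : Set X | x ∈ C} := by
  refine ⟨⟨⟨fun A hA => ⟨x, hA⟩, fun A hA B hAB => hAB hA⟩,
    fun A hA B hB => ⟨x, hA, hB⟩⟩, fun ℬ hℬ hsub => ?_⟩
  apply Set.Subset.antisymm hsub
  intro B hB
  obtain ⟨w, hw1, hw2⟩ := hℬ.2 B hB {x} (hsub rfl)
  rcases hw2 with rfl
  exact hw1

/-- Idempotency from maximal-linked band. -/
lemma idem_of_maxBand {X : Type*} [Semigroup X]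
    (h : ∀ 𝒜 : Set (Set X), IsMaxLinkedUp 𝒜 → upMul 𝒜 𝒜 = 𝒜) (x : X) : x * x = x := by
  have h1 := h _ (ultra_maxLinked x)
  have hx : ({x} : Set X) ∈ upMul {C : Set X | x ∈ C} {C : Set X | x ∈ C} := by
    rw [h1]; exact rfl
  obtain ⟨A, hA, Bf, hBf, hsub⟩ := hx
  have : x * x ∈ ({x} : Set X) :=
    hsub (Set.mem_biUnion hA ⟨x, hBf x hA, rfl⟩)
  exact this

/-- The triangle family on three points is maximal linked. -/
lemma triangle_maxLinked {X : Type*} (x y z : X) :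
    IsMaxLinkedUp {C : Set X | (x ∈ C ∧ y ∈ C) ∨ (x ∈ C ∧ z ∈ C) ∨ (y ∈ C ∧ z ∈ C)} := by
  set Δ := {C : Set X | (x ∈ C ∧ y ∈ C) ∨ (x ∈ C ∧ z ∈ C) ∨ (y ∈ C ∧ z ∈ C)} with hΔ
  have hup : IsUpfamily Δ := by
    constructor
    · rintro A (⟨h1, _⟩ | ⟨h1, _⟩ | ⟨h1, _⟩) <;> exact ⟨_, h1⟩
    · rintro A (⟨h1, h2⟩ | ⟨h1, h2⟩ | ⟨h1, h2⟩) B hAB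
      · exact Or.inl ⟨hAB h1, hAB h2⟩
      · exact Or.inr (Or.inl ⟨hAB h1, hAB h2⟩)
      · exact Or.inr (Or.inr ⟨hAB h1, hAB h2⟩)
  have hlink : IsLinkedUp Δ := by
    refine ⟨hup, ?_⟩
    rintro A (⟨h1, h2⟩ | ⟨h1, h2⟩ | ⟨h1, h2⟩) B (⟨g1, g2⟩ | ⟨g1, g2⟩ | ⟨g1, g2⟩)
    · exact ⟨x, h1, g1⟩
    · exact ⟨x, h1, g1⟩
    · exact ⟨y, h2, g1⟩
    · exact ⟨x, h1, g1⟩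
    · exact ⟨x, h1, g1⟩
    · exact ⟨z, h2, g2⟩
    · exact ⟨y, h1, g2⟩
    · exact ⟨z, h2, g2⟩
    · exact ⟨y, h1, g1⟩
  refine ⟨hlink, fun ℬ hℬ hsub => Set.Subset.antisymm hsub ?_⟩
  intro B hB
  have hxy : ({x, y} : Set X) ∈ ℬ := hsub (Or.inl ⟨Or.inl rfl, Or.inr rfl⟩)
  have hxz : ({x, z} : Set X) ∈ ℬ := hsub (Or.inr (Or.inl ⟨Or.inl rfl, Or.inr rfl⟩))
  have hyz : ({y, z} : Set X) ∈ ℬ := hsub (Or.inr (Or.inr ⟨Or.inl rfl, Or.inr rfl⟩))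
  obtain ⟨a, haB, ha⟩ := hℬ.2 B hB _ hxy
  rcases ha with rfl | rfl
  · obtain ⟨b, hbB, hb⟩ := hℬ.2 B hB _ hyz
    rcases hb with rfl | rfl
    · exact Or.inl ⟨haB, hbB⟩
    · exact Or.inr (Or.inl ⟨haB, hbB⟩)
  · obtain ⟨b, hbB, hb⟩ := hℬ.2 B hB _ hxz
    rcases hb with rfl | rfl
    · exact Or.inl ⟨hbB, haB⟩
    · exact Or.inr (Or.inr ⟨haB, hbB⟩)

/-- For a semigroup `X` TFAE: (1) `X` is linear; (2) `υ(X)` is a band;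
(3) `φ(X)` is a band; (4) `λ(X)` is a band. -/
theorem stmt0 (X : Type*) [Semigroup X] :
    List.TFAE [
      ∀ x y : X, x * y = x ∨ x * y = y,
      ∀ 𝒜 : Set (Set X), IsUpfamily 𝒜 → upMul 𝒜 𝒜 = 𝒜,
      ∀ 𝒜 : Set (Set X), IsFilterUp 𝒜 → upMul 𝒜 𝒜 = 𝒜,
      ∀ 𝒜 : Set (Set X), IsMaxLinkedUp 𝒜 → upMul 𝒜 𝒜 = 𝒜] := by
  tfae_have 1 → 2 := by
    intro hlin 𝒜 h𝒜
    ext C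
    constructor
    · rintro ⟨A, hA, Bf, hBf, hsub⟩
      by_cases h : ∃ a ∈ A, ∀ b ∈ Bf a, a * b ≠ a
      · obtain ⟨a, haA, ha⟩ := h
        refine h𝒜.2 _ (hBf a haA) C ?_
        intro b hb
        have hmem : a * b ∈ C := hsub (Set.mem_biUnion haA ⟨b, hb, rfl⟩)
        rcases hlin a b with he | he
        · exact absurd he (ha b hb)
        · rwa [he] at hmem
      · push_neg at h
        refine h𝒜.2 _ hA C ?_
        intro a haA
        obtain ⟨b, hb, he⟩ := h a haA
        have hmem : a * b ∈ C := hsub (Set.mem_biUnion haA ⟨b, hb, rfl⟩)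
        rwa [he] at hmem
    · intro hC
      refine ⟨C, hC, fun _ => C, fun _ _ => hC, ?_⟩
      rintro c hc
      simp only [Set.mem_iUnion, Set.mem_image] at hc
      obtain ⟨a, haC, b, hbC, rfl⟩ := hc
      rcases hlin a b with he | he <;> rw [he] <;> assumption
  tfae_have 2 → 3 := fun h 𝒜 h𝒜 => h 𝒜 h𝒜.1
  tfae_have 2 → 4 := fun h 𝒜 h𝒜 => h 𝒜 h𝒜.1.1
  tfae_have 3 → 1 := by
    intro h x y
    set F := {C : Set X | x ∈ C ∧ y ∈ C} with hF
    have hFfil : IsFilterUp F := by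
      refine ⟨⟨fun A hA => ⟨x, hA.1⟩, fun A hA B hAB => ⟨hAB hA.1, hAB hA.2⟩⟩, ?_⟩
      rintro A ⟨hA1, hA2⟩ B ⟨hB1, hB2⟩
      exact ⟨⟨hA1, hB1⟩, hA2, hB2⟩
    have hxy : ({x, y} : Set X) ∈ upMul F F := by
      rw [h F hFfil]; exact ⟨Or.inl rfl, Or.inr rfl⟩
    obtain ⟨A, hA, Bf, hBf, hsub⟩ := hxy
    have : x * y ∈ ({x, y} : Set X) :=
      hsub (Set.mem_biUnion hA.1 ⟨y, (hBf x hA.1).2, rfl⟩)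
    simpa using this
  tfae_have 4 → 1 := by
    intro h x y
    by_contra hc
    push_neg at hc
    obtain ⟨hc1, hc2⟩ := hc
    have hxx : x * x = x := idem_of_maxBand h x
    have hyy : y * y = y := idem_of_maxBand h y
    set z := x * y with hz
    have hzz : z * z = z := idem_of_maxBand h z
    have hxz : x * z = z := by rw [hz, ← mul_assoc, hxx]
    have hzy : z * y = z := by rw [hz, mul_assoc, hyy]
    set Δ := {C : Set X | (x ∈ C ∧ y ∈ C) ∨ (x ∈ C ∧ z ∈ C) ∨ (y ∈ C ∧ z ∈ C)} with hΔ
    have hΔeq := h Δ (triangle_maxLinked x y z)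
    have hxy : ({x, y} : Set X) ∈ upMul Δ Δ := by
      rw [hΔeq]; exact Or.inl ⟨Or.inl rfl, Or.inr rfl⟩
    obtain ⟨A, hA, Bf, hBf, hsub⟩ := hxy
    have key : ∀ a ∈ A, ∀ b ∈ Bf a, a * b ∈ ({x, y} : Set X) := by
      intro a ha b hb
      exact hsub (Set.mem_biUnion ha ⟨b, hb, rfl⟩)
    have hznot : z ∉ ({x, y} : Set X) := by
      simp only [Set.mem_insert_iff, Set.mem_singleton_iff]
      tauto
    rcases hA with ⟨hxA, hyA⟩ | ⟨hxA, hzA⟩ | ⟨hyA, hzA⟩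
    · -- x ∈ A; Bf x contains y or z
      rcases hBf x hxA with ⟨_, hy⟩ | ⟨_, hzB⟩ | ⟨hy, _⟩
      · exact hznot (hz ▸ key x hxA y hy)
      · exact hznot (hxz ▸ key x hxA z hzB)
      · exact hznot (hz ▸ key x hxA y hy)
    · -- z ∈ A; Bf z contains y or z
      rcases hBf z hzA with ⟨_, hy⟩ | ⟨_, hzB⟩ | ⟨hy, _⟩
      · exact hznot (hzy ▸ key z hzA y hy)
      · exact hznot (hzz ▸ key z hzA z hzB)
      · exact hznot (hzy ▸ key z hzA y hy)
    · rcases hBf z hzA with ⟨_, hy⟩ | ⟨_, hzB⟩ | ⟨hy, _⟩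
      · exact hznot (hzy ▸ key z hzA y hy)
      · exact hznot (hzz ▸ key z hzA z hzB)
      · exact hznot (hzy ▸ key z hzA y hy)
  tfae_finish
end

section
/- For a band X the following conditions are equivalent: (1) X is linear; (2) each element of φ(X) is regular in υ(X); (3) each element of λ(X) is regular in υ(X). -/
open Set

section helpers
variable {X : Type*} [Semigroup X]

lemma mem_upMul_intro {𝒜 ℬ : Set (Set X)} {A : Set X} (hA : A ∈ 𝒜) (Bf : X → Set X)
    (hBf : ∀ x ∈ A, Bf x ∈ ℬ) {C : Set X}
    (hC : ∀ x ∈ A, ∀ b ∈ Bf x, x * b ∈ C) : C ∈ upMul 𝒜 ℬ := by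
  refine ⟨A, hA, Bf, hBf, ?_⟩
  intro c hc
  simp only [mem_iUnion, mem_image, exists_prop] at hc
  obtain ⟨x, hx, b, hb, rfl⟩ := hc
  exact hC x hx b hb

lemma mem_upMul_elim {𝒜 ℬ : Set (Set X)} {C : Set X} (h : C ∈ upMul 𝒜 ℬ) :
    ∃ A ∈ 𝒜, ∃ Bf : X → Set X, (∀ x ∈ A, Bf x ∈ ℬ) ∧ ∀ x ∈ A, ∀ b ∈ Bf x, x * b ∈ C := by
  obtain ⟨A, hA, Bf, hBf, hsub⟩ := h
  refine ⟨A, hA, Bf, hBf, fun x hx b hb => hsub ?_⟩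
  simp only [mem_iUnion, mem_image, exists_prop]
  exact ⟨x, hx, b, hb, rfl⟩

lemma lin_upMul_self (hlin : ∀ x y : X, x * y = x ∨ x * y = y) {𝒜 : Set (Set X)}
    (h𝒜 : IsUpfamily 𝒜) : upMul 𝒜 𝒜 = 𝒜 := by
  ext C
  constructor
  · intro h
    obtain ⟨A, hA, Bf, hBf, hmem⟩ := mem_upMul_elim h
    by_cases hx : ∀ x ∈ A, x ∈ C
    · exact h𝒜.2 A hA C hx
    · push_neg at hx
      obtain ⟨x, hxA, hxC⟩ := hx
      refine h𝒜.2 (Bf x) (hBf x hxA) C ?_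
      intro b hb
      rcases hlin x b with h' | h'
      · exact absurd (h' ▸ hmem x hxA b hb) hxC
      · have := hmem x hxA b hb; rwa [h'] at this
  · intro hC
    exact mem_upMul_intro hC (fun _ => C) (fun _ _ => hC)
      (fun x hx b hb => by rcases hlin x b with h' | h' <;> rw [h'] <;> assumption)

variable (hband : ∀ x : X, x * x = x) {x y : X} (hx : x * y ≠ x) (hy : x * y ≠ y)
include hband hx hy

lemma xby_ne (b : X) : x * b * y ≠ x ∧ x * b * y ≠ y := by
  constructor
  · intro heq
    have h1 : x * b * y * y = x * b * y := by rw [mul_assoc (x * b), hband]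
    rw [heq] at h1
    exact hx h1
  · intro heq
    have h2 : x * (x * b * y) = x * b * y := by
      rw [← mul_assoc x (x * b) y, ← mul_assoc x x b, hband]
    rw [heq] at h2
    exact hy h2

lemma zby_ne (b : X) : (x * y) * b * y ≠ x ∧ (x * y) * b * y ≠ y := by
  have hxz : x * (x * y) = x * y := by rw [← mul_assoc, hband]
  constructor
  · intro heq
    have h1 : (x * y) * b * y * y = (x * y) * b * y := by rw [mul_assoc ((x * y) * b), hband]
    rw [heq] at h1
    exact hx h1
  · intro heq
    have h2 : x * ((x * y) * b * y) = (x * y) * b * y := by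
      rw [← mul_assoc x ((x * y) * b) y, ← mul_assoc x (x * y) b, hxz]
    rw [heq] at h2
    exact hy h2

lemma zbz_ne (b : X) : (x * y) * b * (x * y) ≠ x ∧ (x * y) * b * (x * y) ≠ y := by
  have hxz : x * (x * y) = x * y := by rw [← mul_assoc, hband]
  have hzy : (x * y) * y = x * y := by rw [mul_assoc, hband]
  constructor
  · intro heq
    have h1 : (x * y) * b * (x * y) * (x * y) = (x * y) * b * (x * y) := by
      rw [mul_assoc ((x * y) * b), hband]
    rw [heq] at h1
    rw [hxz] at h1
    exact hx h1
  · intro heq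
    have h2 : (x * y) * ((x * y) * b * (x * y)) = (x * y) * b * (x * y) := by
      rw [← mul_assoc (x * y) ((x * y) * b) (x * y), ← mul_assoc (x * y) (x * y) b, hband]
    rw [heq] at h2
    rw [hzy] at h2
    exact hy h2

lemma xbz_ne (b : X) : x * b * (x * y) ≠ x ∧ x * b * (x * y) ≠ y := by
  have hzy : (x * y) * y = x * y := by rw [mul_assoc, hband]
  constructor
  · intro heq
    have h1 : x * b * (x * y) * y = x * b * (x * y) := by rw [mul_assoc (x * b), hzy]
    rw [heq] at h1
    exact hx h1
  · intro heq
    have h2 : x * (x * b * (x * y)) = x * b * (x * y) := by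
      rw [← mul_assoc x (x * b) (x * y), ← mul_assoc x x b, hband]
    rw [heq] at h2
    exact hy h2

end helpers

section counters
variable {X : Type*} [Semigroup X]
variable (hband : ∀ x : X, x * x = x) {x y : X} (hx : x * y ≠ x) (hy : x * y ≠ y)
include hband hx hy

lemma filter_counter :
    ∃ 𝒜 : Set (Set X), IsFilterUp 𝒜 ∧ ∀ ℬ : Set (Set X), IsUpfamily ℬ →
      upMul (upMul 𝒜 ℬ) 𝒜 ≠ 𝒜 := by
  refine ⟨{A | x ∈ A ∧ y ∈ A}, ⟨⟨fun A hA => ⟨x, hA.1⟩,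
    fun A hA B hAB => ⟨hAB hA.1, hAB hA.2⟩⟩,
    fun A hA B hB => ⟨⟨hA.1, hB.1⟩, hA.2, hB.2⟩⟩, ?_⟩
  intro ℬ hℬ heq
  have hxyF : ({x, y} : Set X) ∈ ({A | x ∈ A ∧ y ∈ A} : Set (Set X)) :=
    ⟨mem_insert _ _, mem_insert_of_mem _ rfl⟩
  have hmem := hxyF
  rw [← heq] at hmem
  obtain ⟨D, hD, Af, hAf, hprod⟩ := mem_upMul_elim hmem
  obtain ⟨A, hA, Bf, hBf, hDmem⟩ := mem_upMul_elim hD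
  obtain ⟨b, hb⟩ := hℬ.1 _ (hBf x hA.1)
  have hd : x * b ∈ D := hDmem x hA.1 b hb
  have hkey : x * b * y ∈ ({x, y} : Set X) := hprod _ hd y (hAf _ hd).2
  simp only [mem_insert_iff, mem_singleton_iff] at hkey
  rcases hkey with h | h
  · exact (xby_ne hband hx hy b).1 h
  · exact (xby_ne hband hx hy b).2 h

lemma maxlinked_counter :
    ∃ 𝒜 : Set (Set X), IsMaxLinkedUp 𝒜 ∧ ∀ ℬ : Set (Set X), IsUpfamily ℬ →
      upMul (upMul 𝒜 ℬ) 𝒜 ≠ 𝒜 := by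
  refine ⟨{A | (x ∈ A ∧ y ∈ A) ∨ (x ∈ A ∧ x * y ∈ A) ∨ (y ∈ A ∧ x * y ∈ A)}, ⟨⟨?up, ?lk⟩, ?mx⟩, ?reg⟩
  case up =>
    constructor
    · rintro A (⟨h1, _⟩ | ⟨h1, _⟩ | ⟨h1, _⟩) <;> exact ⟨_, h1⟩
    · rintro A (⟨h1, h2⟩ | ⟨h1, h2⟩ | ⟨h1, h2⟩) B hAB
      · exact Or.inl ⟨hAB h1, hAB h2⟩
      · exact Or.inr (Or.inl ⟨hAB h1, hAB h2⟩)
      · exact Or.inr (Or.inr ⟨hAB h1, hAB h2⟩)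
  case lk =>
    rintro A (⟨h1, h2⟩ | ⟨h1, h2⟩ | ⟨h1, h2⟩) B (⟨g1, g2⟩ | ⟨g1, g2⟩ | ⟨g1, g2⟩) <;>
      first
        | exact ⟨x, h1, g1⟩
        | exact ⟨y, h2, g1⟩
        | exact ⟨x * y, h2, g2⟩
        | exact ⟨y, h1, g2⟩
  case mx =>
    intro ℬ hℬ hsub
    refine Subset.antisymm hsub (fun B hB => ?_)
    have m1 := hℬ.2 B hB ({x, y} : Set X) (hsub (Or.inl ⟨mem_insert _ _, mem_insert_of_mem _ rfl⟩))
    have m2 := hℬ.2 B hB ({x, x * y} : Set X) (hsub (Or.inr (Or.inl ⟨mem_insert _ _, mem_insert_of_mem _ rfl⟩)))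
    have m3 := hℬ.2 B hB ({y, x * y} : Set X) (hsub (Or.inr (Or.inr ⟨mem_insert _ _, mem_insert_of_mem _ rfl⟩)))
    obtain ⟨p, hpB, hp⟩ := m1
    obtain ⟨q, hqB, hq⟩ := m2
    obtain ⟨r, hrB, hr⟩ := m3
    simp only [mem_insert_iff, mem_singleton_iff] at hp hq hr
    show (x ∈ B ∧ y ∈ B) ∨ (x ∈ B ∧ x * y ∈ B) ∨ (y ∈ B ∧ x * y ∈ B)
    rcases hp with rfl | rfl <;> rcases hq with rfl | rfl <;> rcases hr with rfl | rfl <;> tauto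
  case reg =>
    intro ℬ hℬ heq
    have hxyΔ : ({x, y} : Set X) ∈ ({A | (x ∈ A ∧ y ∈ A) ∨ (x ∈ A ∧ x * y ∈ A) ∨
        (y ∈ A ∧ x * y ∈ A)} : Set (Set X)) :=
      Or.inl ⟨mem_insert _ _, mem_insert_of_mem _ rfl⟩
    have hmem := hxyΔ
    rw [← heq] at hmem
    obtain ⟨D, hD, Af, hAf, hprod⟩ := mem_upMul_elim hmem
    obtain ⟨A, hA, Bf, hBf, hDmem⟩ := mem_upMul_elim hD
    have hcase : x ∈ A ∨ x * y ∈ A := by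
      rcases hA with ⟨h, _⟩ | ⟨h, _⟩ | ⟨_, h⟩
      · exact Or.inl h
      · exact Or.inl h
      · exact Or.inr h
    rcases hcase with hxA | hzA
    · obtain ⟨b, hb⟩ := hℬ.1 _ (hBf x hxA)
      have hd : x * b ∈ D := hDmem x hxA b hb
      have hyz : y ∈ Af (x * b) ∨ x * y ∈ Af (x * b) := by
        rcases hAf _ hd with ⟨_, h⟩ | ⟨_, h⟩ | ⟨h, _⟩
        · exact Or.inl h
        · exact Or.inr h
        · exact Or.inl h
      rcases hyz with ha | ha
      · have hkey : x * b * y ∈ ({x, y} : Set X) := hprod _ hd y ha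
        simp only [mem_insert_iff, mem_singleton_iff] at hkey
        rcases hkey with h | h
        · exact (xby_ne hband hx hy b).1 h
        · exact (xby_ne hband hx hy b).2 h
      · have hkey : x * b * (x * y) ∈ ({x, y} : Set X) := hprod _ hd _ ha
        simp only [mem_insert_iff, mem_singleton_iff] at hkey
        rcases hkey with h | h
        · exact (xbz_ne hband hx hy b).1 h
        · exact (xbz_ne hband hx hy b).2 h
    · obtain ⟨b, hb⟩ := hℬ.1 _ (hBf _ hzA)
      have hd : (x * y) * b ∈ D := hDmem _ hzA b hb
      have hyz : y ∈ Af ((x * y) * b) ∨ x * y ∈ Af ((x * y) * b) := by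
        rcases hAf _ hd with ⟨_, h⟩ | ⟨_, h⟩ | ⟨h, _⟩
        · exact Or.inl h
        · exact Or.inr h
        · exact Or.inl h
      rcases hyz with ha | ha
      · have hkey : (x * y) * b * y ∈ ({x, y} : Set X) := hprod _ hd y ha
        simp only [mem_insert_iff, mem_singleton_iff] at hkey
        rcases hkey with h | h
        · exact (zby_ne hband hx hy b).1 h
        · exact (zby_ne hband hx hy b).2 h
      · have hkey : (x * y) * b * (x * y) ∈ ({x, y} : Set X) := hprod _ hd _ ha
        simp only [mem_insert_iff, mem_singleton_iff] at hkey
        rcases hkey with h | h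
        · exact (zbz_ne hband hx hy b).1 h
        · exact (zbz_ne hband hx hy b).2 h

end counters

/-- For a band `X` TFAE: (1) `X` is linear; (2) each element of `φ(X)` is regular in `υ(X)`;
(3) each element of `λ(X)` is regular in `υ(X)`. -/
theorem stmt1 (X : Type*) [Semigroup X] (hband : ∀ x : X, x * x = x) :
    List.TFAE [
      ∀ x y : X, x * y = x ∨ x * y = y,
      ∀ 𝒜 : Set (Set X), IsFilterUp 𝒜 →
        ∃ ℬ : Set (Set X), IsUpfamily ℬ ∧ upMul (upMul 𝒜 ℬ) 𝒜 = 𝒜,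
      ∀ 𝒜 : Set (Set X), IsMaxLinkedUp 𝒜 →
        ∃ ℬ : Set (Set X), IsUpfamily ℬ ∧ upMul (upMul 𝒜 ℬ) 𝒜 = 𝒜] := by
  tfae_have 1 → 2 := fun hlin 𝒜 h𝒜 =>
    ⟨𝒜, h𝒜.1, by rw [lin_upMul_self hlin h𝒜.1, lin_upMul_self hlin h𝒜.1]⟩
  tfae_have 1 → 3 := fun hlin 𝒜 h𝒜 =>
    ⟨𝒜, h𝒜.1.1, by rw [lin_upMul_self hlin h𝒜.1.1, lin_upMul_self hlin h𝒜.1.1]⟩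
  tfae_have 2 → 1 := by
    intro h2 x y
    by_contra hc
    push_neg at hc
    obtain ⟨𝒜, h𝒜, hreg⟩ := filter_counter hband hc.1 hc.2
    obtain ⟨ℬ, hℬ, heq⟩ := h2 𝒜 h𝒜
    exact hreg ℬ hℬ heq
  tfae_have 3 → 1 := by
    intro h3 x y
    by_contra hc
    push_neg at hc
    obtain ⟨𝒜, h𝒜, hreg⟩ := maxlinked_counter hband hc.1 hc.2
    obtain ⟨ℬ, hℬ, heq⟩ := h3 𝒜 h𝒜
    exact hreg ℬ hℬ heq
  tfae_finish
end

section
/- For a semilattice X the following conditions are equivalent: (1) X is linear; (2) φ(X) is a (1,2)-Clifford semigroup; (3) λ(X) is a (1,2)-Clifford semigroup. -/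
open Set

section Helpers

variable {X : Type*} [CommSemigroup X]

lemma mem_upUnion {A : Set X} {Bf : X → Set X} {x y : X} (hx : x ∈ A) (hy : y ∈ Bf x) :
    x * y ∈ ⋃ x ∈ A, (fun b => x * b) '' Bf x := by
  simp only [mem_iUnion, mem_image]
  exact ⟨x, hx, y, hy, rfl⟩

lemma linear_upMul (hlin : ∀ x y : X, x * y = x ∨ x * y = y)
    {𝒜 : Set (Set X)} (h𝒜 : IsUpfamily 𝒜) : 𝒜 = upMul 𝒜 𝒜 := by
  ext C
  constructor
  · intro hC
    refine ⟨C, hC, fun _ => C, fun _ _ => hC, ?_⟩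
    rintro z hz
    simp only [mem_iUnion, mem_image] at hz
    obtain ⟨x, hx, y, hy, rfl⟩ := hz
    rcases hlin x y with h | h <;> rw [h] <;> assumption
  · rintro ⟨A, hA, Bf, hBf, hsub⟩
    by_cases hcase : ∃ x ∈ A, ∀ y ∈ Bf x, x * y = y
    · obtain ⟨x, hx, hxy⟩ := hcase
      refine h𝒜.2 (Bf x) (hBf x hx) C (fun y hy => ?_)
      have := hsub (mem_upUnion hx hy)
      rwa [hxy y hy] at this
    · push_neg at hcase
      refine h𝒜.2 A hA C (fun x hx => ?_)
      obtain ⟨y, hy, hne⟩ := hcase x hx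
      have h1 : x * y = x := (hlin x y).resolve_right hne
      have := hsub (mem_upUnion hx hy)
      rwa [h1] at this

variable (hidem : ∀ x : X, x * x = x) {a b : X}

section Products
include hidem

lemma pca : (a * b) * a = a * b := by rw [mul_comm a b, mul_assoc, hidem]
lemma pcb : (a * b) * b = a * b := by rw [mul_assoc, hidem]
lemma pac : a * (a * b) = a * b := by rw [← mul_assoc, hidem]
lemma pbc : b * (a * b) = a * b := by rw [mul_comm a b, ← mul_assoc, hidem]

end Products

/-- The filter generated by `{a,b}` witnesses failure of (2) when `a*b ∉ {a,b}`. -/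
lemma filter_sq (hidem : ∀ x : X, x * x = x) (a b : X) :
    upMul {C : Set X | a ∈ C ∧ b ∈ C} {C | a ∈ C ∧ b ∈ C}
      = {C | a ∈ C ∧ b ∈ C ∧ a * b ∈ C} := by
  ext C
  constructor
  · rintro ⟨A, ⟨haA, hbA⟩, Bf, hBf, hsub⟩
    obtain ⟨ha1, _⟩ := hBf a haA
    obtain ⟨_, hb2⟩ := hBf b hbA
    obtain ⟨_, hb1⟩ := hBf a haA
    refine ⟨?_, ?_, hsub (mem_upUnion haA hb1)⟩
    · have := hsub (mem_upUnion haA ha1); rwa [hidem] at this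
    · have := hsub (mem_upUnion hbA hb2); rwa [hidem] at this
  · rintro ⟨ha, hb, hc⟩
    refine ⟨{a, b}, ⟨by simp, by simp⟩, fun _ => {a, b}, fun x _ => ⟨by simp, by simp⟩, ?_⟩
    rintro z hz
    simp only [mem_iUnion, mem_image] at hz
    obtain ⟨x, hx, y, hy, rfl⟩ := hz
    simp only [mem_insert_iff, mem_singleton_iff] at hx hy
    rcases hx with rfl | rfl <;> rcases hy with rfl | rfl
    · rwa [hidem]
    · exact hc
    · rwa [mul_comm]
    · rwa [hidem]

lemma filter_cube (hidem : ∀ x : X, x * x = x) (a b : X) :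
    upMul {C : Set X | a ∈ C ∧ b ∈ C ∧ a * b ∈ C} {C | a ∈ C ∧ b ∈ C}
      = {C | a ∈ C ∧ b ∈ C ∧ a * b ∈ C} := by
  ext C
  constructor
  · rintro ⟨A, ⟨haA, hbA, _⟩, Bf, hBf, hsub⟩
    obtain ⟨ha1, hb1⟩ := hBf a haA
    obtain ⟨_, hb2⟩ := hBf b hbA
    refine ⟨?_, ?_, hsub (mem_upUnion haA hb1)⟩
    · have := hsub (mem_upUnion haA ha1); rwa [hidem] at this
    · have := hsub (mem_upUnion hbA hb2); rwa [hidem] at this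
  · rintro ⟨ha, hb, hc⟩
    refine ⟨{a, b, a * b}, ⟨by simp, by simp, by simp⟩, fun _ => {a, b},
      fun x _ => ⟨by simp, by simp⟩, ?_⟩
    rintro z hz
    simp only [mem_iUnion, mem_image] at hz
    obtain ⟨x, hx, y, hy, rfl⟩ := hz
    simp only [mem_insert_iff, mem_singleton_iff] at hx hy
    rcases hx with rfl | rfl | rfl <;> rcases hy with rfl | rfl
    · rwa [hidem]
    · exact hc
    · rwa [mul_comm]
    · rwa [hidem]
    · rwa [pca hidem]
    · rwa [pcb hidem]

end Helpers

section Linked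

variable {X : Type*} [CommSemigroup X]

/-- The "triangle" maximal linked family on `{a, b, a*b}`. -/
def triFam (a b : X) : Set (Set X) :=
  {C | (a ∈ C ∧ b ∈ C) ∨ (a ∈ C ∧ a * b ∈ C) ∨ (b ∈ C ∧ a * b ∈ C)}

lemma triFam_maxLinked (hidem : ∀ x : X, x * x = x) {a b : X}
    (hab1 : a * b ≠ a) (hab2 : a * b ≠ b) : IsMaxLinkedUp (triFam a b) := by
  have hup : IsUpfamily (triFam a b) := by
    constructor
    · rintro C (⟨h, _⟩ | ⟨h, _⟩ | ⟨h, _⟩) <;> exact ⟨_, h⟩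
    · rintro C (⟨h1, h2⟩ | ⟨h1, h2⟩ | ⟨h1, h2⟩) B hs
      · exact Or.inl ⟨hs h1, hs h2⟩
      · exact Or.inr (Or.inl ⟨hs h1, hs h2⟩)
      · exact Or.inr (Or.inr ⟨hs h1, hs h2⟩)
  refine ⟨⟨hup, ?_⟩, ?_⟩
  · rintro A (⟨h1, h2⟩ | ⟨h1, h2⟩ | ⟨h1, h2⟩) B (⟨h3, h4⟩ | ⟨h3, h4⟩ | ⟨h3, h4⟩) <;>
      first
        | exact ⟨a, h1, h3⟩
        | exact ⟨b, h2, h3⟩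
        | exact ⟨a * b, h2, h4⟩
        | exact ⟨b, h1, h4⟩
        | exact ⟨b, h1, h3⟩
  · intro ℬ hℬ hsub
    refine Subset.antisymm hsub fun B hB => ?_
    have m1 : ({a, b} : Set X) ∈ ℬ := hsub (Or.inl ⟨by simp, by simp⟩)
    have m2 : ({a, a * b} : Set X) ∈ ℬ := hsub (Or.inr (Or.inl ⟨by simp, by simp⟩))
    have m3 : ({b, a * b} : Set X) ∈ ℬ := hsub (Or.inr (Or.inr ⟨by simp, by simp⟩))
    obtain ⟨x1, hx1B, hx1⟩ := hℬ.2 B hB _ m1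
    obtain ⟨x2, hx2B, hx2⟩ := hℬ.2 B hB _ m2
    obtain ⟨x3, hx3B, hx3⟩ := hℬ.2 B hB _ m3
    simp only [mem_insert_iff, mem_singleton_iff] at hx1 hx2 hx3
    have d1 : a ∈ B ∨ b ∈ B := by rcases hx1 with rfl | rfl; exacts [Or.inl hx1B, Or.inr hx1B]
    have d2 : a ∈ B ∨ a * b ∈ B := by rcases hx2 with rfl | rfl; exacts [Or.inl hx2B, Or.inr hx2B]
    have d3 : b ∈ B ∨ a * b ∈ B := by rcases hx3 with rfl | rfl; exacts [Or.inl hx3B, Or.inr hx3B]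
    unfold triFam
    simp only [mem_setOf_eq]
    tauto

lemma triFam_sq (hidem : ∀ x : X, x * x = x) {a b : X} (hne : a ≠ b) :
    upMul (triFam a b) (triFam a b) = {C : Set X | a * b ∈ C} := by
  ext C
  constructor
  · rintro ⟨A, hA, Bf, hBf, hsub⟩
    rcases hA with ⟨ha, hb⟩ | ⟨ha, hc⟩ | ⟨hb, hc⟩
    · rcases hBf a ha with ⟨_, h2⟩ | ⟨_, h2⟩ | ⟨h2, _⟩
      · exact hsub (mem_upUnion ha h2)
      · have := hsub (mem_upUnion ha h2); rwa [pac hidem] at this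
      · exact hsub (mem_upUnion ha h2)
    · rcases hBf (a * b) hc with ⟨h2, _⟩ | ⟨h2, _⟩ | ⟨h2, _⟩
      · have := hsub (mem_upUnion hc h2); rwa [pca hidem] at this
      · have := hsub (mem_upUnion hc h2); rwa [pca hidem] at this
      · have := hsub (mem_upUnion hc h2); rwa [pcb hidem] at this
    · rcases hBf (a * b) hc with ⟨h2, _⟩ | ⟨h2, _⟩ | ⟨h2, _⟩
      · have := hsub (mem_upUnion hc h2); rwa [pca hidem] at this
      · have := hsub (mem_upUnion hc h2); rwa [pca hidem] at this
      · have := hsub (mem_upUnion hc h2); rwa [pcb hidem] at this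
  · intro hc
    haveI := Classical.decEq X
    refine ⟨{a, b}, Or.inl ⟨by simp, by simp⟩,
      fun x => if x = a then {b, a * b} else {a, a * b}, ?_, ?_⟩
    · intro x _
      by_cases h : x = a
      · dsimp only; rw [if_pos h]; exact Or.inr (Or.inr ⟨by simp, by simp⟩)
      · dsimp only; rw [if_neg h]; exact Or.inr (Or.inl ⟨by simp, by simp⟩)
    · rintro z hz
      simp only [mem_iUnion, mem_image] at hz
      obtain ⟨x, hx, y, hy, rfl⟩ := hz
      simp only [mem_insert_iff, mem_singleton_iff] at hx
      rcases hx with rfl | rfl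
      · rw [if_pos rfl] at hy
        simp only [mem_insert_iff, mem_singleton_iff] at hy
        rcases hy with rfl | rfl
        · exact hc
        · rwa [pac hidem]
      · rw [if_neg fun h => hne h.symm] at hy
        simp only [mem_insert_iff, mem_singleton_iff] at hy
        rcases hy with rfl | rfl
        · rwa [mul_comm]
        · rwa [pbc hidem]

lemma triFam_cube (hidem : ∀ x : X, x * x = x) (a b : X) :
    upMul {C : Set X | a * b ∈ C} (triFam a b) = {C : Set X | a * b ∈ C} := by
  ext C
  constructor
  · rintro ⟨A, hc, Bf, hBf, hsub⟩
    rcases hBf (a * b) hc with ⟨h2, _⟩ | ⟨h2, _⟩ | ⟨h2, _⟩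
    · have := hsub (mem_upUnion hc h2); rwa [pca hidem] at this
    · have := hsub (mem_upUnion hc h2); rwa [pca hidem] at this
    · have := hsub (mem_upUnion hc h2); rwa [pcb hidem] at this
  · intro hc
    refine ⟨{a * b}, rfl, fun _ => {a, b}, fun x _ => Or.inl ⟨by simp, by simp⟩, ?_⟩
    rintro z hz
    simp only [mem_iUnion, mem_image, mem_singleton_iff] at hz
    obtain ⟨x, rfl, y, hy, rfl⟩ := hz
    simp only [mem_insert_iff, mem_singleton_iff] at hy
    rcases hy with rfl | rfl
    · rwa [pca hidem]
    · rwa [pcb hidem]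

end Linked

/-- For a semilattice `X` TFAE: (1) `X` is linear; (2) `φ(X)` is `(1,2)`-Clifford;
(3) `λ(X)` is `(1,2)`-Clifford.  A semigroup is `(1,2)`-Clifford if `x² = x³ → x = x²`. -/
theorem stmt2 (X : Type*) [CommSemigroup X] (hidem : ∀ x : X, x * x = x) :
    List.TFAE [
      ∀ x y : X, x * y = x ∨ x * y = y,
      ∀ 𝒜 : Set (Set X), IsFilterUp 𝒜 →
        upMul 𝒜 𝒜 = upMul (upMul 𝒜 𝒜) 𝒜 → 𝒜 = upMul 𝒜 𝒜,
      ∀ 𝒜 : Set (Set X), IsMaxLinkedUp 𝒜 →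
        upMul 𝒜 𝒜 = upMul (upMul 𝒜 𝒜) 𝒜 → 𝒜 = upMul 𝒜 𝒜] := by
  tfae_have 1 → 2 := fun h1 𝒜 h𝒜 _ => linear_upMul h1 h𝒜.1
  tfae_have 1 → 3 := fun h1 𝒜 h𝒜 _ => linear_upMul h1 h𝒜.1.1
  tfae_have 2 → 1 := by
    intro h2
    by_contra hlin
    push_neg at hlin
    obtain ⟨a, b, hab1, hab2⟩ := hlin
    have hF : IsFilterUp {C : Set X | a ∈ C ∧ b ∈ C} :=
      ⟨⟨fun C hC => ⟨a, hC.1⟩, fun C hC B hs => ⟨hs hC.1, hs hC.2⟩⟩,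
        fun A hA B hB => ⟨⟨hA.1, hB.1⟩, ⟨hA.2, hB.2⟩⟩⟩
    have heq : upMul {C : Set X | a ∈ C ∧ b ∈ C} {C | a ∈ C ∧ b ∈ C}
        = upMul (upMul {C : Set X | a ∈ C ∧ b ∈ C} {C | a ∈ C ∧ b ∈ C})
            {C | a ∈ C ∧ b ∈ C} := by
      rw [filter_sq hidem a b, filter_cube hidem a b]
    have h := h2 _ hF heq
    rw [filter_sq hidem a b] at h
    have hmem : ({a, b} : Set X) ∈ {C : Set X | a ∈ C ∧ b ∈ C} := ⟨by simp, by simp⟩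
    rw [h] at hmem
    rcases hmem.2.2 with h' | h'
    · exact hab1 h'
    · exact hab2 h'
  tfae_have 3 → 1 := by
    intro h3
    by_contra hlin
    push_neg at hlin
    obtain ⟨a, b, hab1, hab2⟩ := hlin
    have hne : a ≠ b := fun h => hab1 (by rw [h]; exact hidem b)
    have heq : upMul (triFam a b) (triFam a b)
        = upMul (upMul (triFam a b) (triFam a b)) (triFam a b) := by
      rw [triFam_sq hidem hne, triFam_cube hidem a b]
    have h := h3 _ (triFam_maxLinked hidem hab1 hab2) heq
    rw [triFam_sq hidem hne] at h
    have hmem : ({a, b} : Set X) ∈ triFam a b := Or.inl ⟨by simp, by simp⟩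
    rw [h] at hmem
    rcases hmem with h' | h'
    · exact hab1 h'
    · exact hab2 h'
  tfae_finish
end

section
/- For a band X, the semigroup β(X) of ultrafilters on X is a band if and only if for each injective sequence (x_n)_{n∈ω} in X there are numbers n < m such that x_n·x_m ∈ {x_n, x_m}. -/
open Set

/-- The product of two ultrafilters on a semigroup `(X, *)`:
`U ∗ V = {A ⊆ X : {x : {y : x·y ∈ A} ∈ V} ∈ U}`. -/
def betaMul {X : Type*} [Mul X] (U V : Ultrafilter X) : Set (Set X) :=
  {A : Set X | {x : X | {y : X | x * y ∈ A} ∈ V} ∈ U}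

/-- For a band `X`, the semigroup `β(X)` of ultrafilters is a band iff for each injective
sequence `(x_n)` in `X` there are `n < m` with `x_n·x_m ∈ {x_n, x_m}`. -/
theorem stmt3 (X : Type*) [Semigroup X] (hband : ∀ x : X, x * x = x) :
    (∀ U : Ultrafilter X, betaMul U U = {A : Set X | A ∈ U}) ↔
      ∀ x : ℕ → X, Function.Injective x →
        ∃ n m : ℕ, n < m ∧ (x n * x m = x n ∨ x n * x m = x m) := by
  classical
  constructor
  · -- band ⇒ combinatorial condition
    intro hidem x hx
    by_contra hcon
    push_neg at hcon
    -- hcon : ∀ n m, n < m → x n * x m ≠ x n ∧ x n * x m ≠ x m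
    have key : ∀ n m : ℕ, n < m → x n * x m ∉ Set.range x := by
      rintro n m hnm ⟨k, hk⟩
      rcases lt_trichotomy n k with h | h | h
      · have : x n * x k = x k := by
          rw [hk, ← mul_assoc, hband]
        exact (hcon n k h).2 this
      · exact (hcon n m hnm).1 (h ▸ hk.symm)
      · have hkm : k < m := h.trans hnm
        have : x k * x m = x k := by
          conv_lhs => rw [hk, mul_assoc, hband]
          exact hk.symm
        exact (hcon k m hkm).1 this
    set D := Set.range x with hDdef
    have hD : D.Infinite := Set.infinite_range_of_injective hx
    haveI : Infinite ↥D := hD.to_subtype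
    set U : Ultrafilter X := (Filter.hyperfilter ↥D).map Subtype.val with hU
    have hDU : D ∈ U := by
      rw [hU, Ultrafilter.mem_map]
      have : (Subtype.val : ↥D → X) ⁻¹' D = Set.univ := by
        ext ⟨a, ha⟩; simp [ha]
      rw [this]; exact Filter.univ_mem
    have hfin : ∀ s : Set X, s.Finite → s ∉ U := by
      intro s hs hsU
      rw [hU, Ultrafilter.mem_map] at hsU
      exact (Filter.notMem_hyperfilter_of_finite (hs.preimage (Subtype.val_injective.injOn))) hsU
    have hDbeta : D ∈ betaMul U U := by
      rw [hidem U]; exact hDU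
    -- but the betaMul set is disjoint from D
    have hS : {a : X | {b : X | a * b ∈ D} ∈ U} ∈ U := hDbeta
    have hdisj : ∀ a ∈ D, {b : X | a * b ∈ D} ∉ U := by
      rintro a ⟨n, rfl⟩ hmem
      have hinter : {b : X | x n * b ∈ D} ∩ D ∈ U := U.toFilter.inter_mem hmem hDU
      have hsub : {b : X | x n * b ∈ D} ∩ D ⊆ x '' Set.Iic n := by
        rintro b ⟨hb, m, rfl⟩
        rcases le_or_gt m n with h | h
        · exact ⟨m, h, rfl⟩
        · exact absurd hb (key n m h)
      exact hfin _ ((Set.finite_Iic n).image x) (U.toFilter.mem_of_superset hinter hsub)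
    have : {a : X | {b : X | a * b ∈ D} ∈ U} ∩ D ∈ U := U.toFilter.inter_mem hS hDU
    obtain ⟨a, ha1, ha2⟩ := Ultrafilter.nonempty_of_mem this
    exact hdisj a ha2 ha1
  · -- combinatorial condition ⇒ band
    intro hcond U
    have main : ∀ A : Set X, A ∈ U → {a : X | {b : X | a * b ∈ A} ∈ U} ∈ U := by
      intro A hA
      by_cases hpure : ∃ s : Set X, s.Finite ∧ s ∈ U
      · obtain ⟨s, hs, hsU⟩ := hpure
        obtain ⟨a, -, rfl⟩ := Ultrafilter.eq_pure_of_finite_mem hs hsU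
        have hAa : a ∈ A := hA
        have : a * a ∈ A := by rw [hband]; exact hAa
        simpa using this
      · push_neg at hpure
        by_contra hB
        have hBc : {a : X | {b : X | a * b ∈ A} ∈ U}ᶜ ∈ U :=
          Ultrafilter.compl_mem_iff_notMem.2 hB
        set C : Set X := A ∩ {a : X | {b : X | a * b ∈ A} ∈ U}ᶜ with hCdef
        have hCU : C ∈ U := U.toFilter.inter_mem hA hBc
        have hCprop : ∀ a ∈ C, {b : X | a * b ∉ A} ∈ U := by
          intro a ha
          have : {b : X | a * b ∈ A} ∉ U := ha.2
          have := Ultrafilter.compl_mem_iff_notMem.2 this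
          exact this
        have step : ∀ L : List X, (∀ z ∈ L, z ∈ C) →
            ∃ y, y ∈ C ∧ (∀ z ∈ L, z * y ∉ A) ∧ y ∉ L := by
          intro L hL
          have h1 : (⋂ z ∈ L.toFinset, ({b : X | z * b ∉ A} ∩ {z}ᶜ)) ∈ U := by
            apply Filter.biInter_finset_mem L.toFinset |>.2
            intro z hz
            refine U.toFilter.inter_mem (hCprop z (hL z (List.mem_toFinset.1 hz))) ?_
            exact Ultrafilter.compl_mem_iff_notMem.2
              (hpure _ (Set.finite_singleton z))
          have h2 : C ∩ (⋂ z ∈ L.toFinset, ({b : X | z * b ∉ A} ∩ {z}ᶜ)) ∈ U :=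
            U.toFilter.inter_mem hCU h1
          obtain ⟨y, hy1, hy2⟩ := Ultrafilter.nonempty_of_mem h2
          refine ⟨y, hy1, ?_, ?_⟩
          · intro z hz
            have := Set.mem_iInter₂.1 hy2 z (List.mem_toFinset.2 hz)
            exact this.1
          · intro hyL
            have := Set.mem_iInter₂.1 hy2 y (List.mem_toFinset.2 hyL)
            exact this.2 rfl
        haveI : Nonempty X := ⟨(Ultrafilter.nonempty_of_mem hA).choose⟩
        choose! f hf using step
        let l : ℕ → List X := fun n => Nat.rec [] (fun _ ih => f ih :: ih) n
        have hl0 : l 0 = [] := rfl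
        have hlsucc : ∀ n, l (n + 1) = f (l n) :: l n := fun n => rfl
        have hinv : ∀ n, ∀ z ∈ l n, z ∈ C := by
          intro n
          induction n with
          | zero => simp [hl0]
          | succ n ih =>
            intro z hz
            rw [hlsucc] at hz
            rcases List.mem_cons.1 hz with h | h
            · exact h ▸ (hf (l n) ih).1
            · exact ih z h
        set y : ℕ → X := fun n => f (l n) with hy
        have hprops : ∀ n, y n ∈ C ∧ (∀ z ∈ l n, z * y n ∉ A) ∧ y n ∉ l n :=
          fun n => hf (l n) (hinv n)
        have hmemlist : ∀ k n, k < n → y k ∈ l n := by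
          intro k n
          induction n with
          | zero => omega
          | succ n ih =>
            intro hk
            rw [hlsucc]
            rcases Nat.lt_succ_iff_lt_or_eq.1 hk with h | h
            · exact List.mem_cons_of_mem _ (ih h)
            · exact h ▸ List.mem_cons_self
        have hinj : Function.Injective y := by
          intro a b hab
          by_contra hne
          rcases lt_or_gt_of_ne hne with h | h
          · exact (hprops b).2.2 (hab ▸ hmemlist a b h)
          · exact (hprops a).2.2 (hab ▸ hmemlist b a h)
        obtain ⟨n, m, hnm, hor⟩ := hcond y hinj
        have hnotA : y n * y m ∉ A := (hprops m).2.1 (y n) (hmemlist n m hnm)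
        rcases hor with h | h
        · exact hnotA (by rw [h]; exact (hprops n).1.1)
        · exact hnotA (by rw [h]; exact (hprops m).1.1)
    ext A
    simp only [betaMul, Set.mem_setOf_eq]
    constructor
    · intro hA
      by_contra hAU
      have hAc : Aᶜ ∈ U := Ultrafilter.compl_mem_iff_notMem.2 hAU
      have h2 := main Aᶜ hAc
      have h3 : {a : X | {b : X | a * b ∈ A} ∈ U} ∩ {a : X | {b : X | a * b ∈ Aᶜ} ∈ U} ∈ U :=
        U.toFilter.inter_mem hA h2
      obtain ⟨a, ha1, ha2⟩ := Ultrafilter.nonempty_of_mem h3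
      have : {b : X | a * b ∈ A}ᶜ ∈ U := by
        exact ha2
      exact (Ultrafilter.compl_notMem_iff.2 ha1) this
    · exact main A
end

section
/- For a semilattice X, the semigroup β(X) of ultrafilters on X is a band if and only if each antichain in X is finite. -/
open Set

/-- For a semilattice `X`, the semigroup `β(X)` of ultrafilters is a band iff every
antichain in `X` is finite. -/
theorem stmt4 (X : Type*) [CommSemigroup X] (hidem : ∀ x : X, x * x = x) :
    (∀ U : Ultrafilter X, betaMul U U = {A : Set X | A ∈ U}) ↔
      ∀ A : Set X, (∀ a ∈ A, ∀ b ∈ A, a ≠ b → a * b ≠ a ∧ a * b ≠ b) → A.Finite := by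
  constructor
  · -- band → every antichain is finite
    intro hband A hA
    by_contra hfin
    rw [← Set.not_infinite, not_not] at hfin
    have hNB : (Filter.cofinite ⊓ Filter.principal A).NeBot :=
      hfin.cofinite_inf_principal_neBot
    set U := Ultrafilter.of (Filter.cofinite ⊓ Filter.principal A) with hU
    have hle := Ultrafilter.of_le (Filter.cofinite ⊓ Filter.principal A)
    have hAU : A ∈ U := hle (Filter.mem_inf_of_right (Filter.mem_principal_self A))
    have hcof : ∀ s : Set X, s.Finite → s ∉ U := by
      intro s hs hsU
      have h2 : sᶜ ∈ U := hle (Filter.mem_inf_of_left hs.compl_mem_cofinite)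
      have h3 : s ∩ sᶜ ∈ U := Filter.inter_mem hsU h2
      rw [Set.inter_compl_self] at h3
      exact Filter.empty_notMem (U : Filter X) h3
    -- in an antichain, products of distinct elements leave the antichain
    have hA' : ∀ a ∈ A, ∀ b ∈ A, a * b ∈ A → a = b := by
      intro a ha b hb hab
      by_contra hne
      obtain ⟨h1, h2⟩ := hA a ha b hb hne
      obtain ⟨h3, h4⟩ := hA (a * b) hab a ha h1
      apply h3
      calc a * b * a = a * a * b := mul_right_comm a b a
        _ = a * b := by rw [hidem a]
    -- the "shift set" of A is disjoint from A
    have hdisj : ∀ x ∈ A, {y : X | x * y ∈ A} ∉ U := by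
      intro x hx hmem
      have hsub : {y : X | x * y ∈ A} ∩ A ⊆ {x} := by
        intro y ⟨hy1, hy2⟩
        exact (hA' x hx y hy2 hy1).symm
      exact hcof {x} (Set.finite_singleton x)
        (Filter.mem_of_superset (Filter.inter_mem hmem hAU) hsub)
    have hAbeta : A ∈ betaMul U U := by
      rw [hband U]; exact hAU
    have hS : {x : X | {y : X | x * y ∈ A} ∈ U} ∈ U := hAbeta
    obtain ⟨x, hx1, hx2⟩ := Filter.nonempty_of_mem (Filter.inter_mem hS hAU)
    exact hdisj x hx2 hx1
  · -- every antichain finite → band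
    intro hanti U
    have main : ∀ B ∈ U, {x : X | {y : X | x * y ∈ B} ∈ U} ∈ U := by
      intro B hB
      by_contra hS
      rw [← Ultrafilter.compl_mem_iff_notMem] at hS
      set C := B ∩ {x : X | {y : X | x * y ∈ B} ∈ U}ᶜ with hC
      have hCU : C ∈ U := Filter.inter_mem hB hS
      have hCB : C ⊆ B := Set.inter_subset_left
      have hCD : ∀ x ∈ C, {y : X | x * y ∉ B} ∈ U := by
        intro x hx
        have : {y : X | x * y ∈ B} ∉ U := hx.2
        rw [← Ultrafilter.compl_mem_iff_notMem] at this
        exact this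
      have hstep : ∀ s : Finset X, (∀ x ∈ s, x ∈ C) → ∃ y, y ∈ C ∧ ∀ x ∈ s, x * y ∉ B := by
        intro s hs
        have hmem : C ∩ ⋂ x ∈ s, {y : X | x * y ∉ B} ∈ U := by
          exact Filter.inter_mem hCU ((Filter.biInter_finset_mem s).mpr
            fun x hx => hCD x (hs x hx))
        obtain ⟨y, hy1, hy2⟩ := Filter.nonempty_of_mem hmem
        refine ⟨y, hy1, fun x hx => ?_⟩
        have := Set.mem_iInter₂.mp hy2 x hx
        exact this
      obtain ⟨f, hfC, hfr⟩ := exists_seq_of_forall_finset_exists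
        (fun x => x ∈ C) (fun x y => x * y ∉ B) hstep
      have hpair : ∀ m n : ℕ, m ≠ n → f m * f n ∉ B := by
        intro m n hmn
        rcases lt_or_gt_of_ne hmn with h | h
        · exact hfr m n h
        · rw [mul_comm]; exact hfr n m h
      have hinj : Function.Injective f := by
        intro m n hfe
        by_contra hmn
        have h1 := hpair m n hmn
        rw [hfe, hidem] at h1
        exact h1 (hCB (hfC n))
      have hran : (Set.range f).Finite := by
        apply hanti
        rintro a ⟨m, rfl⟩ b ⟨n, rfl⟩ hne
        have hmn : m ≠ n := fun h => hne (by rw [h])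
        have hprod := hpair m n hmn
        refine ⟨fun h => hprod ?_, fun h => hprod ?_⟩
        · rw [h]; exact hCB (hfC m)
        · rw [h]; exact hCB (hfC n)
      exact (Set.infinite_range_of_injective hinj) hran
    ext A
    simp only [betaMul, Set.mem_setOf_eq]
    constructor
    · intro hAb
      by_contra hAU
      rw [← Ultrafilter.compl_mem_iff_notMem] at hAU
      have h2 := main Aᶜ hAU
      obtain ⟨x, hx1, hx2⟩ := Filter.nonempty_of_mem (Filter.inter_mem hAb h2)
      have hx2' : {y : X | x * y ∈ A}ᶜ ∈ U := hx2
      rw [Ultrafilter.compl_mem_iff_notMem] at hx2'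
      exact hx2' hx1
    · exact main A
end

section
/- If X is a semilattice such that the semigroup β(X) of ultrafilters on X is commutative, then each linear subsemigroup of X is finite. -/
open Set

open Filter

section Aux
variable {X : Type*} [CommSemigroup X]

/-- key lemma, case "earlier element wins". -/
lemma key1 (b : ℕ → X) (𝒰 𝒱 : Ultrafilter ℕ) (h𝒱 : (𝒱 : Filter ℕ) ≤ cofinite)
    (hb : ∀ n m, n < m → b n * b m = b n) :
    betaMul (𝒰.map b) (𝒱.map b) = {A | A ∈ 𝒰.map b} := by
  have hmem𝒱 : ∀ {s : Set ℕ}, s ∈ (cofinite : Filter ℕ) → s ∈ 𝒱 := fun h => h𝒱 h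
  ext A
  have hstep : ∀ n, (b ⁻¹' {y : X | b n * y ∈ A} ∈ 𝒱 ↔ b n ∈ A) := by
    intro n
    constructor
    · intro h
      by_contra hA
      have hfin : (b ⁻¹' {y : X | b n * y ∈ A}) ⊆ Set.Iic n := by
        intro m hm
        by_contra hmn
        simp only [Set.mem_Iic, not_le] at hmn
        rw [Set.mem_preimage, Set.mem_setOf_eq, hb n m hmn] at hm
        exact hA hm
      have hnot : (b ⁻¹' {y : X | b n * y ∈ A}) ∉ 𝒱 := by
        rw [← Ultrafilter.compl_notMem_iff, not_not]
        exact hmem𝒱 (((Set.finite_Iic n).subset hfin).compl_mem_cofinite)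
      exact hnot h
    · intro hA
      apply Filter.mem_of_superset (hmem𝒱 (Set.finite_Iic n).compl_mem_cofinite)
      intro m hm
      simp only [Set.mem_compl_iff, Set.mem_Iic, not_le] at hm
      simp only [Set.mem_preimage, Set.mem_setOf_eq, hb n m hm]
      exact hA
  simp only [betaMul, Set.mem_setOf_eq, Ultrafilter.mem_map]
  have heq : b ⁻¹' {x : X | b ⁻¹' {y : X | x * y ∈ A} ∈ 𝒱} = b ⁻¹' A := by
    ext n
    simp only [Set.mem_preimage, Set.mem_setOf_eq]
    exact hstep n
  rw [heq]

/-- key lemma, case "later element wins". -/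
lemma key2 (b : ℕ → X) (𝒰 𝒱 : Ultrafilter ℕ) (h𝒱 : (𝒱 : Filter ℕ) ≤ cofinite)
    (hb : ∀ n m, n < m → b n * b m = b m) :
    betaMul (𝒰.map b) (𝒱.map b) = {A | A ∈ 𝒱.map b} := by
  have hmem𝒱 : ∀ {s : Set ℕ}, s ∈ (cofinite : Filter ℕ) → s ∈ 𝒱 := fun h => h𝒱 h
  ext A
  have hstep : ∀ n, (b ⁻¹' {y : X | b n * y ∈ A} ∈ 𝒱 ↔ b ⁻¹' A ∈ 𝒱) := by
    intro n
    have hev : {m : ℕ | m ∈ b ⁻¹' {y : X | b n * y ∈ A} ↔ m ∈ b ⁻¹' A} ∈ 𝒱 := by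
      apply Filter.mem_of_superset (hmem𝒱 (Set.finite_Iic n).compl_mem_cofinite)
      intro m hm
      simp only [Set.mem_compl_iff, Set.mem_Iic, not_le] at hm
      simp only [Set.mem_setOf_eq, Set.mem_preimage, hb n m hm]
    constructor
    · intro h
      exact Filter.mem_of_superset (Filter.inter_mem h hev) (fun m hm => hm.2.1 hm.1)
    · intro h
      exact Filter.mem_of_superset (Filter.inter_mem h hev) (fun m hm => hm.2.2 hm.1)
  simp only [betaMul, Set.mem_setOf_eq, Ultrafilter.mem_map]
  by_cases hc : b ⁻¹' A ∈ 𝒱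
  · simp only [hc, iff_true]
    have heq : b ⁻¹' {x : X | b ⁻¹' {y : X | x * y ∈ A} ∈ 𝒱} = Set.univ := by
      ext n
      simp only [Set.mem_preimage, Set.mem_setOf_eq, Set.mem_univ, iff_true]
      exact (hstep n).2 hc
    rw [heq]; exact Filter.univ_mem
  · simp only [hc, iff_false]
    intro h
    have heq : b ⁻¹' {x : X | b ⁻¹' {y : X | x * y ∈ A} ∈ 𝒱} = ∅ := by
      ext n
      simp only [Set.mem_preimage, Set.mem_setOf_eq, Set.mem_empty_iff_false, iff_false]
      exact fun hh => hc ((hstep n).1 hh)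
    rw [heq] at h
    exact (Filter.empty_notMem _) h

end Aux

/-- If `X` is a semilattice whose ultrafilter semigroup `β(X)` is commutative, then each
linear subsemigroup of `X` is finite. -/
theorem stmt5 (X : Type*) [CommSemigroup X] (hidem : ∀ x : X, x * x = x)
    (hcomm : ∀ U V : Ultrafilter X, betaMul U V = betaMul V U) :
    ∀ L : Set X, (∀ x ∈ L, ∀ y ∈ L, x * y ∈ L) →
      (∀ x ∈ L, ∀ y ∈ L, x * y = x ∨ x * y = y) → L.Finite := by
  intro L _hsub hlin
  by_contra hinf
  haveI : Infinite ↥L := Set.infinite_coe_iff.2 hinf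
  -- an injective sequence in L
  let e := Infinite.natEmbedding ↥L
  let f : ℕ → X := fun n => (e n : X)
  have hf_inj : Function.Injective f := fun n m h => e.injective (Subtype.ext h)
  have hf_mem : ∀ n, f n ∈ L := fun n => (e n).2
  -- the relation r x y := x * y = x is transitive
  haveI : IsTrans X (fun x y => x * y = x) := by
    constructor
    intro a b c hab hbc
    calc a * c = (a * b) * c := by rw [hab]
      _ = a * (b * c) := mul_assoc a b c
      _ = a * b := by rw [hbc]
      _ = a := hab
  obtain ⟨g, hg⟩ := exists_increasing_or_nonincreasing_subseq (fun x y => x * y = x) f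
  set b : ℕ → X := fun n => f (g n) with hbdef
  have hb_inj : Function.Injective b := hf_inj.comp g.injective
  have hcases : (∀ n m, n < m → b n * b m = b n) ∨ (∀ n m, n < m → b n * b m = b m) := by
    rcases hg with h | h
    · exact Or.inl (fun n m hnm => h n m hnm)
    · refine Or.inr (fun n m hnm => ?_)
      rcases hlin (b n) (hf_mem (g n)) (b m) (hf_mem (g m)) with h1 | h1
      · exact absurd h1 (h n m hnm)
      · exact h1
  -- two distinct free ultrafilters on ℕ
  have hEven : {n : ℕ | Even n}.Infinite :=
    Set.infinite_of_injective_forall_mem (f := fun n : ℕ => 2 * n)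
      (fun a b h => by dsimp only at h; omega) (fun n => ⟨n, by show 2 * n = n + n; omega⟩)
  have hOdd : ({n : ℕ | Even n}ᶜ : Set ℕ).Infinite :=
    Set.infinite_of_injective_forall_mem (f := fun n : ℕ => 2 * n + 1)
      (fun a b h => by dsimp only at h; omega) (fun n => by simp [Nat.even_add_one, parity_simps])
  haveI h1 := hEven.cofinite_inf_principal_neBot
  haveI h2 := hOdd.cofinite_inf_principal_neBot
  obtain ⟨𝒰, h𝒰⟩ := Ultrafilter.exists_le (cofinite ⊓ 𝓟 {n : ℕ | Even n})
  obtain ⟨𝒱, h𝒱⟩ := Ultrafilter.exists_le (cofinite ⊓ 𝓟 ({n : ℕ | Even n}ᶜ))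
  have h𝒰c : (𝒰 : Filter ℕ) ≤ cofinite := le_trans h𝒰 inf_le_left
  have h𝒱c : (𝒱 : Filter ℕ) ≤ cofinite := le_trans h𝒱 inf_le_left
  have h𝒰E : {n : ℕ | Even n} ∈ 𝒰 :=
    h𝒰 (Filter.mem_inf_of_right (Filter.mem_principal_self _))
  have h𝒱E : ({n : ℕ | Even n}ᶜ : Set ℕ) ∈ 𝒱 :=
    h𝒱 (Filter.mem_inf_of_right (Filter.mem_principal_self _))
  -- the pushforwards are equal by commutativity
  have hUV : 𝒰.map b = 𝒱.map b := by
    have hc := hcomm (𝒰.map b) (𝒱.map b)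
    have heq : ({A | A ∈ 𝒰.map b} : Set (Set X)) = {A | A ∈ 𝒱.map b} := by
      rcases hcases with hb1 | hb1
      · rw [← key1 b 𝒰 𝒱 h𝒱c hb1, ← key1 b 𝒱 𝒰 h𝒰c hb1, hc]
      · rw [← key2 b 𝒱 𝒰 h𝒰c hb1, ← key2 b 𝒰 𝒱 h𝒱c hb1, hc]
    exact Ultrafilter.coe_injective (Filter.ext fun s => Set.ext_iff.1 heq s)
  -- but they are distinct: images of evens and odds are disjoint
  have hmemE : b '' {n : ℕ | Even n} ∈ 𝒰.map b :=
    Ultrafilter.mem_map.2 (Filter.mem_of_superset h𝒰E (Set.subset_preimage_image b _))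
  have hmemO : b '' ({n : ℕ | Even n}ᶜ) ∈ 𝒰.map b := by
    rw [hUV]
    exact Ultrafilter.mem_map.2 (Filter.mem_of_superset h𝒱E (Set.subset_preimage_image b _))
  have hdisj : b '' {n : ℕ | Even n} ∩ b '' ({n : ℕ | Even n}ᶜ) = ∅ := by
    rw [← Set.image_inter hb_inj, Set.inter_compl_self, Set.image_empty]
  have hbad := Filter.inter_mem hmemE hmemO
  rw [hdisj] at hbad
  exact (Filter.empty_notMem _) hbad
end

section
/- The semigroup β(X) of ultrafilters on a semigroup X is not commutative if and only if there are sequences (x_n)_{n∈ω} and (y_n)_{n∈ω} in X such that {x_k·y_n : k < n} ∩ {y_k·x_n : k < n} = ∅. -/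
open Set

section Aux

variable {X : Type*} [Mul X] [Nonempty X]

noncomputable def bpick (s : Set X) : X := Classical.epsilon (· ∈ s)

lemma bpick_mem {s : Set X} (h : s.Nonempty) : bpick s ∈ s :=
  Classical.epsilon_spec h

variable (A C D : Set X)

noncomputable def bstep (l : List (X × X)) : X × X :=
  (bpick (C ∩ {x | ∀ p ∈ l, p.2 * x ∉ A}),
   bpick (D ∩ {y | ∀ p ∈ l, p.1 * y ∈ A}))

noncomputable def bhist : ℕ → List (X × X)
  | 0 => []
  | n + 1 => bhist n ++ [bstep A C D (bhist n)]

noncomputable def bseq (n : ℕ) : X × X := bstep A C D (bhist A C D n)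

lemma bhist_eq (n : ℕ) : bhist A C D n = (List.range n).map (bseq A C D) := by
  induction n with
  | zero => simp [bhist]
  | succ n ih => simp [bhist, List.range_succ, ih, bseq]

lemma bseq_invariant (U V : Ultrafilter X) (hC : C ∈ U) (hD : D ∈ V)
    (hCdef : ∀ x ∈ C, {y | x * y ∈ A} ∈ V)
    (hDdef : ∀ y ∈ D, {x | y * x ∉ A} ∈ U) :
    ∀ n : ℕ, (bseq A C D n).1 ∈ C ∧ (bseq A C D n).2 ∈ D ∧
      (∀ k < n, (bseq A C D k).2 * (bseq A C D n).1 ∉ A) ∧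
      (∀ k < n, (bseq A C D k).1 * (bseq A C D n).2 ∈ A) := by
  intro n
  induction n using Nat.strong_induction_on with
  | _ n IH =>
    set f := bseq A C D with hf
    have hSx : (C ∩ {x | ∀ p ∈ bhist A C D n, p.2 * x ∉ A}) ∈ U := by
      apply Filter.inter_mem hC
      have heq : {x : X | ∀ p ∈ bhist A C D n, p.2 * x ∉ A} =
          ⋂ k ∈ Finset.range n, {x | (f k).2 * x ∉ A} := by
        ext x
        simp [bhist_eq]
        exact Iff.rfl
      rw [heq]
      exact (Filter.biInter_finset_mem _).mpr fun k hk =>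
        hDdef _ (IH k (Finset.mem_range.mp hk)).2.1
    have hSy : (D ∩ {y | ∀ p ∈ bhist A C D n, p.1 * y ∈ A}) ∈ V := by
      apply Filter.inter_mem hD
      have heq : {y : X | ∀ p ∈ bhist A C D n, p.1 * y ∈ A} =
          ⋂ k ∈ Finset.range n, {y | (f k).1 * y ∈ A} := by
        ext y
        simp [bhist_eq]
        exact Iff.rfl
      rw [heq]
      exact (Filter.biInter_finset_mem _).mpr fun k hk =>
        hCdef _ (IH k (Finset.mem_range.mp hk)).1
    have hx : (f n).1 ∈ C ∩ {x | ∀ p ∈ bhist A C D n, p.2 * x ∉ A} :=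
      bpick_mem (U.nonempty_of_mem hSx)
    have hy : (f n).2 ∈ D ∩ {y | ∀ p ∈ bhist A C D n, p.1 * y ∈ A} :=
      bpick_mem (V.nonempty_of_mem hSy)
    refine ⟨hx.1, hy.1, ?_, ?_⟩
    · intro k hk
      exact hx.2 (f k) (by rw [bhist_eq]; exact List.mem_map_of_mem (List.mem_range.mpr hk))
    · intro k hk
      exact hy.2 (f k) (by rw [bhist_eq]; exact List.mem_map_of_mem (List.mem_range.mpr hk))

end Aux

lemma betaMul_key {X : Type*} [Mul X] {U V : Ultrafilter X} {A : Set X}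
    (hA : A ∈ betaMul U V) (hA' : A ∉ betaMul V U) :
    ∃ x y : ℕ → X,
      {z : X | ∃ k n : ℕ, k < n ∧ z = x k * y n} ∩
        {z : X | ∃ k n : ℕ, k < n ∧ z = y k * x n} = ∅ := by
  have hne : Nonempty X := U.nonempty_of_mem Filter.univ_mem |>.to_subtype.elim fun x => ⟨x⟩
  set C : Set X := {x | {y | x * y ∈ A} ∈ V} with hCdef
  set D : Set X := {y | {x | y * x ∉ A} ∈ U} with hDdef
  have hC : C ∈ U := hA
  have hD : D ∈ V := by
    have h1 : {y : X | {x | y * x ∈ A} ∈ U} ∉ V := hA'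
    have h2 : {y : X | {x | y * x ∈ A} ∈ U}ᶜ ∈ V :=
      (Ultrafilter.compl_mem_iff_notMem).mpr h1
    have : {y : X | {x | y * x ∈ A} ∈ U}ᶜ = D := by
      ext y
      simp only [mem_compl_iff, mem_setOf_eq, hDdef]
      rw [← Ultrafilter.compl_mem_iff_notMem, Set.compl_setOf]
    rwa [this] at h2
  have hinv := bseq_invariant A C D U V hC hD (fun x hx => hx) (fun y hy => hy)
  refine ⟨fun n => (bseq A C D n).1, fun n => (bseq A C D n).2, ?_⟩
  ext z
  simp only [mem_inter_iff, mem_setOf_eq, mem_empty_iff_false, iff_false, not_and]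
  rintro ⟨k, n, hkn, rfl⟩ ⟨k', n', hkn', heq⟩
  have h1 : (bseq A C D k).1 * (bseq A C D n).2 ∈ A := (hinv n).2.2.2 k hkn
  have h2 : (bseq A C D k').2 * (bseq A C D n').1 ∉ A := (hinv n').2.2.1 k' hkn'
  rw [← heq] at h2
  exact h2 h1

/-- The semigroup `β(X)` of ultrafilters on a semigroup `X` is not commutative iff there
are sequences `(x_n)`, `(y_n)` in `X` with `{x_k·y_n : k < n} ∩ {y_k·x_n : k < n} = ∅`. -/
theorem stmt6 (X : Type*) [Semigroup X] :
    (¬ ∀ U V : Ultrafilter X, betaMul U V = betaMul V U) ↔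
      ∃ x y : ℕ → X,
        {z : X | ∃ k n : ℕ, k < n ∧ z = x k * y n} ∩
          {z : X | ∃ k n : ℕ, k < n ∧ z = y k * x n} = ∅ := by
  constructor
  · intro h
    push_neg at h
    obtain ⟨U, V, hne⟩ := h
    have : ∃ A : Set X, (A ∈ betaMul U V ∧ A ∉ betaMul V U) ∨
        (A ∈ betaMul V U ∧ A ∉ betaMul U V) := by
      by_contra hc
      apply hne
      ext A
      constructor
      · intro hA
        by_contra hA'
        exact hc ⟨A, Or.inl ⟨hA, hA'⟩⟩
      · intro hA
        by_contra hA'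
        exact hc ⟨A, Or.inr ⟨hA, hA'⟩⟩
    obtain ⟨A, hcase⟩ := this
    rcases hcase with ⟨h1, h2⟩ | ⟨h1, h2⟩
    · exact betaMul_key h1 h2
    · obtain ⟨x, y, hxy⟩ := betaMul_key h1 h2
      exact ⟨y, x, by rwa [Set.inter_comm] at hxy⟩
  · rintro ⟨x, y, hxy⟩ hcomm
    set A : Set X := {z : X | ∃ k n : ℕ, k < n ∧ z = x k * y n} with hAdef
    set B : Set X := {z : X | ∃ k n : ℕ, k < n ∧ z = y k * x n} with hBdef
    set W : Ultrafilter ℕ := Filter.hyperfilter ℕ with hW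
    set U : Ultrafilter X := W.map x with hU
    set V : Ultrafilter X := W.map y with hV
    have htail : ∀ i : ℕ, {j : ℕ | i < j} ∈ W := by
      intro i
      apply Filter.mem_hyperfilter_of_finite_compl
      have : {j : ℕ | i < j}ᶜ = {j | j ≤ i} := by ext j; simp
      rw [this]
      exact Set.finite_Iic i
    have hAin : A ∈ betaMul U V := by
      show {a : X | {b : X | a * b ∈ A} ∈ V} ∈ U
      rw [hU, Ultrafilter.mem_map]
      have : x ⁻¹' {a : X | {b : X | a * b ∈ A} ∈ V} = Set.univ := by
        ext i
        simp only [mem_preimage, mem_setOf_eq, mem_univ, iff_true]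
        rw [hV, Ultrafilter.mem_map]
        have hsub : {j : ℕ | i < j} ⊆ y ⁻¹' {b : X | x i * b ∈ A} := by
          intro j hj
          exact ⟨i, j, hj, rfl⟩
        exact W.toFilter.mem_of_superset (htail i) hsub
      rw [this]
      exact Filter.univ_mem
    have hBin : B ∈ betaMul V U := by
      show {a : X | {b : X | a * b ∈ B} ∈ U} ∈ V
      rw [hV, Ultrafilter.mem_map]
      have : y ⁻¹' {a : X | {b : X | a * b ∈ B} ∈ U} = Set.univ := by
        ext i
        simp only [mem_preimage, mem_setOf_eq, mem_univ, iff_true]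
        rw [hU, Ultrafilter.mem_map]
        have hsub : {j : ℕ | i < j} ⊆ x ⁻¹' {b : X | y i * b ∈ B} := by
          intro j hj
          exact ⟨i, j, hj, rfl⟩
        exact W.toFilter.mem_of_superset (htail i) hsub
      rw [this]
      exact Filter.univ_mem
    rw [← hcomm U V] at hBin
    have h1 : {a : X | {b : X | a * b ∈ A} ∈ V} ∈ U := hAin
    have h2 : {a : X | {b : X | a * b ∈ B} ∈ V} ∈ U := hBin
    obtain ⟨a, ha1, ha2⟩ := U.nonempty_of_mem (Filter.inter_mem h1 h2)
    obtain ⟨b, hb1, hb2⟩ := V.nonempty_of_mem (Filter.inter_mem ha1 ha2)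
    have : a * b ∈ A ∩ B := ⟨hb1, hb2⟩
    rw [hxy] at this
    exact this
end

section
/- If X is a linear semigroup, then 𝒜∗ℬ = 𝒜⊗ℬ for any upfamilies 𝒜 ∈ υ•(X) and ℬ ∈ υ(X). -/
open Set

/-- `𝒜 ⊗ ℬ = {C ⊆ X : ∃ A ∈ 𝒜, ∃ B ∈ ℬ, A·B ⊆ C}`. -/
def upTensor {X : Type*} [Mul X] (𝒜 ℬ : Set (Set X)) : Set (Set X) :=
  {C | ∃ A ∈ 𝒜, ∃ B ∈ ℬ, Set.image2 (· * ·) A B ⊆ C}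

/-- A total transitive relation has a least element on any nonempty finset. -/
lemma exists_rel_min {X : Type*} (r : X → X → Prop) (htot : ∀ x y, r x y ∨ r y x)
    (htrans : ∀ ⦃x y z⦄, r x y → r y z → r x z)
    (s : Finset X) (hs : s.Nonempty) : ∃ m ∈ s, ∀ x ∈ s, r m x := by
  classical
  induction s using Finset.induction_on with
  | empty => exact absurd hs (by simp)
  | @insert a s ha ih =>
    rcases s.eq_empty_or_nonempty with rfl | hs'
    · refine ⟨a, by simp, ?_⟩
      intro x hx
      simp only [Finset.mem_insert, Finset.notMem_empty, or_false] at hx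
      subst hx
      rcases htot x x with h | h <;> exact h
    · obtain ⟨m, hm, hmin⟩ := ih hs'
      rcases htot m a with hma | ham
      · refine ⟨m, Finset.mem_insert_of_mem hm, ?_⟩
        intro x hx
        rcases Finset.mem_insert.1 hx with rfl | hx
        · exact hma
        · exact hmin x hx
      · refine ⟨a, Finset.mem_insert_self a s, ?_⟩
        intro x hx
        rcases Finset.mem_insert.1 hx with rfl | hx
        · rcases htot x x with h | h <;> exact h
        · exact htrans ham (hmin x hx)

/-- In a linear semigroup, the relation `x ≼ y ↔ x*y = y ∨ y*x = y` is transitive. -/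
lemma linRel_trans {X : Type*} [Semigroup X] (hlin : ∀ x y : X, x * y = x ∨ x * y = y)
    {x y z : X} (hxy : x * y = y ∨ y * x = y) (hyz : y * z = z ∨ z * y = z) :
    x * z = z ∨ z * x = z := by
  rcases hxy with h1 | h1 <;> rcases hyz with h2 | h2
  · left; calc x * z = x * (y * z) := by rw [h2]
      _ = (x * y) * z := (mul_assoc x y z).symm
      _ = y * z := by rw [h1]
      _ = z := h2
  · -- x*y = y, z*y = z
    rcases hlin x z with h3 | h3
    · -- x*z = x : show z*x = z
      rcases hlin z x with h4 | h4
      · exact Or.inr h4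
      · -- z*x = x : derive x = y
        have key : x = y := by
          have e1 : (x * z) * y = x * (z * y) := mul_assoc x z y
          rw [h3, h1, h2, h3] at e1
          exact e1.symm
        right; rw [key, h2]
    · exact Or.inl h3
  · -- y*x = y, y*z = z
    rcases hlin x z with h3 | h3
    · -- x*z = x : derive y = z
      have key : z = y := by
        have e1 : (y * x) * z = y * (x * z) := mul_assoc y x z
        rw [h1, h2, h3, h1] at e1
        exact e1
      right; rw [key, h1]
    · exact Or.inl h3
  · -- y*x = y, z*y = z
    right
    calc z * x = (z * y) * x := by rw [h2]
      _ = z * (y * x) := mul_assoc z y x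
      _ = z * y := by rw [h1]
      _ = z := h2

/-- Key combinatorial lemma: in a linear semigroup, for a finite nonempty `F` and a family
`Bf` with `x * Bf x ⊆ C` for all `x ∈ F`, some single `Bf x₀` works for all of `F`. -/
lemma exists_uniform {X : Type*} [Semigroup X] (hlin : ∀ x y : X, x * y = x ∨ x * y = y)
    (F : Set X) (hfin : F.Finite) (hne : F.Nonempty) (Bf : X → Set X) (C : Set X)
    (hC : ∀ x ∈ F, ∀ b ∈ Bf x, x * b ∈ C) :
    ∃ x₀ ∈ F, ∀ x ∈ F, ∀ b ∈ Bf x₀, x * b ∈ C := by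
  classical
  set r : X → X → Prop := fun u v => u * v = v ∨ v * u = v with hr
  have htot : ∀ u v, r u v ∨ r v u := by
    intro u v
    rcases hlin u v with h | h
    · exact Or.inr (Or.inr h)
    · exact Or.inl (Or.inl h)
  have htrans : ∀ ⦃u v w⦄, r u v → r v w → r u w := fun u v w h1 h2 =>
    linRel_trans hlin h1 h2
  by_cases hH : ∀ x ∈ F, x ∈ C
  · -- Case A : all of F lies in C; take an r-minimal element of F
    obtain ⟨m, hm, hmin⟩ := exists_rel_min r htot htrans hfin.toFinset
      (by rwa [Set.Finite.toFinset_nonempty])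
    rw [Set.Finite.mem_toFinset] at hm
    refine ⟨m, hm, ?_⟩
    intro x hx b hb
    have hmb : m * b ∈ C := hC m hm b hb
    rcases hlin x b with hxb | hxb
    · rw [hxb]; exact hH x hx
    · -- x*b = b
      rcases hlin m b with h1 | h1
      · -- m*b = m : use minimality r m x
        have hrmx : r m x := hmin x (by rwa [Set.Finite.mem_toFinset])
        rcases hrmx with h2 | h2
        · -- m*x = x : then b = m
          have e : (m * x) * b = m * (x * b) := mul_assoc m x b
          rw [h2, hxb, h1] at e
          rw [hxb, e, ← h1]
          exact hmb
        · -- x*m = x : then b = x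
          have e : (x * m) * b = x * (m * b) := mul_assoc x m b
          rw [h2, hxb, h1, h2] at e
          rw [hxb, e]
          exact hH x hx
      · -- m*b = b : b ∈ C
        rw [hxb, ← h1]; exact hmb
  · -- Case B : some element of F misses C; take an r-maximal such element
    push_neg at hH
    set H : Set X := {x ∈ F | x ∉ C} with hHdef
    have hHne : H.Nonempty := by
      obtain ⟨x, hx1, hx2⟩ := hH
      exact ⟨x, hx1, hx2⟩
    have hHfin : H.Finite := hfin.subset (fun x hx => hx.1)
    obtain ⟨M, hM, hmax⟩ := exists_rel_min (fun u v => r v u) (fun u v => (htot v u))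
      (fun u v w h1 h2 => htrans h2 h1) hHfin.toFinset
      (by rwa [Set.Finite.toFinset_nonempty])
    rw [Set.Finite.mem_toFinset] at hM
    obtain ⟨hMF, hMC⟩ := hM
    refine ⟨M, hMF, ?_⟩
    intro x hx b hb
    have hMb : M * b ∈ C := hC M hMF b hb
    have hMbb : M * b = b := by
      rcases hlin M b with h | h
      · exact absurd (h ▸ hMb) hMC
      · exact h
    have hbC : b ∈ C := hMbb ▸ hMb
    rcases hlin x b with hxb | hxb
    · -- x*b = x : show x ∈ C
      rw [hxb]
      by_contra hxC
      have hxH : x ∈ H := ⟨hx, hxC⟩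
      have hrxM : r x M := hmax x (by rwa [Set.Finite.mem_toFinset])
      rcases hrxM with h2 | h2
      · -- x*M = M : then b = x
        have e : (x * M) * b = x * (M * b) := mul_assoc x M b
        rw [h2, hMbb, hxb] at e
        exact hxC (e ▸ hbC)
      · -- M*x = M : then b = M
        have e : (M * x) * b = M * (x * b) := mul_assoc M x b
        rw [h2, hMbb, hxb, h2] at e
        exact hMC (e ▸ hbC)
    · rw [hxb]; exact hbC

/-- If `X` is a linear semigroup, then `𝒜 ∗ ℬ = 𝒜 ⊗ ℬ` for any upfamilies `𝒜 ∈ υ•(X)`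
(each member of `𝒜` contains a finite member of `𝒜`) and `ℬ ∈ υ(X)`. -/
theorem stmt7 (X : Type*) [Semigroup X] (hlin : ∀ x y : X, x * y = x ∨ x * y = y)
    (𝒜 ℬ : Set (Set X)) (h𝒜 : IsUpfamily 𝒜)
    (h𝒜fin : ∀ A ∈ 𝒜, ∃ F ∈ 𝒜, Set.Finite F ∧ F ⊆ A)
    (hℬ : IsUpfamily ℬ) :
    upMul 𝒜 ℬ = upTensor 𝒜 ℬ := by
  ext C
  constructor
  · rintro ⟨A, hA, Bf, hBf, hsub⟩
    obtain ⟨F, hF𝒜, hFfin, hFA⟩ := h𝒜fin A hA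
    have hFne : F.Nonempty := h𝒜.1 F hF𝒜
    have hC : ∀ x ∈ F, ∀ b ∈ Bf x, x * b ∈ C := by
      intro x hx b hb
      apply hsub
      simp only [Set.mem_iUnion]
      exact ⟨x, hFA hx, ⟨b, hb, rfl⟩⟩
    obtain ⟨x₀, hx₀, huni⟩ := exists_uniform hlin F hFfin hFne Bf C hC
    refine ⟨F, hF𝒜, Bf x₀, hBf x₀ (hFA hx₀), ?_⟩
    rintro c ⟨x, hx, b, hb, rfl⟩
    exact huni x hx b hb
  · rintro ⟨A, hA, B, hB, hsub⟩
    refine ⟨A, hA, fun _ => B, fun x _ => hB, ?_⟩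
    intro c hc
    simp only [Set.mem_iUnion] at hc
    obtain ⟨x, hx, b, hb, rfl⟩ := hc
    exact hsub ⟨x, hx, b, hb, rfl⟩
end

section
/- For a band X the following conditions are equivalent: (1) X is a finite linear semilattice; (2) the semigroup υ(X) is commutative; (3) the semigroup N₂(X) is commutative; (4) the semigroup λ(X) is commutative and (1,2)-Clifford. -/
open Set

namespace Stmt8Aux
set_option linter.unusedSectionVars false
variable {X : Type*} [Semigroup X]

theorem mem_upMul_iff {𝒜 ℬ : Set (Set X)} (hA : IsUpfamily 𝒜) (hB : IsUpfamily ℬ) {C : Set X} :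
    C ∈ upMul 𝒜 ℬ ↔ {x | {b | x * b ∈ C} ∈ ℬ} ∈ 𝒜 := by
  constructor
  · rintro ⟨A, hAmem, Bf, hBf, hsub⟩
    refine hA.2 A hAmem _ (fun x hx => ?_)
    refine hB.2 (Bf x) (hBf x hx) _ (fun b hb => ?_)
    exact hsub (Set.mem_biUnion hx ⟨b, hb, rfl⟩)
  · intro hU
    refine ⟨_, hU, fun x => {b | x * b ∈ C}, fun x hx => hx, ?_⟩
    refine Set.iUnion₂_subset (fun x _ => ?_)
    rintro c ⟨b, hb, rfl⟩
    exact hb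

def up1 (x : X) : Set (Set X) := {A | x ∈ A}

theorem up1_max (x : X) : IsMaxLinkedUp (up1 x) := by
  refine ⟨⟨⟨fun A hA => ⟨x, hA⟩, fun A hA B hAB => hAB hA⟩,
    fun A hA B hB => ⟨x, hA, hB⟩⟩, fun ℬ hB hsub => ?_⟩
  refine Set.Subset.antisymm hsub (fun B hBmem => ?_)
  obtain ⟨y, hy1, hy2⟩ := hB.2 B hBmem {x} (hsub rfl)
  rw [Set.mem_singleton_iff] at hy2
  exact hy2 ▸ hy1

theorem up1_linked (x : X) : IsLinkedUp (up1 x) := (up1_max x).1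

/-- The triangle family on three points. -/
def tri (x y z : X) : Set (Set X) :=
  {A | ({x, y} : Set X) ⊆ A ∨ ({y, z} : Set X) ⊆ A ∨ ({x, z} : Set X) ⊆ A}

section Tri
variable (hband : ∀ a : X, a * a = a) (hc : ∀ a b : X, a * b = b * a)
  {x y : X} (hx : x * y ≠ x) (hy : x * y ≠ y)

theorem tri_linked : IsLinkedUp (tri x y (x * y)) := by
  constructor
  constructor
  · rintro A (h | h | h)
    · exact ⟨x, h (by simp)⟩
    · exact ⟨y, h (by simp)⟩
    · exact ⟨x, h (by simp)⟩
  · rintro A (h | h | h) B hAB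
    · exact Or.inl (h.trans hAB)
    · exact Or.inr (Or.inl (h.trans hAB))
    · exact Or.inr (Or.inr (h.trans hAB))
  · rintro A (h | h | h) B (h' | h' | h')
    · exact ⟨x, h (by simp), h' (by simp)⟩
    · exact ⟨y, h (by simp), h' (by simp)⟩
    · exact ⟨x, h (by simp), h' (by simp)⟩
    · exact ⟨y, h (by simp), h' (by simp)⟩
    · exact ⟨y, h (by simp), h' (by simp)⟩
    · exact ⟨x * y, h (by simp), h' (by simp)⟩
    · exact ⟨x, h (by simp), h' (by simp)⟩
    · exact ⟨x * y, h (by simp), h' (by simp)⟩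
    · exact ⟨x, h (by simp), h' (by simp)⟩

include hband hc hx hy

theorem tri_facts : x * (x*y) = x*y ∧ y * (x*y) = x*y ∧ (x*y) * x = x*y ∧ (x*y) * y = x*y
    ∧ x ≠ y ∧ (x*y) ≠ x ∧ (x*y) ≠ y := by
  have h1 : x * (x*y) = x*y := by rw [← mul_assoc, hband]
  have h2 : y * (x*y) = x*y := by rw [hc x y, ← mul_assoc, hband]
  refine ⟨h1, h2, by rw [hc]; exact h1, by rw [hc]; exact h2, ?_, hx, hy⟩
  intro hxy
  exact hx (by rw [hxy, hband])

end Tri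
end Stmt8Aux

namespace Stmt8Aux
set_option linter.unusedSectionVars false
variable {X : Type*} [Semigroup X]

def pairFam (x y : X) : Set (Set X) := {A | ({x, y} : Set X) ⊆ A}

theorem pairFam_linked (x y : X) : IsLinkedUp (pairFam x y) :=
  ⟨⟨fun A hA => ⟨x, hA (by simp)⟩, fun A hA B hAB => hA.trans hAB⟩,
   fun A hA B hB => ⟨x, hA (by simp), hB (by simp)⟩⟩

section Tri2
variable (hband : ∀ a : X, a * a = a) (hc : ∀ a b : X, a * b = b * a)
  {x y : X} (hx : x * y ≠ x) (hy : x * y ≠ y)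

include hband hc hx hy

/-- the singleton of `z = x*y` belongs to `pairFam ∗ tri` -/
theorem mem_pair_tri : ({x*y} : Set X) ∈ upMul (pairFam x y) (tri x y (x*y)) := by
  obtain ⟨h1, h2, h3, h4, hxy, -, -⟩ := tri_facts hband hc hx hy
  rw [mem_upMul_iff (pairFam_linked x y).1 (tri_linked (x := x) (y := y)).1]
  intro a ha
  simp only [Set.mem_insert_iff, Set.mem_singleton_iff] at ha
  rcases ha with h | h
  · refine Or.inr (Or.inl ?_)
    intro b hb
    simp only [Set.mem_insert_iff, Set.mem_singleton_iff] at hb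
    simp only [Set.mem_setOf_eq, Set.mem_singleton_iff]
    rcases hb with h' | h'
    · rw [h, h']
    · rw [h, h']; exact h1
  · refine Or.inr (Or.inr ?_)
    intro b hb
    simp only [Set.mem_insert_iff, Set.mem_singleton_iff] at hb
    simp only [Set.mem_setOf_eq, Set.mem_singleton_iff]
    rcases hb with h' | h'
    · rw [h, h']; exact hc y x
    · rw [h, h']; exact h2

theorem not_mem_tri_pair : ({x*y} : Set X) ∉ upMul (tri x y (x*y)) (pairFam x y) := by
  obtain ⟨h1, h2, h3, h4, hxy, -, -⟩ := tri_facts hband hc hx hy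
  rw [mem_upMul_iff (tri_linked (x := x) (y := y)).1 (pairFam_linked x y).1]
  intro hU
  have hnx : x ∉ {a : X | {b | a * b ∈ ({x*y} : Set X)} ∈ pairFam x y} := by
    intro h
    have := h (show x ∈ ({x, y} : Set X) by simp)
    simp only [Set.mem_setOf_eq, Set.mem_singleton_iff] at this
    rw [hband] at this
    exact hx this.symm
  have hny : y ∉ {a : X | {b | a * b ∈ ({x*y} : Set X)} ∈ pairFam x y} := by
    intro h
    have := h (show y ∈ ({x, y} : Set X) by simp [Set.mem_insert_iff])
    simp only [Set.mem_setOf_eq, Set.mem_singleton_iff] at this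
    rw [hband] at this
    exact hy this.symm
  rcases hU with h | h | h
  · exact hnx (h (by simp))
  · exact hny (h (by simp))
  · exact hnx (h (by simp))

/-- the linearity counterexample for linked upfamilies -/
theorem no_comm_of_not_linear :
    ∃ 𝒜 ℬ : Set (Set X), IsLinkedUp 𝒜 ∧ IsLinkedUp ℬ ∧ upMul 𝒜 ℬ ≠ upMul ℬ 𝒜 := by
  refine ⟨tri x y (x*y), pairFam x y, tri_linked, pairFam_linked x y, fun h => ?_⟩
  exact not_mem_tri_pair hband hc hx hy (h ▸ mem_pair_tri hband hc hx hy)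

end Tri2
end Stmt8Aux

namespace Stmt8Aux
set_option linter.unusedSectionVars false
variable {X : Type*} [Semigroup X]

section Tri3
variable (hband : ∀ a : X, a * a = a) (hc : ∀ a b : X, a * b = b * a)
  {x y : X} (hx : x * y ≠ x) (hy : x * y ≠ y)

include hband hc hx hy

theorem tri_max : IsMaxLinkedUp (tri x y (x*y)) := by
  refine ⟨tri_linked, fun ℬ hB hsub => Set.Subset.antisymm hsub (fun B hBmem => ?_)⟩
  have m1 := hB.2 B hBmem _ (hsub (Or.inl (Set.Subset.refl _)))
  have m2 := hB.2 B hBmem _ (hsub (Or.inr (Or.inl (Set.Subset.refl _))))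
  have m3 := hB.2 B hBmem _ (hsub (Or.inr (Or.inr (Set.Subset.refl _))))
  obtain ⟨a, haB, ha⟩ := m1
  obtain ⟨b, hbB, hb⟩ := m2
  obtain ⟨c, hcB, hcm⟩ := m3
  simp only [Set.mem_insert_iff, Set.mem_singleton_iff] at ha hb hcm
  by_cases hxB : x ∈ B
  · by_cases hyB : y ∈ B
    · exact Or.inl (by rintro w (rfl | hw); · exact hxB
                       · simp only [Set.mem_singleton_iff] at hw; rw [hw]; exact hyB)
    · have : (x*y) ∈ B := by
        rcases hb with h | h
        · exact absurd (h ▸ hbB) hyB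
        · exact h ▸ hbB
      exact Or.inr (Or.inr (by rintro w (rfl | hw); · exact hxB
                               · simp only [Set.mem_singleton_iff] at hw; rw [hw]; exact this))
  · have hyB : y ∈ B := by
      rcases ha with h | h
      · exact absurd (h ▸ haB) hxB
      · exact h ▸ haB
    have hzB : (x*y) ∈ B := by
      rcases hcm with h | h
      · exact absurd (h ▸ hcB) hxB
      · exact h ▸ hcB
    exact Or.inr (Or.inl (by rintro w (rfl | hw); · exact hyB
                             · simp only [Set.mem_singleton_iff] at hw; rw [hw]; exact hzB))

theorem tri_sq : upMul (tri x y (x*y)) (tri x y (x*y)) = up1 (x*y) := by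
  obtain ⟨h1, h2, h3, h4, hxy, -, -⟩ := tri_facts hband hc hx hy
  have htu := (tri_linked (x := x) (y := y) : IsLinkedUp (tri x y (x*y))).1
  ext C
  rw [mem_upMul_iff htu htu]
  constructor
  · intro hU
    -- from a pair inside U we get some w ∈ {x,y,z} with D_w ∈ tri; in all cases x*y ∈ C
    have key : ∀ w : X, (w = x ∨ w = y ∨ w = x*y) →
        {b | w * b ∈ C} ∈ tri x y (x*y) → x*y ∈ C := by
      rintro w hw (hp | hp | hp)
      · have hwx : w * x ∈ C := hp (by simp)
        have hwy : w * y ∈ C := hp (by simp)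
        rcases hw with h | h | h
        · rw [h] at hwy; exact hwy
        · rw [h] at hwx; rwa [hc y x] at hwx
        · rw [h] at hwx; rwa [h3] at hwx
      · have hwz : w * (x*y) ∈ C := hp (by simp)
        rcases hw with h | h | h
        · rw [h] at hwz; rwa [h1] at hwz
        · rw [h] at hwz; rwa [h2] at hwz
        · rw [h] at hwz; rwa [hband] at hwz
      · have hwz : w * (x*y) ∈ C := hp (by simp)
        rcases hw with h | h | h
        · rw [h] at hwz; rwa [h1] at hwz
        · rw [h] at hwz; rwa [h2] at hwz
        · rw [h] at hwz; rwa [hband] at hwz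
    rcases hU with hp | hp | hp
    · exact key x (Or.inl rfl) (hp (by simp))
    · exact key y (Or.inr (Or.inl rfl)) (hp (by simp))
    · exact key x (Or.inl rfl) (hp (by simp))
  · intro hz
    refine Or.inl ?_
    intro w hw
    simp only [Set.mem_insert_iff, Set.mem_singleton_iff] at hw
    simp only [Set.mem_setOf_eq]
    rcases hw with rfl | rfl
    · exact Or.inr (Or.inl (by
        rintro b (rfl | hb)
        · simpa [up1] using hz
        · simp only [Set.mem_singleton_iff] at hb; rw [hb]
          simp only [Set.mem_setOf_eq]; rw [h1]; exact hz))
    · exact Or.inr (Or.inr (by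
        rintro b (rfl | hb)
        · simp only [Set.mem_setOf_eq]; rw [hc]; exact hz
        · simp only [Set.mem_singleton_iff] at hb; rw [hb]
          simp only [Set.mem_setOf_eq]; rw [h2]; exact hz))

theorem up1_mul_tri : upMul (up1 (x*y)) (tri x y (x*y)) = up1 (x*y) := by
  obtain ⟨h1, h2, h3, h4, hxy, -, -⟩ := tri_facts hband hc hx hy
  have htu := (tri_linked (x := x) (y := y) : IsLinkedUp (tri x y (x*y))).1
  ext C
  rw [mem_upMul_iff (up1_linked (x*y)).1 htu]
  constructor
  · rintro (hp | hp | hp)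
    · have := hp (show x ∈ ({x,y} : Set X) by simp)
      simpa [h3, up1] using this
    · have := hp (show (x*y) ∈ ({y, x*y} : Set X) by simp)
      simpa [hband, up1] using this
    · have := hp (show (x*y) ∈ ({x, x*y} : Set X) by simp)
      simpa [hband, up1] using this
  · intro hz
    refine Or.inl ?_
    rintro b (rfl | hb)
    · simp only [Set.mem_setOf_eq]; rwa [h3]
    · simp only [Set.mem_singleton_iff] at hb; rw [hb]
      simp only [Set.mem_setOf_eq]; rwa [h4]

theorem clifford_counterexample :
    ∃ 𝒜 : Set (Set X), IsMaxLinkedUp 𝒜 ∧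
      upMul 𝒜 𝒜 = upMul (upMul 𝒜 𝒜) 𝒜 ∧ 𝒜 ≠ upMul 𝒜 𝒜 := by
  refine ⟨tri x y (x*y), tri_max hband hc hx hy, ?_, ?_⟩
  · rw [tri_sq hband hc hx hy, up1_mul_tri hband hc hx hy]
  · rw [tri_sq hband hc hx hy]
    intro h
    have : ({x, y} : Set X) ∈ up1 (x*y) := h ▸ (Or.inl (Set.Subset.refl _))
    simp only [up1, Set.mem_setOf_eq, Set.mem_insert_iff, Set.mem_singleton_iff] at this
    rcases this with h' | h'
    · exact hx h'
    · exact hy h'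

end Tri3
end Stmt8Aux

namespace Stmt8Aux
set_option linter.unusedSectionVars false
variable {X : Type*} [Semigroup X]

/-- a greatest element for a total transitive relation on a nonempty set in a finite type -/
theorem exists_rmax [Finite X] (r : X → X → Prop) (rtot : ∀ a b, r a b ∨ r b a)
    (rtrans : ∀ {a b c}, r a b → r b c → r a c) {s : Set X} (hne : s.Nonempty) :
    ∃ m ∈ s, ∀ u ∈ s, r u m := by
  classical
  have key : ∀ t : Finset X, t.Nonempty → ∃ m ∈ t, ∀ u ∈ t, r u m := by
    intro t
    induction t using Finset.induction_on with
    | empty => intro h; exact absurd h (by simp)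
    | @insert a t' ha ih =>
      intro _
      by_cases ht' : t'.Nonempty
      · obtain ⟨m, hm, hmax⟩ := ih ht'
        rcases rtot a m with h | h
        · refine ⟨m, Finset.mem_insert_of_mem hm, fun u hu => ?_⟩
          rcases Finset.mem_insert.mp hu with rfl | hu
          · exact h
          · exact hmax u hu
        · refine ⟨a, Finset.mem_insert_self a t', fun u hu => ?_⟩
          rcases Finset.mem_insert.mp hu with rfl | hu
          · rcases rtot u u with h' | h' <;> exact h'
          · exact rtrans (hmax u hu) h
      · rw [Finset.not_nonempty_iff_eq_empty] at ht'
        subst ht'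
        refine ⟨a, by simp, fun u hu => ?_⟩
        simp only [Finset.mem_insert, Finset.notMem_empty, or_false] at hu
        subst hu
        rcases rtot u u with h' | h' <;> exact h'
  have hsf : s.Finite := Set.toFinite s
  obtain ⟨m, hm, hmax⟩ := key hsf.toFinset (by rwa [Set.Finite.toFinset_nonempty])
  exact ⟨m, hsf.mem_toFinset.mp hm, fun u hu => hmax u (hsf.mem_toFinset.mpr hu)⟩

section Chain
variable (hband : ∀ a : X, a * a = a) (hc : ∀ a b : X, a * b = b * a)
  (hl : ∀ a b : X, a * b = a ∨ a * b = b)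

include hband hc hl

theorem le_total' : ∀ a b : X, a * b = a ∨ b * a = b := by
  intro a b
  rcases hl a b with h | h
  · exact Or.inl h
  · exact Or.inr (by rw [hc b a]; exact h)

theorem le_trans' : ∀ {a b c : X}, a * b = a → b * c = b → a * c = a := by
  intro a b c h1 h2
  calc a * c = (a * b) * c := by rw [h1]
    _ = a * (b * c) := mul_assoc a b c
    _ = a * b := by rw [h2]
    _ = a := h1

theorem le_antisymm' : ∀ {a b : X}, a * b = a → b * a = b → a = b := by
  intro a b h1 h2
  rw [← h1, hc, h2]

/-- the key transfer lemma for commutativity over finite chains -/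
theorem key_transfer [Finite X] {𝒜 ℬ : Set (Set X)} (hA : IsUpfamily 𝒜) (hB : IsUpfamily ℬ)
    (C : Set X) (hU : {a : X | {b | a * b ∈ C} ∈ ℬ} ∈ 𝒜) :
    {a : X | {b | a * b ∈ C} ∈ 𝒜} ∈ ℬ := by
  classical
  set U : Set X := {a : X | {b | a * b ∈ C} ∈ ℬ} with hUdef
  by_cases hUC : U ⊆ C
  · -- Case A : take q maximal in U
    obtain ⟨q, hqU, hqmax⟩ := exists_rmax (fun a b => a * b = a)
      (le_total' hband hc hl) (fun h1 h2 => le_trans' hband hc hl h1 h2) (hA.1 U hU)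
    have hq : {b | q * b ∈ C} ∈ ℬ := hqU
    refine hB.2 _ hq _ (fun b hb => ?_)
    simp only [Set.mem_setOf_eq] at hb
    refine hA.2 U hU _ (fun u hu => ?_)
    show b * u ∈ C
    rw [hc b u]
    rcases hl u b with h | h
    · rw [h]; exact hUC hu
    · rw [h]
      rcases hl q b with h' | h'
      · have hbu : b * u = b := by rw [hc]; exact h
        have hbq : b * q = b := le_trans' hband hc hl hbu (hqmax u hu)
        have hqb : q = b := le_antisymm' hband hc hl h' hbq
        rw [← hqb]; exact hUC hqU
      · rw [← h']; exact hb
  · -- Case B : take p minimal in U \ C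
    obtain ⟨p0, hp0U, hp0C⟩ := Set.not_subset.mp hUC
    obtain ⟨p, hpmem, hpmin⟩ := exists_rmax (fun a b => b * a = b)
      (fun a b => le_total' hband hc hl b a)
      (fun h1 h2 => le_trans' hband hc hl h2 h1)
      (s := {u | u ∈ U ∧ u ∉ C}) ⟨p0, hp0U, hp0C⟩
    obtain ⟨hpU, hpC⟩ := hpmem
    have hp : {b | p * b ∈ C} ∈ ℬ := hpU
    refine hB.2 _ hp _ (fun b hb => ?_)
    simp only [Set.mem_setOf_eq] at hb
    have hpb : p * b = b := by
      rcases hl p b with h | h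
      · exact absurd (h ▸ hb) hpC
      · exact h
    have hbC : b ∈ C := hpb ▸ hb
    have hbp : b * p = b := by rw [hc]; exact hpb
    refine hA.2 U hU _ (fun u hu => ?_)
    show b * u ∈ C
    rw [hc b u]
    rcases hl u b with h | h
    · rw [h]
      by_cases huC : u ∈ C
      · exact huC
      · exfalso
        have h1 : p * u = p := hpmin u ⟨hu, huC⟩
        have h2 : u * p = u := le_trans' hband hc hl h hbp
        have hup : u = p := le_antisymm' hband hc hl h2 h1
        rw [hup] at h
        rw [hpb] at h
        exact hpC (h ▸ hbC)
    · rw [h]; exact hbC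

end Chain
end Stmt8Aux

namespace Stmt8Aux
set_option linter.unusedSectionVars false
variable {X : Type*} [Semigroup X]

section Chain2
variable (hband : ∀ a : X, a * a = a) (hc : ∀ a b : X, a * b = b * a)
  (hl : ∀ a b : X, a * b = a ∨ a * b = b)

include hband hc hl

theorem comm_of_finite_chain [Finite X] {𝒜 ℬ : Set (Set X)}
    (hA : IsUpfamily 𝒜) (hB : IsUpfamily ℬ) : upMul 𝒜 ℬ = upMul ℬ 𝒜 := by
  ext C
  rw [mem_upMul_iff hA hB, mem_upMul_iff hB hA]
  exact ⟨key_transfer hband hc hl hA hB C, key_transfer hband hc hl hB hA C⟩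

/-- Over any chain every maximal linked upfamily is an idempotent of `upMul`. -/
theorem sq_of_maxLinked {𝒜 : Set (Set X)} (hA : IsMaxLinkedUp 𝒜) :
    upMul 𝒜 𝒜 = 𝒜 := by
  have hup := hA.1.1
  ext C
  rw [mem_upMul_iff hup hup]
  constructor
  · intro hU
    have hm : ∀ A ∈ 𝒜, (C ∩ A).Nonempty := by
      intro A hAm
      obtain ⟨a, haU, haA⟩ := hA.1.2 _ hU A hAm
      obtain ⟨b, hbD, hbA⟩ := hA.1.2 _ haU A hAm
      refine ⟨a * b, hbD, ?_⟩
      rcases hl a b with h | h <;> rw [h] <;> assumption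
    have hCne : C.Nonempty := by
      obtain ⟨w, hw, -⟩ := hm _ hU
      exact ⟨w, hw⟩
    set 𝒜' : Set (Set X) := 𝒜 ∪ {S | C ⊆ S} with h𝒜'
    have h1 : IsLinkedUp 𝒜' := by
      constructor
      constructor
      · rintro A (h | h)
        · exact hup.1 A h
        · exact hCne.mono h
      · rintro A (h | h) B hAB
        · exact Or.inl (hup.2 A h B hAB)
        · exact Or.inr (h.trans hAB)
      · rintro A (h | h) B (h' | h')
        · exact hA.1.2 A h B h'
        · obtain ⟨w, hw1, hw2⟩ := hm A h
          exact ⟨w, hw2, h' hw1⟩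
        · obtain ⟨w, hw1, hw2⟩ := hm B h'
          exact ⟨w, h hw1, hw2⟩
        · obtain ⟨w, hw⟩ := hCne
          exact ⟨w, h hw, h' hw⟩
    have := hA.2 𝒜' h1 Set.subset_union_left
    rw [this]
    exact Or.inr (Set.Subset.refl C)
  · intro hC
    refine hup.2 C hC _ (fun a ha => ?_)
    refine hup.2 C hC _ (fun b hb => ?_)
    show a * b ∈ C
    rcases hl a b with h | h <;> rw [h] <;> assumption

end Chain2
end Stmt8Aux

namespace Stmt8Aux
set_option linter.unusedSectionVars false
variable {X : Type*} [Semigroup X]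

theorem exists_maxLinked {𝒞 : Set (Set X)} (h : IsLinkedUp 𝒞) :
    ∃ 𝒜, IsMaxLinkedUp 𝒜 ∧ 𝒞 ⊆ 𝒜 := by
  have hch : ∀ c ⊆ {𝒟 : Set (Set X) | IsLinkedUp 𝒟}, IsChain (· ⊆ ·) c → c.Nonempty →
      ∃ ub ∈ {𝒟 : Set (Set X) | IsLinkedUp 𝒟}, ∀ s ∈ c, s ⊆ ub := by
    intro c hcS hchain hcne
    refine ⟨⋃₀ c, ?_, fun s hs => Set.subset_sUnion_of_mem hs⟩
    constructor
    constructor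
    · rintro A ⟨𝒟, h𝒟, hA⟩
      exact (hcS h𝒟).1.1 A hA
    · rintro A ⟨𝒟, h𝒟, hA⟩ B hAB
      exact ⟨𝒟, h𝒟, (hcS h𝒟).1.2 A hA B hAB⟩
    · rintro A ⟨𝒟₁, h𝒟₁, hA⟩ B ⟨𝒟₂, h𝒟₂, hB⟩
      rcases hchain.total h𝒟₁ h𝒟₂ with h | h
      · exact (hcS h𝒟₂).2 A (h hA) B hB
      · exact (hcS h𝒟₁).2 A hA B (h hB)
  obtain ⟨𝒜, hsub, hmax⟩ := zorn_subset_nonempty {𝒟 : Set (Set X) | IsLinkedUp 𝒟} hch 𝒞 h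
  exact ⟨𝒜, ⟨hmax.1, fun ℬ hB h2 => Set.Subset.antisymm h2 (hmax.2 hB h2)⟩, hsub⟩

section Seq
variable (hband : ∀ a : X, a * a = a) (hc : ∀ a b : X, a * b = b * a)
  (hl : ∀ a b : X, a * b = a ∨ a * b = b)

include hband hc hl

theorem exists_mono_seq (hinf : ¬ Finite X) :
    ∃ f : ℕ → X, (∀ n m : ℕ, n < m → f n * f m = f n ∧ f n ≠ f m)
               ∨ (∀ n m : ℕ, n < m → f n * f m = f m ∧ f n ≠ f m) := by
  classical
  have hInf : Infinite X := not_finite_iff_infinite.mp hinf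
  set lt : X → X → Prop := fun a b => a * b = a ∧ a ≠ b with hltdef
  have lt_of_not_lt : ∀ {a b : X}, a ≠ b → ¬ lt a b → lt b a := by
    intro a b hne h
    rcases hl a b with h' | h'
    · exact absurd ⟨h', hne⟩ h
    · exact ⟨by rw [hc]; exact h', hne.symm⟩
  by_cases hwf : WellFounded lt
  · -- build a strictly increasing sequence
    have key : ∀ l : List X, {x : X | x ∉ l}.Nonempty := by
      intro l
      have h1 : {x : X | x ∈ l}.Finite := l.finite_toSet
      have h2 : {x : X | x ∈ l}ᶜ.Infinite := h1.infinite_compl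
      exact h2.nonempty
    set step : List X → X := fun l => hwf.min {x : X | x ∉ l} (key l) with hstep
    set L : ℕ → List X := fun n => Nat.rec [] (fun _ l => step l :: l) n with hL
    set g : ℕ → X := fun n => step (L n) with hg
    have hLsucc : ∀ n, L (n + 1) = g n :: L n := fun n => rfl
    have hgn : ∀ n, g n ∉ L n := fun n => hwf.min_mem {x : X | x ∉ L n} (key (L n))
    have hLmono : ∀ n m : ℕ, n ≤ m → ∀ x, x ∈ L n → x ∈ L m := by
      intro n m hnm
      induction m with
      | zero => intro x hx; rwa [Nat.le_zero.mp hnm] at *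
      | succ m ih =>
        rcases Nat.lt_or_ge n (m+1) with h | h
        · intro x hx
          rw [hLsucc m]
          exact List.mem_cons_of_mem _ (ih (Nat.lt_succ_iff.mp h) x hx)
        · intro x hx
          have : n = m + 1 := Nat.le_antisymm hnm h
          rwa [this] at hx
    refine ⟨g, Or.inl (fun n m hnm => ?_)⟩
    have hgmem : g n ∈ L m := by
      have : g n ∈ L (n+1) := by rw [hLsucc n]; exact List.mem_cons_self
      exact hLmono (n+1) m hnm _ this
    have hne : g n ≠ g m := fun h => hgn m (h ▸ hgmem)
    have hnlt : ¬ lt (g m) (g n) := by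
      refine hwf.not_lt_min {x : X | x ∉ L n} ?_
      show g m ∉ L n
      intro h
      exact hgn m (hLmono n m (le_of_lt hnm) _ h)
    have := lt_of_not_lt hne.symm hnlt
    exact ⟨this.1, hne⟩
  · -- extract a strictly decreasing sequence
    have h1 : ∃ a : X, ¬ Acc lt a := by
      by_contra h
      push_neg at h
      exact hwf ⟨h⟩
    have hstep : ∀ a : X, ¬ Acc lt a → ∃ b : X, lt b a ∧ ¬ Acc lt b := by
      intro a ha
      by_contra h
      push_neg at h
      exact ha (Acc.intro a (fun b hb => h b hb))
    obtain ⟨a₀, ha₀⟩ := h1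
    set F : {a : X // ¬ Acc lt a} → {a : X // ¬ Acc lt a} := fun p =>
      ⟨(hstep p.1 p.2).choose, (hstep p.1 p.2).choose_spec.2⟩ with hF
    set gs : ℕ → {a : X // ¬ Acc lt a} := fun n => F^[n] ⟨a₀, ha₀⟩ with hgs
    have hdec : ∀ n, lt (gs (n+1)).1 (gs n).1 := by
      intro n
      have : gs (n+1) = F (gs n) := by
        rw [hgs]
        simp [Function.iterate_succ_apply']
      rw [this]
      exact (hstep (gs n).1 (gs n).2).choose_spec.1
    have ltrans : ∀ {a b c : X}, lt a b → lt b c → lt a c := by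
      rintro a b c ⟨h1', hne1⟩ ⟨h2', hne2⟩
      refine ⟨le_trans' hband hc hl h1' h2', fun h => ?_⟩
      subst h
      exact hne1 (le_antisymm' hband hc hl h1' h2')
    have hdlt : ∀ n m : ℕ, n < m → lt (gs m).1 (gs n).1 := by
      intro n m hnm
      induction m with
      | zero => omega
      | succ m ih =>
        rcases Nat.lt_or_ge n m with h | h
        · exact ltrans (hdec m) (ih h)
        · have : n = m := by omega
          subst this
          exact hdec n
    refine ⟨fun n => (gs n).1, Or.inr (fun n m hnm => ?_)⟩
    obtain ⟨h1', hne1⟩ := hdlt n m hnm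
    exact ⟨by rw [hc]; exact h1', fun h => hne1 h.symm⟩

end Seq
end Stmt8Aux

namespace Stmt8Aux
set_option linter.unusedSectionVars false
variable {X : Type*} [Semigroup X]

section Infinite
variable (hband : ∀ a : X, a * a = a) (hc : ∀ a b : X, a * b = b * a)
  (hl : ∀ a b : X, a * b = a ∨ a * b = b)

include hband

theorem no_comm_inc (f : ℕ → X) (hf : ∀ n m : ℕ, n < m → f n * f m = f n ∧ f n ≠ f m) :
    ∃ 𝒜 ℬ : Set (Set X), IsMaxLinkedUp 𝒜 ∧ IsMaxLinkedUp ℬ ∧ upMul 𝒜 ℬ ≠ upMul ℬ 𝒜 := by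
  have hinj : Function.Injective f := by
    intro n m h
    by_contra hne
    rcases Nat.lt_or_ge n m with h' | h'
    · exact (hf n m h').2 h
    · exact (hf m n (by omega)).2 h.symm
  have hprod : ∀ n m : ℕ, n ≤ m → f n * f m = f n := by
    intro n m h
    rcases Nat.eq_or_lt_of_le h with rfl | h'
    · exact hband (f n)
    · exact (hf n m h').1
  set T : ℕ → Set X := fun n => {a | ∃ m, n ≤ m ∧ a = f m} with hT
  set E : Set X := {a | ∃ k, a = f (2*k)} with hE
  set O : Set X := {a | ∃ k, a = f (2*k+1)} with hO
  have hTlink : ∀ n n' : ℕ, (T n ∩ T n').Nonempty :=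
    fun n n' => ⟨f (max n n'), ⟨max n n', le_max_left _ _, rfl⟩, ⟨max n n', le_max_right _ _, rfl⟩⟩
  have hTE : ∀ n, (T n ∩ E).Nonempty := fun n => ⟨f (2*n), ⟨2*n, by omega, rfl⟩, ⟨n, rfl⟩⟩
  have hTO : ∀ n, (T n ∩ O).Nonempty := fun n => ⟨f (2*n+1), ⟨2*n+1, by omega, rfl⟩, ⟨n, rfl⟩⟩
  have hseed : ∀ W : Set X, (∀ n, (T n ∩ W).Nonempty) → W.Nonempty →
      IsLinkedUp {S : Set X | (∃ n, T n ⊆ S) ∨ W ⊆ S} := by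
    intro W hTW hWne
    constructor
    constructor
    · rintro A (⟨n, h⟩ | h)
      · exact ⟨f n, h ⟨n, le_refl n, rfl⟩⟩
      · exact hWne.mono h
    · rintro A (⟨n, h⟩ | h) B hAB
      · exact Or.inl ⟨n, h.trans hAB⟩
      · exact Or.inr (h.trans hAB)
    · rintro A (⟨n, h⟩ | h) B (⟨n', h'⟩ | h')
      · obtain ⟨w, hw1, hw2⟩ := hTlink n n'
        exact ⟨w, h hw1, h' hw2⟩
      · obtain ⟨w, hw1, hw2⟩ := hTW n
        exact ⟨w, h hw1, h' hw2⟩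
      · obtain ⟨w, hw1, hw2⟩ := hTW n'
        exact ⟨w, h hw2, h' hw1⟩
      · obtain ⟨w, hw⟩ := hWne
        exact ⟨w, h hw, h' hw⟩
  obtain ⟨𝒜, h𝒜, h𝒜sub⟩ := exists_maxLinked (hseed E hTE ⟨f 0, ⟨0, by norm_num⟩⟩)
  obtain ⟨ℬ, hℬ, hℬsub⟩ := exists_maxLinked (hseed O hTO ⟨f 1, ⟨0, by norm_num⟩⟩)
  have hAup := h𝒜.1.1
  have hBup := hℬ.1.1
  have hTA : ∀ n, T n ∈ 𝒜 := fun n => h𝒜sub (Or.inl ⟨n, Set.Subset.refl _⟩)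
  have hTB : ∀ n, T n ∈ ℬ := fun n => hℬsub (Or.inl ⟨n, Set.Subset.refl _⟩)
  have hEA : E ∈ 𝒜 := h𝒜sub (Or.inr (Set.Subset.refl _))
  have hOB : O ∈ ℬ := hℬsub (Or.inr (Set.Subset.refl _))
  refine ⟨𝒜, ℬ, h𝒜, hℬ, fun heq => ?_⟩
  have claim1 : O ∈ upMul ℬ 𝒜 := by
    rw [mem_upMul_iff hBup hAup]
    refine hBup.2 O hOB _ ?_
    rintro a ⟨k, rfl⟩
    show {b | f (2*k+1) * b ∈ O} ∈ 𝒜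
    refine hAup.2 (T (2*k+1)) (hTA _) _ ?_
    rintro b ⟨m, hm, rfl⟩
    show f (2*k+1) * f m ∈ O
    rw [hprod _ _ hm]
    exact ⟨k, rfl⟩
  have claim2 : O ∉ upMul 𝒜 ℬ := by
    rw [mem_upMul_iff hAup hBup]
    intro hU
    obtain ⟨a, haU, k, rfl⟩ := h𝒜.1.2 _ hU E hEA
    obtain ⟨b, hbD, m, hm, rfl⟩ := hℬ.1.2 _ haU (T (2*k)) (hTB _)
    have : f (2*k) * f m ∈ O := hbD
    rw [hprod _ _ hm] at this
    obtain ⟨j, hj⟩ := this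
    have := hinj hj
    omega
  exact claim2 (heq ▸ claim1)

theorem no_comm_dec (f : ℕ → X) (hf : ∀ n m : ℕ, n < m → f n * f m = f m ∧ f n ≠ f m) :
    ∃ 𝒜 ℬ : Set (Set X), IsMaxLinkedUp 𝒜 ∧ IsMaxLinkedUp ℬ ∧ upMul 𝒜 ℬ ≠ upMul ℬ 𝒜 := by
  have hinj : Function.Injective f := by
    intro n m h
    by_contra hne
    rcases Nat.lt_or_ge n m with h' | h'
    · exact (hf n m h').2 h
    · exact (hf m n (by omega)).2 h.symm
  have hprod : ∀ n m : ℕ, n ≤ m → f n * f m = f m := by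
    intro n m h
    rcases Nat.eq_or_lt_of_le h with rfl | h'
    · exact hband (f n)
    · exact (hf n m h').1
  set OT : ℕ → Set X := fun n => {a | ∃ m, n ≤ m ∧ Odd m ∧ a = f m} with hOT
  set ET : ℕ → Set X := fun n => {a | ∃ m, n ≤ m ∧ Even m ∧ a = f m} with hET
  have hOlink : ∀ n n' : ℕ, (OT n ∩ OT n').Nonempty := by
    intro n n'
    refine ⟨f (2 * max n n' + 1), ⟨2 * max n n' + 1, ?_, ⟨max n n', by omega⟩, rfl⟩,
      ⟨2 * max n n' + 1, ?_, ⟨max n n', by omega⟩, rfl⟩⟩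
    · have := le_max_left n n'; omega
    · have := le_max_right n n'; omega
  have hElink : ∀ n n' : ℕ, (ET n ∩ ET n').Nonempty := by
    intro n n'
    refine ⟨f (2 * max n n'), ⟨2 * max n n', ?_, ⟨max n n', by omega⟩, rfl⟩,
      ⟨2 * max n n', ?_, ⟨max n n', by omega⟩, rfl⟩⟩
    · have := le_max_left n n'; omega
    · have := le_max_right n n'; omega
  have hseed : ∀ G : ℕ → Set X, (∀ n, (G n).Nonempty) → (∀ n n', (G n ∩ G n').Nonempty) →
      IsLinkedUp {S : Set X | ∃ n, G n ⊆ S} := by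
    intro G hne hlink
    constructor
    constructor
    · rintro A ⟨n, h⟩
      exact (hne n).mono h
    · rintro A ⟨n, h⟩ B hAB
      exact ⟨n, h.trans hAB⟩
    · rintro A ⟨n, h⟩ B ⟨n', h'⟩
      obtain ⟨w, hw1, hw2⟩ := hlink n n'
      exact ⟨w, h hw1, h' hw2⟩
  obtain ⟨𝒜, h𝒜, h𝒜sub⟩ := exists_maxLinked (hseed OT
    (fun n => ⟨f (2*n+1), 2*n+1, by omega, ⟨n, by omega⟩, rfl⟩) hOlink)
  obtain ⟨ℬ, hℬ, hℬsub⟩ := exists_maxLinked (hseed ET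
    (fun n => ⟨f (2*n), 2*n, by omega, ⟨n, by omega⟩, rfl⟩) hElink)
  have hAup := h𝒜.1.1
  have hBup := hℬ.1.1
  have hOA : ∀ n, OT n ∈ 𝒜 := fun n => h𝒜sub ⟨n, Set.Subset.refl _⟩
  have hEB : ∀ n, ET n ∈ ℬ := fun n => hℬsub ⟨n, Set.Subset.refl _⟩
  refine ⟨𝒜, ℬ, h𝒜, hℬ, fun heq => ?_⟩
  have claim1 : ET 0 ∈ upMul 𝒜 ℬ := by
    rw [mem_upMul_iff hAup hBup]
    refine hAup.2 (OT 0) (hOA 0) _ ?_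
    rintro a ⟨m, -, hodd, rfl⟩
    show {b | f m * b ∈ ET 0} ∈ ℬ
    refine hBup.2 (ET (m+1)) (hEB _) _ ?_
    rintro b ⟨m', hm', heven, rfl⟩
    show f m * f m' ∈ ET 0
    rw [hprod _ _ (by omega)]
    exact ⟨m', by omega, heven, rfl⟩
  have claim2 : ET 0 ∉ upMul ℬ 𝒜 := by
    rw [mem_upMul_iff hBup hAup]
    intro hU
    obtain ⟨a, haU, j, -, hjeven, rfl⟩ := hℬ.1.2 _ hU (ET 0) (hEB 0)
    obtain ⟨b, hbD, m, hm, hmodd, rfl⟩ := h𝒜.1.2 _ haU (OT (j+1)) (hOA _)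
    have : f j * f m ∈ ET 0 := hbD
    rw [hprod _ _ (by omega)] at this
    obtain ⟨m', -, hm'even, hm'⟩ := this
    have := hinj hm'
    subst this
    rw [Nat.even_iff] at hm'even
    rw [Nat.odd_iff] at hmodd
    omega
  exact claim2 (heq ▸ claim1)

include hc hl

theorem no_comm_of_infinite (hinf : ¬ Finite X) :
    ∃ 𝒜 ℬ : Set (Set X), IsMaxLinkedUp 𝒜 ∧ IsMaxLinkedUp ℬ ∧ upMul 𝒜 ℬ ≠ upMul ℬ 𝒜 := by
  obtain ⟨f, hf | hf⟩ := exists_mono_seq hband hc hl hinf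
  · exact no_comm_inc hband f hf
  · exact no_comm_dec hband f hf

end Infinite
end Stmt8Aux

namespace Stmt8Aux
set_option linter.unusedSectionVars false
variable {X : Type*} [Semigroup X]

theorem upMul_up1 (x y : X) : upMul (up1 x) (up1 y) = up1 (x * y) := by
  ext C
  rw [mem_upMul_iff (up1_linked x).1 (up1_linked y).1]
  exact Iff.rfl

theorem comm_of_up1 {x y : X} (h : upMul (up1 x) (up1 y) = upMul (up1 y) (up1 x)) :
    x * y = y * x := by
  rw [upMul_up1, upMul_up1] at h
  have : ({x * y} : Set X) ∈ up1 (y * x) := h ▸ rfl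
  exact (Set.mem_singleton_iff.mp this).symm

end Stmt8Aux


open Stmt8Aux

/-- For a band `X` TFAE: (1) `X` is a finite linear semilattice; (2) `υ(X)` is commutative;
(3) `N₂(X)` is commutative; (4) `λ(X)` is commutative and `(1,2)`-Clifford. -/
theorem stmt8 (X : Type*) [Semigroup X] (hband : ∀ x : X, x * x = x) :
    List.TFAE [
      Finite X ∧ (∀ x y : X, x * y = y * x) ∧ (∀ x y : X, x * y = x ∨ x * y = y),
      ∀ 𝒜 ℬ : Set (Set X), IsUpfamily 𝒜 → IsUpfamily ℬ → upMul 𝒜 ℬ = upMul ℬ 𝒜,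
      ∀ 𝒜 ℬ : Set (Set X), IsLinkedUp 𝒜 → IsLinkedUp ℬ → upMul 𝒜 ℬ = upMul ℬ 𝒜,
      (∀ 𝒜 ℬ : Set (Set X), IsMaxLinkedUp 𝒜 → IsMaxLinkedUp ℬ → upMul 𝒜 ℬ = upMul ℬ 𝒜) ∧
        (∀ 𝒜 : Set (Set X), IsMaxLinkedUp 𝒜 →
          upMul 𝒜 𝒜 = upMul (upMul 𝒜 𝒜) 𝒜 → 𝒜 = upMul 𝒜 𝒜)] := by
  tfae_have 1 → 2 := by
    rintro ⟨hfin, hc, hl⟩ 𝒜 ℬ hA hB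
    exact comm_of_finite_chain hband hc hl hA hB
  tfae_have 2 → 3 := by
    intro h 𝒜 ℬ hA hB
    exact h 𝒜 ℬ hA.1 hB.1
  tfae_have 3 → 1 := by
    intro h
    have hc : ∀ x y : X, x * y = y * x := fun x y =>
      comm_of_up1 (h _ _ (up1_linked x) (up1_linked y))
    have hl : ∀ x y : X, x * y = x ∨ x * y = y := by
      intro x y
      by_contra hne
      push_neg at hne
      obtain ⟨𝒜, ℬ, hA, hB, hcon⟩ := no_comm_of_not_linear hband hc hne.1 hne.2
      exact hcon (h 𝒜 ℬ hA hB)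
    refine ⟨?_, hc, hl⟩
    by_contra hinf
    obtain ⟨𝒜, ℬ, hA, hB, hcon⟩ := no_comm_of_infinite hband hc hl hinf
    exact hcon (h 𝒜 ℬ hA.1 hB.1)
  tfae_have 1 → 4 := by
    rintro ⟨hfin, hc, hl⟩
    constructor
    · intro 𝒜 ℬ hA hB
      exact comm_of_finite_chain hband hc hl hA.1.1 hB.1.1
    · intro 𝒜 hA _
      exact (sq_of_maxLinked hband hc hl hA).symm
  tfae_have 4 → 1 := by
    rintro ⟨h4c, h4cl⟩
    have hc : ∀ x y : X, x * y = y * x := fun x y =>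
      comm_of_up1 (h4c _ _ (up1_max x) (up1_max y))
    have hl : ∀ x y : X, x * y = x ∨ x * y = y := by
      intro x y
      by_contra hne
      push_neg at hne
      obtain ⟨𝒜, hA, h23, hne'⟩ := clifford_counterexample hband hc hne.1 hne.2
      exact hne' (h4cl 𝒜 hA h23)
    refine ⟨?_, hc, hl⟩
    by_contra hinf
    obtain ⟨𝒜, ℬ, hA, hB, hcon⟩ := no_comm_of_infinite hband hc hl hinf
    exact hcon (h4c 𝒜 ℬ hA hB)
  tfae_finish
end

section
/- If X is a semilattice whose superextension λ(X) is commutative, then for every z ∈ X the lower set ↓z = {x ∈ X : x·z = x} is a linear subsemilattice of X (i.e., X is a tree). -/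
open Set

/-- A linear subsemilattice of `X`: a subset closed under multiplication on which the
operation is linear (`x·y ∈ {x,y}`). -/
def IsLinSub {X : Type*} [Mul X] (L : Set X) : Prop :=
  (∀ x ∈ L, ∀ y ∈ L, x * y ∈ L) ∧ ∀ x ∈ L, ∀ y ∈ L, x * y = x ∨ x * y = y

/-- A maximal linear subsemilattice of `X`. -/
def IsMaxLinSub {X : Type*} [Mul X] (L : Set X) : Prop :=
  IsLinSub L ∧ ∀ L' : Set X, IsLinSub L' → L ⊆ L' → L = L'


/-- The "triangle" upfamily: sets containing at least two of `a, b, c`. -/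
def tri {X : Type*} (a b c : X) : Set (Set X) :=
  {A | (a ∈ A ∧ b ∈ A) ∨ (a ∈ A ∧ c ∈ A) ∨ (b ∈ A ∧ c ∈ A)}

theorem tri_max {X : Type*} (a b c : X) : IsMaxLinkedUp (tri a b c) := by
  have hup : IsUpfamily (tri a b c) := by
    constructor
    · rintro A (⟨h, _⟩ | ⟨h, _⟩ | ⟨h, _⟩) <;> exact ⟨_, h⟩
    · rintro A hA B hAB
      rcases hA with ⟨h1, h2⟩ | ⟨h1, h2⟩ | ⟨h1, h2⟩
      · exact Or.inl ⟨hAB h1, hAB h2⟩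
      · exact Or.inr (Or.inl ⟨hAB h1, hAB h2⟩)
      · exact Or.inr (Or.inr ⟨hAB h1, hAB h2⟩)
  have hlk : IsLinkedUp (tri a b c) := by
    refine ⟨hup, ?_⟩
    rintro A hA B hB
    rcases hA with ⟨h1, h2⟩ | ⟨h1, h2⟩ | ⟨h1, h2⟩ <;>
      rcases hB with ⟨g1, g2⟩ | ⟨g1, g2⟩ | ⟨g1, g2⟩
    all_goals first
      | exact ⟨a, h1, g1⟩
      | exact ⟨b, h2, g1⟩
      | exact ⟨c, h2, g2⟩
      | exact ⟨b, h1, g2⟩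
  refine ⟨hlk, ?_⟩
  intro ℬ hℬ hsub
  refine Set.Subset.antisymm hsub ?_
  intro C hC
  have hab : (C ∩ ({a, b} : Set X)).Nonempty :=
    hℬ.2 C hC _ (hsub (Or.inl ⟨by simp, by simp⟩))
  have hac : (C ∩ ({a, c} : Set X)).Nonempty :=
    hℬ.2 C hC _ (hsub (Or.inr (Or.inl ⟨by simp, by simp⟩)))
  have hbc : (C ∩ ({b, c} : Set X)).Nonempty :=
    hℬ.2 C hC _ (hsub (Or.inr (Or.inr ⟨by simp, by simp⟩)))
  have h1 : a ∈ C ∨ b ∈ C := by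
    obtain ⟨p, hpC, hp⟩ := hab
    rcases hp with rfl | rfl
    · exact Or.inl hpC
    · exact Or.inr hpC
  have h2 : a ∈ C ∨ c ∈ C := by
    obtain ⟨p, hpC, hp⟩ := hac
    rcases hp with rfl | rfl
    · exact Or.inl hpC
    · exact Or.inr hpC
  have h3 : b ∈ C ∨ c ∈ C := by
    obtain ⟨p, hpC, hp⟩ := hbc
    rcases hp with rfl | rfl
    · exact Or.inl hpC
    · exact Or.inr hpC
  show (a ∈ C ∧ b ∈ C) ∨ (a ∈ C ∧ c ∈ C) ∨ (b ∈ C ∧ c ∈ C)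
  tauto

/-- If `X` is a semilattice whose superextension `λ(X)` is commutative, then for every
`z ∈ X` the lower set `↓z = {x : x·z = x}` is a linear subsemilattice of `X`. -/
theorem stmt10 (X : Type*) [CommSemigroup X] (hidem : ∀ x : X, x * x = x)
    (hcomm : ∀ 𝒜 ℬ : Set (Set X), IsMaxLinkedUp 𝒜 → IsMaxLinkedUp ℬ →
      upMul 𝒜 ℬ = upMul ℬ 𝒜) :
    ∀ z : X, IsLinSub {x : X | x * z = x} := by
  intro z
  constructor
  · intro x hx y hy
    simp only [Set.mem_setOf_eq] at *
    rw [mul_assoc, hy]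
  · intro x hx y hy
    simp only [Set.mem_setOf_eq] at hx hy
    by_contra h
    push_neg at h
    obtain ⟨h1, h2⟩ := h
    classical
    set w := x * y with hw
    have hxy : x ≠ y := fun he => h2 (by rw [hw, he, hidem])
    have hxw : x * w = w := by rw [hw, ← mul_assoc, hidem]
    have hyw : y * w = w := by
      rw [hw, mul_comm x y, ← mul_assoc, hidem, mul_comm]
    have hkey := hcomm (tri x y z) (tri x y w) (tri_max x y z) (tri_max x y w)
    have hin : ({w} : Set X) ∈ upMul (tri x y z) (tri x y w) := by
      refine ⟨{x, y}, Or.inl ⟨by simp, by simp⟩,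
        fun p => if p = x then ({y, w} : Set X) else ({x, w} : Set X), ?_, ?_⟩
      · intro p hp
        show (if p = x then ({y, w} : Set X) else ({x, w} : Set X)) ∈ tri x y w
        by_cases hpx : p = x
        · rw [if_pos hpx]
          exact Or.inr (Or.inr ⟨by simp, by simp⟩)
        · rw [if_neg hpx]
          exact Or.inr (Or.inl ⟨by simp, by simp⟩)
      · intro c hc
        simp only [Set.mem_iUnion, Set.mem_image] at hc
        obtain ⟨p, hp, b, hb, hpb⟩ := hc
        have hb' : b ∈ (if p = x then ({y, w} : Set X) else ({x, w} : Set X)) := hb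
        rw [Set.mem_singleton_iff, ← hpb]
        rcases hp with hpx | hpy
        · rw [if_pos hpx] at hb'
          simp only [Set.mem_insert_iff, Set.mem_singleton_iff] at hb'
          rcases hb' with hby | hbw
          · rw [hpx, hby]
          · rw [hpx, hbw]; exact hxw
        · rw [if_neg (fun he => hxy (he.symm.trans hpy))] at hb'
          simp only [Set.mem_insert_iff, Set.mem_singleton_iff] at hb'
          rcases hb' with hbx | hbw
          · rw [hpy, hbx, mul_comm]
          · rw [hpy, hbw]; exact hyw
    rw [hkey] at hin
    obtain ⟨A, hA, Bf, hBf, hsub⟩ := hin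
    have hxyA : x ∈ A ∨ y ∈ A := by
      rcases hA with ⟨h, _⟩ | ⟨h, _⟩ | ⟨h, _⟩
      · exact Or.inl h
      · exact Or.inl h
      · exact Or.inr h
    rcases hxyA with hxA | hyA
    · have hB := hBf x hxA
      have hb : x ∈ Bf x ∨ z ∈ Bf x := by
        rcases hB with ⟨h, _⟩ | ⟨h, _⟩ | ⟨_, h⟩
        · exact Or.inl h
        · exact Or.inl h
        · exact Or.inr h
      rcases hb with hb | hb
      · have : x * x ∈ ({w} : Set X) := by
          apply hsub
          simp only [Set.mem_iUnion, Set.mem_image]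
          exact ⟨x, hxA, x, hb, rfl⟩
        rw [hidem] at this
        exact h1 this.symm
      · have : x * z ∈ ({w} : Set X) := by
          apply hsub
          simp only [Set.mem_iUnion, Set.mem_image]
          exact ⟨x, hxA, z, hb, rfl⟩
        rw [hx] at this
        exact h1 this.symm
    · have hB := hBf y hyA
      have hb : y ∈ Bf y ∨ z ∈ Bf y := by
        rcases hB with ⟨_, h⟩ | ⟨_, h⟩ | ⟨h, _⟩
        · exact Or.inl h
        · exact Or.inr h
        · exact Or.inl h
      rcases hb with hb | hb
      · have : y * y ∈ ({w} : Set X) := by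
          apply hsub
          simp only [Set.mem_iUnion, Set.mem_image]
          exact ⟨y, hyA, y, hb, rfl⟩
        rw [hidem] at this
        exact h2 this.symm
      · have : y * z ∈ ({w} : Set X) := by
          apply hsub
          simp only [Set.mem_iUnion, Set.mem_image]
          exact ⟨y, hyA, z, hb, rfl⟩
        rw [hy] at this
        exact h2 this.symm
end

section
/- For a semigroup X the following conditions are equivalent: (1) X is a finite linear semilattice; (2) υ(X) is a semilattice; (3) λ(X) is a semilattice; (4) φ(X) is a semilattice. -/
open Set

section Aux
variable {X : Type*} [Semigroup X]

lemma upMul_key {𝒜 ℬ : Set (Set X)} {C : Set X} (h : C ∈ upMul 𝒜 ℬ) :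
    ∃ A ∈ 𝒜, ∃ Bf : X → Set X, (∀ x ∈ A, Bf x ∈ ℬ) ∧ ∀ a ∈ A, ∀ b ∈ Bf a, a * b ∈ C := by
  obtain ⟨A, hA, Bf, hBf, hsub⟩ := h
  exact ⟨A, hA, Bf, hBf, fun a ha b hb => hsub (Set.mem_biUnion ha ⟨b, hb, rfl⟩)⟩

lemma upMul_mem {𝒜 ℬ : Set (Set X)} {C : Set X} {A : Set X} (hA : A ∈ 𝒜) (Bf : X → Set X)
    (hBf : ∀ x ∈ A, Bf x ∈ ℬ) (h : ∀ a ∈ A, ∀ b ∈ Bf a, a * b ∈ C) : C ∈ upMul 𝒜 ℬ :=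
  ⟨A, hA, Bf, hBf, Set.iUnion₂_subset fun a ha =>
    Set.image_subset_iff.2 fun b hb => h a ha b hb⟩

variable (hc : ∀ x y : X, x * y = y * x) (hi : ∀ x : X, x * x = x)
  (hl : ∀ x y : X, x * y = x ∨ x * y = y)

include hc hi hl in


lemma exists_absorb (s : Finset X) (hs : s.Nonempty) : ∃ a ∈ s, ∀ b ∈ s, b * a = a := by
  classical
  induction s using Finset.induction_on with
  | empty => exact absurd hs (by simp)
  | @insert x s hx ih =>
    rcases s.eq_empty_or_nonempty with rfl | hsne
    · exact ⟨x, by simp, fun b hb => by simp at hb; rw [hb, hi]⟩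
    · obtain ⟨a, ha, hmax⟩ := ih hsne
      rcases hl x a with h | h
      · refine ⟨x, Finset.mem_insert_self _ _, fun b hb => ?_⟩
        rcases Finset.mem_insert.1 hb with rfl | hb
        · exact hi b
        · have hax : a * x = x := by rw [hc]; exact h
          calc b * x = b * (a * x) := by rw [hax]
            _ = b * a * x := (mul_assoc _ _ _).symm
            _ = a * x := by rw [hmax b hb]
            _ = x := hax
      · refine ⟨a, Finset.mem_insert_of_mem ha, fun b hb => ?_⟩
        rcases Finset.mem_insert.1 hb with rfl | hb
        · exact h
        · exact hmax b hb

include hc hi hl in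
lemma exists_coabsorb (s : Finset X) (hs : s.Nonempty) : ∃ a ∈ s, ∀ b ∈ s, a * b = b := by
  classical
  induction s using Finset.induction_on with
  | empty => exact absurd hs (by simp)
  | @insert x s hx ih =>
    rcases s.eq_empty_or_nonempty with rfl | hsne
    · exact ⟨x, by simp, fun b hb => by simp at hb; rw [hb, hi]⟩
    · obtain ⟨a, ha, hmin⟩ := ih hsne
      rcases hl a x with h | h
      · refine ⟨x, Finset.mem_insert_self _ _, fun b hb => ?_⟩
        rcases Finset.mem_insert.1 hb with rfl | hb
        · exact hi b
        · calc x * b = x * (a * b) := by rw [hmin b hb]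
            _ = x * a * b := (mul_assoc _ _ _).symm
            _ = a * b := by rw [hc x a, h]
            _ = b := hmin b hb
      · refine ⟨a, Finset.mem_insert_of_mem ha, fun b hb => ?_⟩
        rcases Finset.mem_insert.1 hb with rfl | hb
        · exact h
        · exact hmin b hb

end Aux

-- appended after /tmp/a.lean content
section Main
variable {X : Type*} [Semigroup X]

lemma upMul_self (hl : ∀ x y : X, x * y = x ∨ x * y = y)
    {𝒜 : Set (Set X)} (h𝒜 : IsUpfamily 𝒜) : upMul 𝒜 𝒜 = 𝒜 := by
  apply Set.Subset.antisymm
  · intro C hC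
    obtain ⟨A, hA, Bf, hBf, hkey⟩ := upMul_key hC
    by_cases hall : ∀ a ∈ A, a ∈ C
    · exact h𝒜.2 A hA C hall
    · push_neg at hall
      obtain ⟨a, ha, haC⟩ := hall
      refine h𝒜.2 (Bf a) (hBf a ha) C fun b hb => ?_
      rcases hl a b with h | h
      · exact absurd (h ▸ hkey a ha b hb) haC
      · exact h ▸ hkey a ha b hb
  · intro C hC
    exact upMul_mem hC (fun _ => C) (fun _ _ => hC)
      (fun a ha b hb => by rcases hl a b with h | h <;> rw [h] <;> assumption)

lemma upMul_comm_sub [Finite X] (hc : ∀ x y : X, x * y = y * x) (hi : ∀ x : X, x * x = x)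
    (hl : ∀ x y : X, x * y = x ∨ x * y = y)
    {𝒜 ℬ : Set (Set X)} (h𝒜 : IsUpfamily 𝒜) (hℬ : IsUpfamily ℬ) :
    upMul 𝒜 ℬ ⊆ upMul ℬ 𝒜 := by
  classical
  intro C hC
  obtain ⟨A, hA, Bf, hBf, hkey⟩ := upMul_key hC
  have hAfin : A.Finite := Set.toFinite A
  have hAne : A.Nonempty := h𝒜.1 A hA
  set S : Set X := {a ∈ A | a ∉ C} with hSdef
  rcases S.eq_empty_or_nonempty with hS | hS
  · -- A ⊆ C : use the minimum of A
    have hAC : ∀ a ∈ A, a ∈ C := by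
      intro a ha; by_contra hcon
      have haS : a ∈ S := ⟨ha, hcon⟩
      rw [hS] at haS
      exact haS
    obtain ⟨a', ha'mem, hmin⟩ := exists_coabsorb hc hi hl hAfin.toFinset
      (by rwa [Set.Finite.toFinset_nonempty])
    rw [Set.Finite.mem_toFinset] at ha'mem
    have hmin' : ∀ b ∈ A, a' * b = b := fun b hb => hmin b (hAfin.mem_toFinset.2 hb)
    refine upMul_mem (hBf a' ha'mem) (fun _ => A) (fun _ _ => hA) fun b hb a ha => ?_
    rw [hc]
    rcases hl a b with h | h
    · rw [h]; exact hAC a ha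
    · have hab : a' * b = b := by
        calc a' * b = a' * (a * b) := by rw [h]
          _ = (a' * a) * b := (mul_assoc _ _ _).symm
          _ = a * b := by rw [hmin' a ha]
          _ = b := h
      rw [h, ← hab]
      exact hkey a' ha'mem b hb
  · -- take the maximum a₀ of S
    have hSfin : S.Finite := Set.toFinite S
    obtain ⟨a₀, ha₀mem, hmax⟩ := exists_absorb hc hi hl hSfin.toFinset
      (by rwa [Set.Finite.toFinset_nonempty])
    rw [Set.Finite.mem_toFinset] at ha₀mem
    obtain ⟨ha₀A, ha₀C⟩ := ha₀mem
    have hmax' : ∀ b ∈ S, b * a₀ = a₀ := fun b hb => hmax b (hSfin.mem_toFinset.2 hb)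
    have hB' : ∀ b ∈ Bf a₀, a₀ * b = b ∧ b ∈ C := by
      intro b hb
      rcases hl a₀ b with h | h
      · exact absurd (h ▸ hkey a₀ ha₀A b hb) ha₀C
      · exact ⟨h, h ▸ hkey a₀ ha₀A b hb⟩
    refine upMul_mem (hBf a₀ ha₀A) (fun _ => A) (fun _ _ => hA) fun b hb a ha => ?_
    rw [hc]
    rcases hl a b with h | h
    · -- a * b = a : show a ∈ C
      rw [h]
      by_contra hcon
      have haS : a ∈ S := ⟨ha, hcon⟩
      have h1 : a * a₀ = a₀ := hmax' a haS
      have h2 : a₀ * b = b := (hB' b hb).1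
      have : b = a := by
        calc b = a₀ * b := h2.symm
          _ = (a * a₀) * b := by rw [h1]
          _ = a * (a₀ * b) := mul_assoc _ _ _
          _ = a * b := by rw [h2]
          _ = a := h
      exact hcon (this ▸ (hB' b hb).2)
    · rw [h]; exact (hB' b hb).2
end Main

section Small
variable {X : Type*} [Semigroup X]

def princ (x : X) : Set (Set X) := {A | x ∈ A}

lemma isFilterUp_princ (x : X) : IsFilterUp (princ x) :=
  ⟨⟨fun _ hA => ⟨x, hA⟩, fun _ hA _ hAB => hAB hA⟩, fun _ hA _ hB => ⟨hA, hB⟩⟩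

lemma isMaxLinkedUp_princ (x : X) : IsMaxLinkedUp (princ x) := by
  refine ⟨⟨(isFilterUp_princ x).1, fun A hA B hB => ⟨x, hA, hB⟩⟩, fun ℬ hℬ hsub => ?_⟩
  refine Set.Subset.antisymm hsub fun B hB => ?_
  obtain ⟨y, hy1, hy2⟩ := hℬ.2 B hB {x} (hsub rfl)
  rwa [hy2] at hy1

lemma upMul_princ (x y : X) : upMul (princ x) (princ y) = princ (x * y) := by
  apply Set.Subset.antisymm
  · intro C hC
    obtain ⟨A, hA, Bf, hBf, hkey⟩ := upMul_key hC
    exact hkey x hA y (hBf x hA)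
  · intro C hC
    have hA : ({x} : Set X) ∈ princ x := rfl
    have hB : ∀ w ∈ ({x} : Set X), ({y} : Set X) ∈ princ y := fun _ _ => rfl
    refine upMul_mem hA (fun _ => {y}) hB ?_
    intro a ha b hb
    rw [Set.mem_singleton_iff] at ha hb
    subst ha; subst hb
    exact hC

lemma princ_injective {x y : X} (h : princ x = princ y) : x = y := by
  have : ({x} : Set X) ∈ princ y := h ▸ (rfl : ({x} : Set X) ∈ princ x)
  exact this.symm

/-- pair filter used for linearity from filters -/
lemma linear_of_filters
    (hidem : ∀ 𝒜 : Set (Set X), IsFilterUp 𝒜 → upMul 𝒜 𝒜 = 𝒜) (x y : X) :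
    x * y = x ∨ x * y = y := by
  set F : Set (Set X) := {A | x ∈ A ∧ y ∈ A} with hF
  have hFup : IsFilterUp F :=
    ⟨⟨fun A hA => ⟨x, hA.1⟩, fun A hA B hAB => ⟨hAB hA.1, hAB hA.2⟩⟩,
      fun A hA B hB => ⟨⟨hA.1, hB.1⟩, ⟨hA.2, hB.2⟩⟩⟩
  have hxy : ({x, y} : Set X) ∈ upMul F F := by
    rw [hidem F hFup]
    exact ⟨Set.mem_insert x {y}, Set.mem_insert_of_mem x rfl⟩
  obtain ⟨A, hA, Bf, hBf, hkey⟩ := upMul_key hxy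
  exact hkey x hA.1 y (hBf x hA.1).2

/-- triangle family used for linearity from maximal linked families -/
lemma linear_of_maxLinked
    (hidem : ∀ 𝒜 : Set (Set X), IsMaxLinkedUp 𝒜 → upMul 𝒜 𝒜 = 𝒜)
    (hc : ∀ x y : X, x * y = y * x) (hi : ∀ x : X, x * x = x) (x y : X) :
    x * y = x ∨ x * y = y := by
  classical
  by_contra hcon
  push_neg at hcon
  obtain ⟨hzx, hzy⟩ := hcon
  set z := x * y with hz
  have hxy : x ≠ y := fun h => hzy (by rw [hz, h, hi])
  have hxz : x * z = z := by rw [hz, ← mul_assoc, hi]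
  have hyz : y * z = z := by rw [hz, hc x y, ← mul_assoc, hi]
  set T : Set (Set X) := {A | (x ∈ A ∧ y ∈ A) ∨ (x ∈ A ∧ z ∈ A) ∨ (y ∈ A ∧ z ∈ A)} with hT
  have hTup : IsUpfamily T := by
    constructor
    · rintro A (⟨h1, _⟩ | ⟨h1, _⟩ | ⟨h1, _⟩) <;> exact ⟨_, h1⟩
    · rintro A (⟨h1, h2⟩ | ⟨h1, h2⟩ | ⟨h1, h2⟩) B hAB
      · exact Or.inl ⟨hAB h1, hAB h2⟩
      · exact Or.inr (Or.inl ⟨hAB h1, hAB h2⟩)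
      · exact Or.inr (Or.inr ⟨hAB h1, hAB h2⟩)
  have hTlinked : IsLinkedUp T := by
    refine ⟨hTup, ?_⟩
    rintro A (⟨h1, h2⟩ | ⟨h1, h2⟩ | ⟨h1, h2⟩) B (⟨h3, h4⟩ | ⟨h3, h4⟩ | ⟨h3, h4⟩)
    exacts [⟨x, h1, h3⟩, ⟨x, h1, h3⟩, ⟨y, h2, h3⟩, ⟨x, h1, h3⟩, ⟨x, h1, h3⟩,
      ⟨z, h2, h4⟩, ⟨y, h1, h4⟩, ⟨z, h2, h4⟩, ⟨y, h1, h3⟩]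
  have hTmax : IsMaxLinkedUp T := by
    refine ⟨hTlinked, fun ℬ hℬ hsub => ?_⟩
    refine Set.Subset.antisymm hsub fun B hB => ?_
    have m1 : (B ∩ ({x, y} : Set X)).Nonempty :=
      hℬ.2 B hB _ (hsub (Or.inl ⟨Set.mem_insert _ _, Set.mem_insert_of_mem _ rfl⟩))
    have m2 : (B ∩ ({x, z} : Set X)).Nonempty :=
      hℬ.2 B hB _ (hsub (Or.inr (Or.inl ⟨Set.mem_insert _ _, Set.mem_insert_of_mem _ rfl⟩)))
    have m3 : (B ∩ ({y, z} : Set X)).Nonempty :=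
      hℬ.2 B hB _ (hsub (Or.inr (Or.inr ⟨Set.mem_insert _ _, Set.mem_insert_of_mem _ rfl⟩)))
    obtain ⟨a1, ha1B, ha1⟩ := m1
    obtain ⟨a2, ha2B, ha2⟩ := m2
    obtain ⟨a3, ha3B, ha3⟩ := m3
    rcases ha1 with rfl | rfl
    · rcases ha3 with rfl | rfl
      · exact Or.inl ⟨ha1B, ha3B⟩
      · exact Or.inr (Or.inl ⟨ha1B, ha3B⟩)
    · rcases ha2 with rfl | rfl
      · exact Or.inl ⟨ha2B, ha1B⟩
      · exact Or.inr (Or.inr ⟨ha1B, ha2B⟩)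
  have hzT : ({z} : Set X) ∈ upMul T T := by
    refine upMul_mem (show ({x, y} : Set X) ∈ T from Or.inl
        ⟨Set.mem_insert _ _, Set.mem_insert_of_mem _ rfl⟩)
      (fun w => if w = x then {y, z} else {x, z}) ?_ ?_
    · intro w hw
      change (if w = x then ({y, z} : Set X) else {x, z}) ∈ T
      by_cases hwx : w = x
      · rw [if_pos hwx]
        exact Or.inr (Or.inr ⟨Set.mem_insert _ _, Set.mem_insert_of_mem _ rfl⟩)
      · rw [if_neg hwx]
        exact Or.inr (Or.inl ⟨Set.mem_insert _ _, Set.mem_insert_of_mem _ rfl⟩)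
    · intro a ha b hb
      change b ∈ (if a = x then ({y, z} : Set X) else {x, z}) at hb
      by_cases hax : a = x
      · rw [if_pos hax] at hb
        subst hax
        rcases hb with rfl | rfl
        · exact hz.symm
        · exact hxz
      · rw [if_neg hax] at hb
        have hay : a = y := by
          rcases ha with h | h
          · exact absurd h hax
          · exact h
        subst hay
        rcases hb with rfl | rfl
        · rw [hc]; exact hz.symm
        · exact hyz
  rw [hidem T hTmax] at hzT
  rcases hzT with ⟨h1, _⟩ | ⟨h1, _⟩ | ⟨h1, _⟩
  · exact hzx (Set.eq_of_mem_singleton h1).symm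
  · exact hzx (Set.eq_of_mem_singleton h1).symm
  · exact hzy (Set.eq_of_mem_singleton h1).symm
end Small

section Ultra
variable {X : Type*} [Semigroup X]

def uf (u : Ultrafilter X) : Set (Set X) := {A | A ∈ u}

lemma isFilterUp_uf (u : Ultrafilter X) : IsFilterUp (uf u) :=
  ⟨⟨fun _ hA => Ultrafilter.nonempty_of_mem hA,
    fun _ hA B hAB => Filter.mem_of_superset hA hAB⟩,
   fun _ hA _ hB => Filter.inter_mem hA hB⟩

lemma isMaxLinkedUp_uf (u : Ultrafilter X) : IsMaxLinkedUp (uf u) := by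
  refine ⟨⟨(isFilterUp_uf u).1, fun A hA B hB => ?_⟩, fun ℬ hℬ hsub => ?_⟩
  · exact Ultrafilter.nonempty_of_mem (Filter.inter_mem hA hB)
  · refine Set.Subset.antisymm hsub fun B hB => ?_
    by_contra hBu
    have hBc : Bᶜ ∈ u := (Ultrafilter.compl_mem_iff_notMem).2 hBu
    obtain ⟨a, haB, haBc⟩ := hℬ.2 B hB Bᶜ (hsub hBc)
    exact haBc haB

/-- if 𝒰-many a satisfy "{x | a*x = x} ∈ 𝒱" then 𝒰 ∗ 𝒱 = 𝒱. -/
lemma upMul_uf_right (u v : Ultrafilter X) (A0 : Set X) (hA0 : A0 ∈ u)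
    (h : ∀ a ∈ A0, {x | a * x = x} ∈ v) : upMul (uf u) (uf v) = uf v := by
  apply Set.Subset.antisymm
  · intro C hC
    obtain ⟨A, hA, Bf, hBf, hkey⟩ := upMul_key hC
    obtain ⟨a, haA, haA0⟩ := Ultrafilter.nonempty_of_mem (Filter.inter_mem (hA : A ∈ u) hA0)
    have hB' : Bf a ∩ {x | a * x = x} ∈ v := Filter.inter_mem (hBf a haA) (h a haA0)
    refine Filter.mem_of_superset hB' ?_
    rintro b ⟨hb1, hb2⟩
    have := hkey a haA b hb1
    rwa [hb2] at this
  · intro C hC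
    refine upMul_mem (show A0 ∈ uf u from hA0) (fun a => C ∩ {x | a * x = x})
      (fun a ha => Filter.inter_mem (hC : C ∈ v) (h a ha)) ?_
    rintro a _ b ⟨hb1, hb2⟩
    rwa [hb2]

/-- if 𝒰-many a satisfy "{x | a*x = a} ∈ 𝒱" then 𝒰 ∗ 𝒱 = 𝒰. -/
lemma upMul_uf_left (u v : Ultrafilter X) (A0 : Set X) (hA0 : A0 ∈ u)
    (h : ∀ a ∈ A0, {x | a * x = a} ∈ v) : upMul (uf u) (uf v) = uf u := by
  apply Set.Subset.antisymm
  · intro C hC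
    obtain ⟨A, hA, Bf, hBf, hkey⟩ := upMul_key hC
    refine Filter.mem_of_superset (Filter.inter_mem (hA : A ∈ u) hA0) ?_
    rintro a ⟨haA, haA0⟩
    obtain ⟨b, hb1, hb2⟩ := Ultrafilter.nonempty_of_mem (Filter.inter_mem (hBf a haA) (h a haA0))
    have := hkey a haA b hb1
    rwa [hb2] at this
  · intro C hC
    refine upMul_mem (show C ∩ A0 ∈ uf u from Filter.inter_mem (hC : C ∈ u) hA0)
      (fun a => {x | a * x = a}) (fun a ha => h a ha.2) ?_
    rintro a ⟨ha1, _⟩ b hb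
    rwa [hb]

lemma exists_mono_or_anti {Y : Type*} [LinearOrder Y] [Infinite Y] :
    ∃ g : ℕ → Y, StrictMono g ∨ StrictAnti g := by
  by_cases h : WellFounded ((· < ·) : Y → Y → Prop)
  · have hPWO : (Set.univ : Set Y).IsPWO := (Set.isWF_univ_iff.2 ⟨h⟩).isPWO
    obtain ⟨φ, hφ⟩ := hPWO.exists_monotone_subseq (f := fun n => Infinite.natEmbedding Y n)
      (fun _ => Set.mem_univ _)
    refine ⟨_, Or.inl (hφ.strictMono_of_injective ?_)⟩
    exact ((Infinite.natEmbedding Y).injective.comp φ.injective)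
  · rw [RelEmbedding.wellFounded_iff_isEmpty, not_isEmpty_iff] at h
    obtain ⟨e⟩ := h
    exact ⟨e, Or.inr fun m n hmn => e.map_rel_iff.2 hmn⟩

lemma finite_of_uf_comm (hc : ∀ x y : X, x * y = y * x) (hi : ∀ x : X, x * x = x)
    (hl : ∀ x y : X, x * y = x ∨ x * y = y)
    (hcomm : ∀ u v : Ultrafilter X, upMul (uf u) (uf v) = upMul (uf v) (uf u)) :
    Finite X := by
  by_contra hfin
  rw [not_finite_iff_infinite] at hfin
  letI : LinearOrder X :=
    { le := fun a b => a * b = b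
      le_refl := hi
      le_trans := fun a b c hab hbc => by
        show a * c = c
        calc a * c = a * (b * c) := by rw [hbc]
          _ = (a * b) * c := (mul_assoc _ _ _).symm
          _ = b * c := by rw [hab]
          _ = c := hbc
      le_antisymm := fun a b hab hba => by
        calc a = b * a := hba.symm
          _ = a * b := hc b a
          _ = b := hab
      le_total := fun a b => by
        rcases hl a b with h | h
        · right; show b * a = a; rw [hc]; exact h
        · left; exact h
      toDecidableLE := fun a b => Classical.dec _ }
  have hle : ∀ a b : X, a ≤ b ↔ a * b = b := fun _ _ => Iff.rfl
  obtain ⟨g, hg⟩ := exists_mono_or_anti (Y := X)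
  have hginj : Function.Injective g := by
    rcases hg with h | h
    · exact h.injective
    · exact h.injective
  set u : Ultrafilter X := (Filter.hyperfilter ℕ).map (fun n => g (2 * n)) with hu
  set v : Ultrafilter X := (Filter.hyperfilter ℕ).map (fun n => g (2 * n + 1)) with hv
  have htail : ∀ n : ℕ, {m : ℕ | n ≤ m} ∈ Filter.hyperfilter ℕ := by
    intro n
    apply Filter.mem_hyperfilter_of_finite_compl
    have : {m : ℕ | n ≤ m}ᶜ ⊆ Set.Iio n := by
      intro m hm
      simpa [Set.mem_Iio] using hm
    exact Set.Finite.subset (Set.finite_Iio n) this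
  have hrangeu : Set.range (fun n => g (2 * n)) ∈ u := by
    rw [hu, Ultrafilter.mem_map]
    exact Filter.univ_mem' fun n => Set.mem_range_self n
  have hSnotv : Set.range (fun n => g (2 * n)) ∉ v := by
    rw [hv, Ultrafilter.mem_map]
    intro hcon
    have hempty : ((fun n => g (2 * n + 1)) ⁻¹' Set.range (fun n => g (2 * n))) = ∅ := by
      ext m
      simp only [Set.mem_preimage, Set.mem_range, Set.mem_empty_iff_false, iff_false]
      rintro ⟨k, hk⟩
      have := hginj hk
      omega
    rw [hempty] at hcon
    exact (Filter.empty_notMem _) hcon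
  have hne : uf u ≠ uf v := by
    intro hcon
    have : Set.range (fun n => g (2 * n)) ∈ uf v := hcon ▸ (hrangeu : _ ∈ uf u)
    exact hSnotv this
  rcases hg with hmono | hanti
  · -- increasing: u∗v = v, v∗u = u
    have h1 : upMul (uf u) (uf v) = uf v := by
      refine upMul_uf_right u v (Set.range (fun n => g (2 * n))) hrangeu ?_
      rintro a ⟨n, rfl⟩
      rw [hv, Ultrafilter.mem_map]
      refine Filter.mem_of_superset (htail n) ?_
      intro m hm
      simp only [Set.mem_setOf_eq] at hm
      have : g (2 * n) ≤ g (2 * m + 1) := (hmono (by omega : 2 * n < 2 * m + 1)).le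
      exact (hle _ _).1 this
    have h2 : upMul (uf v) (uf u) = uf u := by
      refine upMul_uf_right v u (Set.range (fun n => g (2 * n + 1))) ?_ ?_
      · rw [hv, Ultrafilter.mem_map]
        exact Filter.univ_mem' fun n => Set.mem_range_self n
      rintro a ⟨n, rfl⟩
      rw [hu, Ultrafilter.mem_map]
      refine Filter.mem_of_superset (htail (n + 1)) ?_
      intro m hm
      have : g (2 * n + 1) ≤ g (2 * m) :=
        (hmono (by simp only [Set.mem_setOf_eq] at hm; omega : 2 * n + 1 < 2 * m)).le
      exact (hle _ _).1 this
    exact hne (by rw [← h1, hcomm u v, h2])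
  · -- decreasing: u∗v = u, v∗u = v
    have h1 : upMul (uf u) (uf v) = uf u := by
      refine upMul_uf_left u v (Set.range (fun n => g (2 * n))) hrangeu ?_
      rintro a ⟨n, rfl⟩
      rw [hv, Ultrafilter.mem_map]
      refine Filter.mem_of_superset (htail n) ?_
      intro m hm
      have hle' : g (2 * m + 1) ≤ g (2 * n) :=
        (hanti (by simp only [Set.mem_setOf_eq] at hm; omega : 2 * n < 2 * m + 1)).le
      have : g (2 * m + 1) * g (2 * n) = g (2 * n) := (hle _ _).1 hle'
      show g (2 * n) * g (2 * m + 1) = g (2 * n)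
      rw [hc]; exact this
    have h2 : upMul (uf v) (uf u) = uf v := by
      refine upMul_uf_left v u (Set.range (fun n => g (2 * n + 1))) ?_ ?_
      · rw [hv, Ultrafilter.mem_map]
        exact Filter.univ_mem' fun n => Set.mem_range_self n
      rintro a ⟨n, rfl⟩
      rw [hu, Ultrafilter.mem_map]
      refine Filter.mem_of_superset (htail (n + 1)) ?_
      intro m hm
      have hle' : g (2 * m) ≤ g (2 * n + 1) :=
        (hanti (by simp only [Set.mem_setOf_eq] at hm; omega : 2 * n + 1 < 2 * m)).le
      have : g (2 * m) * g (2 * n + 1) = g (2 * n + 1) := (hle _ _).1 hle'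
      show g (2 * n + 1) * g (2 * m) = g (2 * n + 1)
      rw [hc]; exact this
    exact hne (by rw [← h1, hcomm u v, h2])
end Ultra

/-- For a semigroup `X` TFAE: (1) `X` is a finite linear semilattice; (2) `υ(X)` is a
semilattice; (3) `λ(X)` is a semilattice; (4) `φ(X)` is a semilattice. -/
theorem stmt11 (X : Type*) [Semigroup X] :
    List.TFAE [
      Finite X ∧ (∀ x y : X, x * y = y * x) ∧ (∀ x : X, x * x = x) ∧
        (∀ x y : X, x * y = x ∨ x * y = y),
      (∀ 𝒜 ℬ : Set (Set X), IsUpfamily 𝒜 → IsUpfamily ℬ → upMul 𝒜 ℬ = upMul ℬ 𝒜) ∧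
        (∀ 𝒜 : Set (Set X), IsUpfamily 𝒜 → upMul 𝒜 𝒜 = 𝒜),
      (∀ 𝒜 ℬ : Set (Set X), IsMaxLinkedUp 𝒜 → IsMaxLinkedUp ℬ → upMul 𝒜 ℬ = upMul ℬ 𝒜) ∧
        (∀ 𝒜 : Set (Set X), IsMaxLinkedUp 𝒜 → upMul 𝒜 𝒜 = 𝒜),
      (∀ 𝒜 ℬ : Set (Set X), IsFilterUp 𝒜 → IsFilterUp ℬ → upMul 𝒜 ℬ = upMul ℬ 𝒜) ∧
        (∀ 𝒜 : Set (Set X), IsFilterUp 𝒜 → upMul 𝒜 𝒜 = 𝒜)] := by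
  tfae_have 1 → 2 := by
    rintro ⟨hfin, hc, hi, hl⟩
    haveI := hfin
    refine ⟨fun 𝒜 ℬ h𝒜 hℬ => Set.Subset.antisymm ?_ ?_, fun 𝒜 h𝒜 => upMul_self hl h𝒜⟩
    · exact upMul_comm_sub hc hi hl h𝒜 hℬ
    · exact upMul_comm_sub hc hi hl hℬ h𝒜
  tfae_have 2 → 3 := by
    rintro ⟨h1, h2⟩
    exact ⟨fun 𝒜 ℬ hA hB => h1 𝒜 ℬ hA.1.1 hB.1.1, fun 𝒜 hA => h2 𝒜 hA.1.1⟩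
  tfae_have 2 → 4 := by
    rintro ⟨h1, h2⟩
    exact ⟨fun 𝒜 ℬ hA hB => h1 𝒜 ℬ hA.1 hB.1, fun 𝒜 hA => h2 𝒜 hA.1⟩
  tfae_have 3 → 1 := by
    rintro ⟨hcm, hid⟩
    have hc : ∀ x y : X, x * y = y * x := fun x y => princ_injective (by
      rw [← upMul_princ, hcm _ _ (isMaxLinkedUp_princ x) (isMaxLinkedUp_princ y), upMul_princ])
    have hi : ∀ x : X, x * x = x := fun x => princ_injective (by
      rw [← upMul_princ, hid _ (isMaxLinkedUp_princ x)])
    have hl : ∀ x y : X, x * y = x ∨ x * y = y := linear_of_maxLinked hid hc hi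
    exact ⟨finite_of_uf_comm hc hi hl
      (fun u v => hcm _ _ (isMaxLinkedUp_uf u) (isMaxLinkedUp_uf v)), hc, hi, hl⟩
  tfae_have 4 → 1 := by
    rintro ⟨hcm, hid⟩
    have hc : ∀ x y : X, x * y = y * x := fun x y => princ_injective (by
      rw [← upMul_princ, hcm _ _ (isFilterUp_princ x) (isFilterUp_princ y), upMul_princ])
    have hi : ∀ x : X, x * x = x := fun x => princ_injective (by
      rw [← upMul_princ, hid _ (isFilterUp_princ x)])
    have hl : ∀ x y : X, x * y = x ∨ x * y = y := linear_of_filters hid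
    exact ⟨finite_of_uf_comm hc hi hl
      (fun u v => hcm _ _ (isFilterUp_uf u) (isFilterUp_uf v)), hc, hi, hl⟩
  tfae_finish
end

section
/- For a semigroup X, the semigroup υ(X) is linear if and only if X is either a semigroup of right zeros or a semigroup of left zeros. -/
open Set

/-- The upfamily generated by a single set `S`. -/
def genUp {X : Type*} (S : Set X) : Set (Set X) := {C | S ⊆ C}

lemma mem_genUp {X : Type*} {S C : Set X} : C ∈ genUp S ↔ S ⊆ C := Iff.rfl

lemma genUp_isUpfamily {X : Type*} {S : Set X} (hS : S.Nonempty) : IsUpfamily (genUp S) :=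
  ⟨fun _ hA => hS.mono hA, fun _ hA _ hAB => hA.trans hAB⟩

lemma genUp_inj {X : Type*} {S T : Set X} (h : genUp S = genUp T) : S = T := by
  have h1 : S ∈ genUp T := h ▸ mem_genUp.mpr subset_rfl
  have h2 : T ∈ genUp S := h.symm ▸ mem_genUp.mpr subset_rfl
  exact subset_antisymm h2 h1

lemma upMul_genUp {X : Type*} [Mul X] (S T : Set X) :
    upMul (genUp S) (genUp T) = genUp (Set.image2 (· * ·) S T) := by
  ext C
  constructor
  · rintro ⟨A, hA, Bf, hBf, hsub⟩
    rintro z ⟨x, hx, y, hy, rfl⟩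
    refine hsub ?_
    simp only [mem_iUnion, mem_image]
    exact ⟨x, hA hx, y, hBf x (hA hx) hy, rfl⟩
  · intro hC
    refine ⟨S, mem_genUp.mpr subset_rfl, fun _ => T, fun _ _ => mem_genUp.mpr subset_rfl, ?_⟩
    intro z hz
    simp only [mem_iUnion, mem_image] at hz
    obtain ⟨x, hx, y, hy, rfl⟩ := hz
    exact hC ⟨x, hx, y, hy, rfl⟩

section Forward

variable {X : Type*} [Semigroup X]
  (H : ∀ 𝒜 ℬ : Set (Set X), IsUpfamily 𝒜 → IsUpfamily ℬ → upMul 𝒜 ℬ = 𝒜 ∨ upMul 𝒜 ℬ = ℬ)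

include H

lemma prod_lin {S T : Set X} (hS : S.Nonempty) (hT : T.Nonempty) :
    Set.image2 (· * ·) S T = S ∨ Set.image2 (· * ·) S T = T := by
  rcases H (genUp S) (genUp T) (genUp_isUpfamily hS) (genUp_isUpfamily hT) with h | h
  · rw [upMul_genUp] at h; exact Or.inl (genUp_inj h)
  · rw [upMul_genUp] at h; exact Or.inr (genUp_inj h)

lemma elt_lin (x y : X) : x * y = x ∨ x * y = y := by
  rcases prod_lin H (singleton_nonempty x) (singleton_nonempty y) with h | h <;>
    [left; right] <;>
  · rw [Set.image2_singleton] at h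
    exact singleton_eq_singleton_iff.mp h

lemma elt_idem (x : X) : x * x = x := by
  rcases elt_lin H x x with h | h <;> exact h

/-- If `s*t = s` with `s ≠ t` and `u*v = v` with `u ≠ v`, then `s = v`. -/
lemma key (s t u v : X) (hst : s * t = s) (hstne : s ≠ t) (huv : u * v = v) (huvne : u ≠ v) :
    s = v := by
  -- Step (i): s*v = s or s = v
  have hi : s * v = s ∨ s = v := by
    rcases prod_lin H (singleton_nonempty s) (insert_nonempty t {v}) with h | h
    · -- {s*t, s*v} = {s}
      left
      have : s * v ∈ ({s} : Set X) := by
        rw [← h]; exact Set.mem_image2_of_mem (mem_singleton s) (by simp)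
      simpa using this
    · -- {s*t, s*v} = {t, v}
      have ht : (t : X) ∈ Set.image2 (· * ·) ({s} : Set X) {t, v} := by
        rw [h]; simp
      rw [Set.image2_singleton_left, Set.image_insert_eq, Set.image_singleton] at ht
      simp only [mem_insert_iff, mem_singleton_iff] at ht
      rcases ht with h1 | h1
      · exact absurd (h1.trans hst).symm hstne
      · -- t = s*v, and s*v ∈ {s, v}
        rcases elt_lin H s v with h2 | h2
        · exact absurd (h1.trans h2).symm hstne
        · -- s*v = v, so t = v, so {s*t,s*v} = {v}, and s*t = s ∈ it
          right
          have hs : s * t ∈ Set.image2 (· * ·) ({s} : Set X) {t, v} :=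
            Set.mem_image2_of_mem (mem_singleton s) (by simp)
          rw [h, hst] at hs
          simp only [mem_insert_iff, mem_singleton_iff] at hs
          rcases hs with h3 | h3
          · exact absurd h3 hstne
          · exact h3
  rcases hi with hsv | hsv
  · -- Step (ii): consider {s,u} * {v}
    rcases prod_lin H (insert_nonempty s {u}) (singleton_nonempty v) with h | h
    · -- {s*v, u*v} = {s, u} so v = u*v ∈ {s, u}
      have hv : (v : X) ∈ ({s, u} : Set X) := by
        have hm : u * v ∈ Set.image2 (· * ·) ({s, u} : Set X) {v} :=
          Set.mem_image2_of_mem (by simp) (mem_singleton v)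
        rwa [h, huv] at hm
      simp only [mem_insert_iff, mem_singleton_iff] at hv
      rcases hv with hv | hv
      · exact hv.symm
      · exact absurd hv.symm huvne
    · -- {s*v, u*v} = {v}
      have hmem : s * v ∈ ({v} : Set X) := by
        rw [← h]; exact Set.mem_image2_of_mem (by simp) (mem_singleton v)
      rw [mem_singleton_iff] at hmem
      rw [hsv] at hmem
      exact hmem
  · exact hsv

end Forward

/-- For a semigroup `X`, the semigroup `υ(X)` is linear iff `X` is a semigroup of right
zeros or a semigroup of left zeros. -/
theorem stmt12 (X : Type*) [Semigroup X] :
    (∀ 𝒜 ℬ : Set (Set X), IsUpfamily 𝒜 → IsUpfamily ℬ →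
        upMul 𝒜 ℬ = 𝒜 ∨ upMul 𝒜 ℬ = ℬ) ↔
      ((∀ x y : X, x * y = y) ∨ (∀ x y : X, x * y = x)) := by
  constructor
  · intro H
    by_contra hcon
    push_neg at hcon
    obtain ⟨⟨c, d, hcd⟩, ⟨p, q, hpq⟩⟩ := hcon
    -- c*d = c with c ≠ d ; p*q = q with p ≠ q
    have hcd' : c * d = c := (elt_lin H c d).resolve_right hcd
    have hcdne : c ≠ d := fun h => hcd (by rw [h] at hcd' ⊢; exact hcd')
    have hpq' : p * q = q := (elt_lin H p q).resolve_left hpq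
    have hpqne : p ≠ q := fun h => hpq (by rw [← h] at hpq' ⊢; exact hpq')
    -- key lemma : c = q
    have hcq : c = q := key H c d p q hcd' hcdne hpq' hpqne
    set a := c with ha
    set b := d with hb
    have hab : a * b = a := hcd'
    have habne : a ≠ b := hcdne
    have hpa : p * a = a := hcq ▸ hpq'
    have hpane : p ≠ a := hcq ▸ hpqne
    have haa : a * a = a := elt_idem H a
    have hbb : b * b = b := elt_idem H b
    have hba : b * a = a := by
      rcases elt_lin H b a with h | h
      · exact absurd (key H b a p a h (Ne.symm habne) hpa hpane) (Ne.symm habne)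
      · exact h
    -- the counterexample upfamilies
    set 𝒜 : Set (Set X) := {C | a ∈ C ∨ b ∈ C} with h𝒜def
    set ℬ : Set (Set X) := genUp {a, b} with hℬdef
    have h𝒜 : IsUpfamily 𝒜 := by
      constructor
      · rintro A (hA | hA) <;> exact ⟨_, hA⟩
      · rintro A (hA | hA) B hAB
        · exact Or.inl (hAB hA)
        · exact Or.inr (hAB hA)
    have hℬ : IsUpfamily ℬ := genUp_isUpfamily (insert_nonempty a {b})
    have hcomp : upMul 𝒜 ℬ = {C | a ∈ C} := by
      ext C
      constructor
      · rintro ⟨A, hA, Bf, hBf, hsub⟩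
        rcases hA with hA | hA
        · have haBf : a ∈ Bf a := (hBf a hA) (by simp)
          have : a * a ∈ ⋃ x ∈ A, (fun b => x * b) '' Bf x := by
            simp only [mem_iUnion, mem_image]
            exact ⟨a, hA, a, haBf, rfl⟩
          have := hsub this
          rwa [haa] at this
        · have haBf : a ∈ Bf b := (hBf b hA) (by simp)
          have : b * a ∈ ⋃ x ∈ A, (fun y => x * y) '' Bf x := by
            simp only [mem_iUnion, mem_image]
            exact ⟨b, hA, a, haBf, rfl⟩
          have := hsub this
          rwa [hba] at this
      · intro hC
        refine ⟨{a}, Or.inl (mem_singleton a), fun _ => {a, b},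
          fun _ _ => mem_genUp.mpr subset_rfl, ?_⟩
        intro z hz
        simp only [mem_iUnion, mem_image, mem_singleton_iff] at hz
        obtain ⟨x, rfl, y, hy, rfl⟩ := hz
        simp only [mem_insert_iff, mem_singleton_iff] at hy
        rcases hy with rfl | rfl
        · rwa [haa]
        · rwa [hab]
    rcases H 𝒜 ℬ h𝒜 hℬ with h | h
    · rw [hcomp] at h
      have : ({b} : Set X) ∈ 𝒜 := Or.inr (mem_singleton b)
      rw [← h] at this
      exact habne (mem_singleton_iff.mp this)
    · rw [hcomp] at h
      have : ({a} : Set X) ∈ {C : Set X | a ∈ C} := mem_singleton a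
      rw [h] at this
      have : b ∈ ({a} : Set X) := this (by simp)
      exact habne (mem_singleton_iff.mp this).symm
  · rintro (hz | hz) 𝒜 ℬ h𝒜 hℬ
    · -- right zeros : x*y = y
      rcases Set.eq_empty_or_nonempty 𝒜 with hA0 | ⟨A0, hA0⟩
      · left
        rw [hA0]
        ext C
        constructor
        · rintro ⟨A, hA, -⟩
          exact hA
        · intro hmem
          exact absurd hmem (notMem_empty C)
      · right
        ext C
        constructor
        · rintro ⟨A, hA, Bf, hBf, hsub⟩
          obtain ⟨x0, hx0⟩ := h𝒜.1 A hA
          have hB : Bf x0 ⊆ C := by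
            intro y hy
            have : x0 * y ∈ ⋃ x ∈ A, (fun b => x * b) '' Bf x := by
              simp only [mem_iUnion, mem_image]
              exact ⟨x0, hx0, y, hy, rfl⟩
            have := hsub this
            rwa [hz x0 y] at this
          exact hℬ.2 (Bf x0) (hBf x0 hx0) C hB
        · intro hC
          refine ⟨A0, hA0, fun _ => C, fun _ _ => hC, ?_⟩
          intro z hz'
          simp only [mem_iUnion, mem_image] at hz'
          obtain ⟨x, _, y, hy, rfl⟩ := hz'
          rwa [hz x y]
    · -- left zeros : x*y = x
      rcases Set.eq_empty_or_nonempty ℬ with hB0 | ⟨B0, hB0⟩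
      · right
        rw [hB0]
        ext C
        simp only [mem_empty_iff_false, iff_false]
        rintro ⟨A, hA, Bf, hBf, _⟩
        obtain ⟨x0, hx0⟩ := h𝒜.1 A hA
        simpa using hBf x0 hx0
      · left
        ext C
        constructor
        · rintro ⟨A, hA, Bf, hBf, hsub⟩
          have hAC : A ⊆ C := by
            intro x hx
            obtain ⟨y, hy⟩ := hℬ.1 (Bf x) (hBf x hx)
            have : x * y ∈ ⋃ x ∈ A, (fun b => x * b) '' Bf x := by
              simp only [mem_iUnion, mem_image]
              exact ⟨x, hx, y, hy, rfl⟩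
            have := hsub this
            rwa [hz x y] at this
          exact h𝒜.2 A hA C hAC
        · intro hC
          refine ⟨C, hC, fun _ => B0, fun _ _ => hB0, ?_⟩
          intro z hz'
          simp only [mem_iUnion, mem_image] at hz'
          obtain ⟨x, hx, y, _, rfl⟩ := hz'
          rwa [hz x y]
end

section
/- For a semigroup X the following conditions are equivalent: (1) the semigroup φ(X) is linear; (2) the semigroup N₂(X) is linear; (3) either X is a semigroup of left zeros, or X is a semigroup of right zeros, or X is a semilattice of order |X| ≤ 2. -/
open Set

def upPrin {X : Type*} (S : Set X) : Set (Set X) := {A | S ⊆ A}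

lemma mem_upPrin {X : Type*} {S A : Set X} : A ∈ upPrin S ↔ S ⊆ A := Iff.rfl

lemma upPrin_inj {X : Type*} {S T : Set X} (h : upPrin S = upPrin T) : S = T := by
  have h1 : T ∈ upPrin S := h ▸ (subset_refl T)
  have h2 : S ∈ upPrin T := h ▸ (subset_refl S)
  exact subset_antisymm h1 h2

lemma isFilterUp_upPrin {X : Type*} {S : Set X} (hS : S.Nonempty) : IsFilterUp (upPrin S) :=
  ⟨⟨fun _ hA => hS.mono hA, fun _ hA B hAB => hA.trans hAB⟩,
    fun _ hA _ hB => subset_inter hA hB⟩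

lemma isLinkedUp_upPrin {X : Type*} {S : Set X} (hS : S.Nonempty) : IsLinkedUp (upPrin S) :=
  ⟨⟨fun _ hA => hS.mono hA, fun _ hA B hAB => hA.trans hAB⟩,
    fun _ hA _ hB => hS.mono (subset_inter hA hB)⟩

lemma upMul_upPrin {X : Type*} [Mul X] (S T : Set X) :
    upMul (upPrin S) (upPrin T) = upPrin (Set.image2 (· * ·) S T) := by
  ext C
  constructor
  · rintro ⟨A, hA, Bf, hBf, hsub⟩
    rintro c ⟨x, hx, t, ht, rfl⟩
    exact hsub (mem_biUnion (hA hx) ⟨t, hBf x (hA hx) ht, rfl⟩)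
  · intro hC
    refine ⟨S, subset_refl S, fun _ => T, fun x _ => subset_refl T, ?_⟩
    rintro c hc
    simp only [mem_iUnion, mem_image] at hc
    obtain ⟨x, hx, t, ht, rfl⟩ := hc
    exact hC (mem_image2_of_mem hx ht)

lemma upMul_empty_left {X : Type*} [Mul X] (ℬ : Set (Set X)) : upMul (∅ : Set (Set X)) ℬ = ∅ := by
  ext C; simp [upMul]

lemma upMul_empty_right {X : Type*} [Mul X] {𝒜 : Set (Set X)} (hA : IsUpfamily 𝒜) :
    upMul 𝒜 (∅ : Set (Set X)) = ∅ := by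
  ext C
  simp only [mem_empty_iff_false, iff_false]
  rintro ⟨A, hAm, Bf, hBf, -⟩
  obtain ⟨x, hx⟩ := hA.1 A hAm
  exact (hBf x hx)

lemma upMul_leftzero {X : Type*} [Mul X] (hL : ∀ x y : X, x * y = x)
    {𝒜 ℬ : Set (Set X)} (hA : IsUpfamily 𝒜) (hB : IsUpfamily ℬ) :
    upMul 𝒜 ℬ = 𝒜 ∨ upMul 𝒜 ℬ = ℬ := by
  rcases eq_empty_or_nonempty ℬ with rfl | ⟨B₀, hB₀⟩
  · exact Or.inr (upMul_empty_right hA)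
  left
  ext C
  constructor
  · rintro ⟨A, hAm, Bf, hBf, hsub⟩
    refine hA.2 A hAm C ?_
    intro x hx
    obtain ⟨b, hb⟩ := hB.1 _ (hBf x hx)
    exact hsub (mem_biUnion hx ⟨b, hb, hL x b⟩)
  · intro hC
    refine ⟨C, hC, fun _ => B₀, fun _ _ => hB₀, ?_⟩
    rintro z hz
    simp only [mem_iUnion, mem_image] at hz
    obtain ⟨x, hx, b, hb, rfl⟩ := hz
    rw [hL x b]; exact hx

lemma upMul_rightzero {X : Type*} [Mul X] (hR : ∀ x y : X, x * y = y)
    {𝒜 ℬ : Set (Set X)} (hA : IsUpfamily 𝒜) (hB : IsUpfamily ℬ) :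
    upMul 𝒜 ℬ = 𝒜 ∨ upMul 𝒜 ℬ = ℬ := by
  rcases eq_empty_or_nonempty 𝒜 with rfl | ⟨A₀, hA₀⟩
  · exact Or.inl (upMul_empty_left ℬ)
  right
  ext C
  constructor
  · rintro ⟨A, hAm, Bf, hBf, hsub⟩
    obtain ⟨x, hx⟩ := hA.1 A hAm
    refine hB.2 _ (hBf x hx) C ?_
    intro b hb
    have : x * b ∈ (fun b => x * b) '' Bf x := ⟨b, hb, rfl⟩
    have := hsub (mem_biUnion hx this)
    rwa [hR x b] at this
  · intro hC
    refine ⟨A₀, hA₀, fun _ => C, fun _ _ => hC, ?_⟩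
    rintro z hz
    simp only [mem_iUnion, mem_image] at hz
    obtain ⟨x, hx, b, hb, rfl⟩ := hz
    rw [hR x b]; exact hb

section Pair
variable {X : Type*} [Mul X] {a b : X}

lemma linked_classify (hne : a ≠ b) (huniv : ∀ x : X, x = a ∨ x = b)
    {𝒜 : Set (Set X)} (h : IsLinkedUp 𝒜) :
    𝒜 = ∅ ∨ 𝒜 = upPrin {a} ∨ 𝒜 = upPrin {b} ∨ 𝒜 = upPrin (univ : Set X) := by
  rcases eq_empty_or_nonempty 𝒜 with rfl | ⟨A₀, hA₀⟩
  · exact Or.inl rfl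
  right
  have hUm : (univ : Set X) ∈ 𝒜 := h.1.2 A₀ hA₀ univ (subset_univ A₀)
  by_cases ha : ({a} : Set X) ∈ 𝒜
  · left
    ext C
    constructor
    · intro hC
      obtain ⟨x, hx1, hx2⟩ := h.2 _ ha _ hC
      rw [mem_upPrin, singleton_subset_iff]
      rcases hx1 with rfl
      exact hx2
    · intro hC
      exact h.1.2 _ ha C hC
  right
  by_cases hb : ({b} : Set X) ∈ 𝒜
  · left
    ext C
    constructor
    · intro hC
      obtain ⟨x, hx1, hx2⟩ := h.2 _ hb _ hC
      rw [mem_upPrin, singleton_subset_iff]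
      rcases hx1 with rfl
      exact hx2
    · intro hC
      exact h.1.2 _ hb C hC
  right
  ext C
  rw [mem_upPrin, univ_subset_iff]
  constructor
  · intro hC
    by_cases hac : a ∈ C
    · by_cases hbc : b ∈ C
      · apply eq_univ_of_forall
        intro x
        rcases huniv x with rfl | rfl
        · exact hac
        · exact hbc
      · exfalso
        apply ha
        have : C = {a} := by
          apply subset_antisymm
          · intro x hx
            rcases huniv x with rfl | rfl
            · exact rfl
            · exact absurd hx hbc
          · intro x hx
            rcases hx with rfl; exact hac
        rw [← this]; exact hC
    · by_cases hbc : b ∈ C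
      · exfalso
        apply hb
        have hCb : C = {b} := by
          apply subset_antisymm
          · intro x hx
            rcases huniv x with rfl | rfl
            · exact absurd hx hac
            · exact rfl
          · intro x hx
            rcases hx with rfl; exact hbc
        rw [← hCb]; exact hC
      · exfalso
        obtain ⟨x, hx⟩ := h.1.1 C hC
        rcases huniv x with rfl | rfl
        · exact hac hx
        · exact hbc hx
  · rintro rfl
    exact hUm

end Pair

section Pair2
variable {X : Type*} [Semigroup X]

lemma upMul_pair {a b : X} (hne : a ≠ b) (huniv : ∀ x : X, x = a ∨ x = b)
    (haa : a * a = a) (hbb : b * b = b) (hab : a * b = a) (hba : b * a = a)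
    {𝒜 ℬ : Set (Set X)} (hA : IsLinkedUp 𝒜) (hB : IsLinkedUp ℬ) :
    upMul 𝒜 ℬ = 𝒜 ∨ upMul 𝒜 ℬ = ℬ := by
  have hU : (univ : Set X) = {a, b} := by
    apply subset_antisymm
    · intro x _
      rcases huniv x with rfl | rfl
      · exact mem_insert _ _
      · exact mem_insert_of_mem _ rfl
    · exact subset_univ _
  have e1 : Set.image2 (· * ·) ({a} : Set X) {a} = {a} := by
    rw [image2_singleton, haa]
  have e2 : Set.image2 (· * ·) ({a} : Set X) {b} = {a} := by
    rw [image2_singleton, hab]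
  have e3 : Set.image2 (· * ·) ({b} : Set X) {a} = {a} := by
    rw [image2_singleton, hba]
  have e4 : Set.image2 (· * ·) ({b} : Set X) {b} = {b} := by
    rw [image2_singleton, hbb]
  have e5 : Set.image2 (· * ·) ({a} : Set X) univ = {a} := by
    rw [hU, image2_singleton_left, image_pair, haa, hab, pair_eq_singleton]
  have e6 : Set.image2 (· * ·) ({b} : Set X) univ = univ := by
    rw [hU, image2_singleton_left, image_pair, hba, hbb]
  have e7 : Set.image2 (· * ·) (univ : Set X) {a} = {a} := by
    rw [hU, image2_singleton_right, image_pair, haa, hba, pair_eq_singleton]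
  have e8 : Set.image2 (· * ·) (univ : Set X) {b} = univ := by
    rw [hU, image2_singleton_right, image_pair, hab, hbb]
  have e9 : Set.image2 (· * ·) (univ : Set X) univ = univ := by
    apply subset_antisymm (subset_univ _)
    intro z _
    rcases huniv z with h | h
    · rw [h]; exact ⟨a, mem_univ a, a, mem_univ a, haa⟩
    · rw [h]; exact ⟨b, mem_univ b, b, mem_univ b, hbb⟩
  have hea : ({a} : Set X).Nonempty := singleton_nonempty a
  have heb : ({b} : Set X).Nonempty := singleton_nonempty b
  rcases linked_classify hne huniv hA with rfl | rfl | rfl | rfl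
  · exact Or.inl (upMul_empty_left ℬ)
  · rcases linked_classify hne huniv hB with rfl | rfl | rfl | rfl
    · exact Or.inr (upMul_empty_right (isLinkedUp_upPrin hea).1)
    · exact Or.inl (by rw [upMul_upPrin, e1])
    · exact Or.inl (by rw [upMul_upPrin, e2])
    · exact Or.inl (by rw [upMul_upPrin, e5])
  · rcases linked_classify hne huniv hB with rfl | rfl | rfl | rfl
    · exact Or.inr (upMul_empty_right (isLinkedUp_upPrin heb).1)
    · exact Or.inr (by rw [upMul_upPrin, e3])
    · exact Or.inr (by rw [upMul_upPrin, e4])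
    · exact Or.inr (by rw [upMul_upPrin, e6])
  · rcases linked_classify hne huniv hB with rfl | rfl | rfl | rfl
    · exact Or.inr (upMul_empty_right (isLinkedUp_upPrin (⟨a, mem_univ a⟩ : (univ : Set X).Nonempty)).1)
    · exact Or.inr (by rw [upMul_upPrin, e7])
    · exact Or.inl (by rw [upMul_upPrin, e8])
    · exact Or.inl (by rw [upMul_upPrin, e9])

end Pair2

section Main
variable {X : Type*} [Semigroup X]

lemma cond3_of_sets
    (key : ∀ S T : Set X, S.Nonempty → T.Nonempty →
      Set.image2 (· * ·) S T = S ∨ Set.image2 (· * ·) S T = T) :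
    (∀ x y : X, x * y = x) ∨ (∀ x y : X, x * y = y) ∨
      ((∀ x y : X, x * y = y * x) ∧ (∀ x : X, x * x = x) ∧ Cardinal.mk X ≤ 2) := by
  have sing : ∀ x y : X, x * y = x ∨ x * y = y := by
    intro x y
    have := key {x} {y} (singleton_nonempty x) (singleton_nonempty y)
    rw [image2_singleton] at this
    rcases this with h | h
    · exact Or.inl (by rwa [singleton_eq_singleton_iff] at h)
    · exact Or.inr (by rwa [singleton_eq_singleton_iff] at h)
  have idem : ∀ x : X, x * x = x := fun x => (sing x x).elim id id
  have lemL : ∀ x y z : X, y ≠ x → z ≠ x → y ≠ z → (x * y = y ↔ x * z = z) := by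
    intro x y z hyx hzx hyz
    have := key {x} {y, z} (singleton_nonempty x) ⟨y, mem_insert _ _⟩
    rw [image2_singleton_left, image_pair] at this
    rcases this with h | h
    · have h1 : x * y = x := by
        have : x * y ∈ ({x * y, x * z} : Set X) := mem_insert _ _
        rw [h] at this; exact this
      have h2 : x * z = x := by
        have : x * z ∈ ({x * y, x * z} : Set X) := mem_insert_of_mem _ rfl
        rw [h] at this; exact this
      constructor
      · intro he; exact absurd (he.symm.trans h1) hyx
      · intro he; exact absurd (he.symm.trans h2) hzx
    · have h1 : x * y = y := by
        have hm : x * y ∈ ({y, z} : Set X) := h ▸ (mem_insert _ _)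
        rcases sing x y with hs | hs
        · exfalso
          rcases (hs ▸ hm : x ∈ ({y, z} : Set X)) with h' | h'
          · exact hyx h'.symm
          · exact hzx (mem_singleton_iff.mp h').symm
        · exact hs
      have h2 : x * z = z := by
        have hm : x * z ∈ ({y, z} : Set X) := h ▸ (mem_insert_of_mem _ rfl)
        rcases sing x z with hs | hs
        · exfalso
          rcases (hs ▸ hm : x ∈ ({y, z} : Set X)) with h' | h'
          · exact hyx h'.symm
          · exact hzx (mem_singleton_iff.mp h').symm
        · exact hs
      simp [h1, h2]
  have lemR : ∀ x y z : X, y ≠ x → z ≠ x → y ≠ z → (y * x = y ↔ z * x = z) := by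
    intro x y z hyx hzx hyz
    have := key {y, z} {x} ⟨y, mem_insert _ _⟩ (singleton_nonempty x)
    rw [image2_singleton_right, image_pair] at this
    rcases this with h | h
    · have h1 : y * x = y := by
        have hm : y * x ∈ ({y, z} : Set X) := h ▸ (mem_insert _ _)
        rcases sing y x with hs | hs
        · exact hs
        · exfalso
          rcases (hs ▸ hm : x ∈ ({y, z} : Set X)) with h' | h'
          · exact hyx h'.symm
          · exact hzx (mem_singleton_iff.mp h').symm
      have h2 : z * x = z := by
        have hm : z * x ∈ ({y, z} : Set X) := h ▸ (mem_insert_of_mem _ rfl)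
        rcases sing z x with hs | hs
        · exact hs
        · exfalso
          rcases (hs ▸ hm : x ∈ ({y, z} : Set X)) with h' | h'
          · exact hyx h'.symm
          · exact hzx (mem_singleton_iff.mp h').symm
      simp [h1, h2]
    · have h1 : y * x = x := by
        have : y * x ∈ ({y * x, z * x} : Set X) := mem_insert _ _
        rw [h] at this; exact this
      have h2 : z * x = x := by
        have : z * x ∈ ({y * x, z * x} : Set X) := mem_insert_of_mem _ rfl
        rw [h] at this; exact this
      constructor
      · intro he; exact absurd (he.symm.trans h1) hyx
      · intro he; exact absurd (he.symm.trans h2) hzx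
  by_cases hL : ∀ x y : X, x * y = x
  · exact Or.inl hL
  by_cases hR : ∀ x y : X, x * y = y
  · exact Or.inr (Or.inl hR)
  push_neg at hL hR
  obtain ⟨a, b, hab⟩ := hL
  obtain ⟨c, d, hcd⟩ := hR
  have hab' : a * b = b := (sing a b).resolve_left hab
  have hcd' : c * d = c := (sing c d).resolve_right hcd
  have hne : a ≠ b := by rintro rfl; exact hab (idem a)
  have hcdne : c ≠ d := by rintro rfl; exact hcd (idem c)
  by_cases h3 : ∃ u v w : X, u ≠ v ∧ u ≠ w ∧ v ≠ w
  · exfalso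
    have third : ∀ u v : X, ∃ w : X, w ≠ u ∧ w ≠ v := by
      intro u v
      by_contra hc
      push_neg at hc
      obtain ⟨p, q, r, hpq, hpr, hqr⟩ := h3
      have f : ∀ w : X, w = u ∨ w = v := by
        intro w
        by_cases h : w = u
        · exact Or.inl h
        · exact Or.inr (hc w h)
      rcases f p with hp | hp <;> rcases f q with hq | hq <;> rcases f r with hr | hr <;>
        first
          | exact hpq (hp.trans hq.symm)
          | exact hpr (hp.trans hr.symm)
          | exact hqr (hq.trans hr.symm)
    have astep : ∀ w : X, w ≠ a → a * w = w := by
      intro w hw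
      by_cases hwb : w = b
      · rw [hwb]; exact hab'
      · exact (lemL a b w hne.symm hw (Ne.symm hwb)).mp hab'
    have main : ∀ x y : X, x * y = y := by
      intro x y
      by_cases hxy : x = y
      · rw [hxy]; exact idem y
      by_cases hxa : x = a
      · rw [hxa]; exact astep y (by rw [← hxa]; exact Ne.symm hxy)
      by_cases hya : y = a
      · obtain ⟨e, hex, hea⟩ := third x a
        have h1 : a * e = e := astep e hea
        have h2 : x * e = e := by
          rcases sing x e with hs | hs
          · exfalso
            have h3 := (lemR e x a (Ne.symm hex) (Ne.symm hea) hxa).mp hs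
            rw [h1] at h3
            exact hea h3
          · exact hs
        have h4 : x * a = a := (lemL x a e (Ne.symm hxa) hex (Ne.symm hea)).mpr h2
        rw [hya]; exact h4
      · rcases sing x y with hs | hs
        · exfalso
          have h1 := (lemR y x a hxy (Ne.symm hya) hxa).mp hs
          have h2 : a * y = y := astep y hya
          exact hya (h2.symm.trans h1)
        · exact hs
    exact hcd (main c d)
  · push_neg at h3
    have huniv : ∀ x : X, x = a ∨ x = b := by
      intro x
      by_cases hxa : x = a
      · exact Or.inl hxa
      by_cases hxb : x = b
      · exact Or.inr hxb
      · exact absurd (h3 x a b hxa hxb) hne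
    have hba' : b * a = b := by
      rcases huniv c with rfl | rfl
      · exfalso
        rcases huniv d with rfl | rfl
        · exact hcdne rfl
        · exact hne (hcd'.symm.trans hab')
      · rcases huniv d with rfl | rfl
        · exact hcd'
        · exact absurd rfl hcdne
    refine Or.inr (Or.inr ⟨?_, idem, ?_⟩)
    · intro x y
      rcases huniv x with rfl | rfl <;> rcases huniv y with rfl | rfl <;>
        simp [hab', hba']
    · have hU2 : (univ : Set X) = {a, b} := by
        apply subset_antisymm
        · intro x _
          rcases huniv x with h | h
          · rw [h]; exact mem_insert _ _
          · rw [h]; exact mem_insert_of_mem _ rfl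
        · exact subset_univ _
      calc Cardinal.mk X = Cardinal.mk (univ : Set X) := Cardinal.mk_univ.symm
        _ = Cardinal.mk ({a, b} : Set X) := by rw [hU2]
        _ ≤ Cardinal.mk ({b} : Set X) + 1 := Cardinal.mk_insert_le
        _ = 2 := by rw [Cardinal.mk_singleton]; norm_num

end Main

lemma linked_of_filter {X : Type*} {𝒜 : Set (Set X)} (h : IsFilterUp 𝒜) : IsLinkedUp 𝒜 :=
  ⟨h.1, fun A hA B hB => h.1.1 _ (h.2 A hA B hB)⟩

/-- For a semigroup `X` TFAE: (1) `φ(X)` is linear; (2) `N₂(X)` is linear; (3) `X` is a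
semigroup of left zeros, or of right zeros, or a semilattice of order `|X| ≤ 2`. -/
theorem stmt13 (X : Type*) [Semigroup X] :
    List.TFAE [
      ∀ 𝒜 ℬ : Set (Set X), IsFilterUp 𝒜 → IsFilterUp ℬ →
        upMul 𝒜 ℬ = 𝒜 ∨ upMul 𝒜 ℬ = ℬ,
      ∀ 𝒜 ℬ : Set (Set X), IsLinkedUp 𝒜 → IsLinkedUp ℬ →
        upMul 𝒜 ℬ = 𝒜 ∨ upMul 𝒜 ℬ = ℬ,
      (∀ x y : X, x * y = x) ∨ (∀ x y : X, x * y = y) ∨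
        ((∀ x y : X, x * y = y * x) ∧ (∀ x : X, x * x = x) ∧ Cardinal.mk X ≤ 2)] := by
  tfae_have 2 → 1 := by
    intro h 𝒜 ℬ hA hB
    exact h 𝒜 ℬ (linked_of_filter hA) (linked_of_filter hB)
  tfae_have 1 → 3 := by
    intro h1
    apply cond3_of_sets
    intro S T hS hT
    have := h1 (upPrin S) (upPrin T) (isFilterUp_upPrin hS) (isFilterUp_upPrin hT)
    rw [upMul_upPrin] at this
    rcases this with h | h
    · exact Or.inl (upPrin_inj h)
    · exact Or.inr (upPrin_inj h)
  tfae_have 3 → 2 := by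
    rintro (hL | hR | ⟨hcomm, hidem, hcard⟩) 𝒜 ℬ hA hB
    · exact upMul_leftzero hL hA.1 hB.1
    · exact upMul_rightzero hR hA.1 hB.1
    by_cases hsub : ∀ x y : X, x = y
    · refine upMul_leftzero (fun x y => ?_) hA.1 hB.1
      rw [hsub y x]; exact hidem x
    push_neg at hsub
    obtain ⟨a, b, hne⟩ := hsub
    have huniv : ∀ x : X, x = a ∨ x = b := by
      intro x
      by_cases hxa : x = a
      · exact Or.inl hxa
      by_cases hxb : x = b
      · exact Or.inr hxb
      exfalso
      classical
      have hinj : Function.Injective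
          (fun i : ULift.{_} (Fin 3) =>
            if i.down = 0 then a else if i.down = 1 then b else x) := by
        rintro ⟨i⟩ ⟨j⟩ h
        fin_cases i <;> fin_cases j <;> simp_all <;>
          first
            | rfl
            | exact absurd h hne
            | exact absurd h.symm hne
            | exact absurd h.symm hxa
            | exact absurd h hxa
            | exact absurd h.symm hxb
            | exact absurd h hxb
      have h3 : (3 : Cardinal) ≤ Cardinal.mk X := by
        have := Cardinal.mk_le_of_injective hinj
        rw [Cardinal.mk_uLift, Cardinal.mk_fin] at this
        simpa using this
      have := h3.trans hcard
      norm_num at this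
    rcases huniv (a * b) with hab | hab
    · exact upMul_pair hne huniv (hidem a) (hidem b) hab ((hcomm b a).trans hab) hA hB
    · have hba : b * a = a * b := hcomm b a
      refine upMul_pair hne.symm (fun x => (huniv x).symm) (hidem b) (hidem a)
        ((hcomm b a).trans hab) hab hA hB
  tfae_finish
end
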